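/- arXiv:1904.00833 — 11 statements merged into one kernel-verified Lean document; each statement's English description precedes it below -/
import Mathlib

section
/- There is an infinite computation c_0 → c_1 → … of the broadcast network that visits configurations containing a state of F infinitely often (equivalently, with Fin(π) ≠ ∅) if and only if there is a finite computation of the form c_0 →* c →+ c with Set(c) ∩ F ≠ ∅. -/
/-- Communication operations over a message domain `D`: send `!a` or receive `?a`. -/
inductive Op (D : Type) where
  | send : D → Op D
  | recv : D → Op D
  deriving DecidableEq

/-- One transition `c →_a c'` of the broadcast network with sender `i` and receivers `R`:
the sender takes a send transition on `a`, every receiver takes a receive transition on `a`,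
and all other clients stay idle. -/
def StepAt {D Q : Type} (δ : Set (Q × Op D × Q)) (a : D) {k : ℕ}
    (c c' : Fin k → Q) (i : Fin k) (R : Set (Fin k)) : Prop :=
  i ∉ R ∧ (c i, Op.send a, c' i) ∈ δ ∧
    (∀ j ∈ R, (c j, Op.recv a, c' j) ∈ δ) ∧
    (∀ j, j ∉ R → j ≠ i → c' j = c j)

/-- A transition `c → c'` of the broadcast network (for some message, sender and receivers). -/
def Step {D Q : Type} (δ : Set (Q × Op D × Q)) {k : ℕ} (c c' : Fin k → Q) : Prop :=
  ∃ (a : D) (i : Fin k) (R : Set (Fin k)), StepAt δ a c c' i R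

/-- A step-closed sequence gives `ReflTransGen` between any two ordered indices. -/
lemma rtg_of_seq {α : Type*} {r : α → α → Prop} (cfg : ℕ → α)
    (h : ∀ j, r (cfg j) (cfg (j + 1))) :
    ∀ m n, m ≤ n → Relation.ReflTransGen r (cfg m) (cfg n) := by
  intro m n hmn
  induction n, hmn using Nat.le_induction with
  | base => exact Relation.ReflTransGen.refl
  | succ n hn ih => exact ih.tail (h n)

/-- Extract a finite indexed path from a `ReflTransGen` witness. -/
lemma path_of_rtg {α : Type*} {r : α → α → Prop} {a b : α}
    (h : Relation.ReflTransGen r a b) :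
    ∃ (m : ℕ) (f : ℕ → α), f 0 = a ∧ f m = b ∧ ∀ j < m, r (f j) (f (j + 1)) := by
  induction h with
  | refl => exact ⟨0, fun _ => a, rfl, rfl, fun j hj => absurd hj (by omega)⟩
  | @tail b c hab hbc ih =>
    obtain ⟨m, f, hf0, hfm, hstep⟩ := ih
    refine ⟨m + 1, fun j => if j ≤ m then f j else c, by simp [hf0], by simp, ?_⟩
    intro j hj
    rcases lt_or_eq_of_le (Nat.lt_succ_iff.mp hj) with hlt | heq
    · simpa [Nat.le_of_lt hlt, Nat.succ_le_of_lt hlt] using hstep j hlt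
    · subst heq
      simpa [hfm] using hbc

/-- Lemma 2: There is an infinite computation from `c₀` that visits final states infinitely
often (i.e. with `Fin(π) ≠ ∅`) iff there is a finite computation `c₀ →* c →+ c`
with `Set(c) ∩ F ≠ ∅`. -/
theorem liveness_splitting {D Q : Type} [Fintype Q] (δ : Set (Q × Op D × Q)) (F : Set Q)
    {k : ℕ} (c₀ : Fin k → Q) :
    (∃ cfg : ℕ → Fin k → Q, cfg 0 = c₀ ∧ (∀ j, Step δ (cfg j) (cfg (j + 1))) ∧
      {i : Fin k | ∀ N, ∃ j ≥ N, cfg j i ∈ F}.Nonempty)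
    ↔
    (∃ c : Fin k → Q, Relation.ReflTransGen (Step δ) c₀ c ∧
      Relation.TransGen (Step δ) c c ∧ (Set.range c ∩ F).Nonempty) := by
  constructor
  · rintro ⟨cfg, hcfg0, hstep, i, hi⟩
    -- the set of times at which component `i` is in `F` is infinite
    have hSinf : {j : ℕ | cfg j i ∈ F}.Infinite := by
      apply Set.infinite_of_forall_exists_gt
      intro a
      obtain ⟨j, hj, hjF⟩ := hi (a + 1)
      exact ⟨j, hjF, by omega⟩
    obtain ⟨j₁, hj₁, j₂, hj₂, hne, heq⟩ :=
      hSinf.exists_ne_map_eq_of_mapsTo (Set.mapsTo_univ cfg _) Set.finite_univ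
    -- WLOG j₁ < j₂
    wlog hlt : j₁ < j₂ generalizing j₁ j₂
    · exact this j₂ hj₂ j₁ hj₁ hne.symm heq.symm (by omega)
    refine ⟨cfg j₁, ?_, ?_, ⟨cfg j₁ i, ⟨i, rfl⟩, hj₁⟩⟩
    · simpa [hcfg0] using rtg_of_seq cfg hstep 0 j₁ (Nat.zero_le _)
    · have : Relation.TransGen (Step δ) (cfg j₁) (cfg j₂) :=
        Relation.TransGen.head' (hstep j₁) (rtg_of_seq cfg hstep (j₁ + 1) j₂ hlt)
      rw [heq]
      rwa [heq] at this
  · rintro ⟨c, hrt, htg, q, ⟨i, hiq⟩, hqF⟩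
    subst hiq
    obtain ⟨b, hcb, hbc⟩ := Relation.TransGen.tail'_iff.mp htg
    obtain ⟨m, f, hf0, hfm, hfstep⟩ := path_of_rtg hrt
    obtain ⟨m₂, g₀, hg0, hg0m, hg0step⟩ := path_of_rtg hcb
    set n := m₂ + 1 with hn
    set g : ℕ → Fin k → Q := fun j => if j ≤ m₂ then g₀ j else c with hg
    have hgn : g n = c := by simp [hg, hn]
    have hg00 : g 0 = c := by simp [hg, hg0]
    have hgstep : ∀ j < n, Step δ (g j) (g (j + 1)) := by
      intro j hj
      rcases lt_or_eq_of_le (Nat.lt_succ_iff.mp hj) with hlt | heq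
      · simpa [hg, Nat.le_of_lt hlt, Nat.succ_le_of_lt hlt] using hg0step j hlt
      · subst heq
        simpa [hg, hg0m] using hbc
    set cfg : ℕ → Fin k → Q := fun j => if j < m then f j else g ((j - m) % n) with hcfg
    have hcfg_c : ∀ j, m ≤ j → (j - m) % n = 0 → cfg j = c := by
      intro j hmj hmod
      simp [hcfg, Nat.not_lt.mpr hmj, hmod, hg00]
    refine ⟨cfg, ?_, ?_, ⟨i, ?_⟩⟩
    · rcases Nat.eq_zero_or_pos m with h0 | hpos
      · have := hcfg_c 0 (by omega) (by simp [h0])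
        rw [this, ← hfm, h0]
        exact hf0
      · simp [hcfg, hpos, hf0]
    · intro j
      by_cases hjm : j < m
      · have h1 : cfg j = f j := by simp [hcfg, hjm]
        have h2 : cfg (j + 1) = f (j + 1) := by
          rcases lt_or_eq_of_le (Nat.succ_le_of_lt hjm) with hlt | heq
          · simp [hcfg, hlt]
          · have : cfg (j + 1) = c := hcfg_c (j + 1) (by omega) (by simp [← heq])
            have heq' : j + 1 = m := heq
            rw [this, ← hfm, ← heq']
        rw [h1, h2]
        exact hfstep j hjm
      · push_neg at hjm
        have h1 : cfg j = g ((j - m) % n) := by simp [hcfg, Nat.not_lt.mpr hjm]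
        have h2 : cfg (j + 1) = g ((j - m + 1) % n) := by
          have : j + 1 - m = (j - m) + 1 := by omega
          simp [hcfg, Nat.not_lt.mpr (by omega : m ≤ j + 1), this]
        have hr : (j - m) % n < n := Nat.mod_lt _ (by omega)
        have key : g ((j - m + 1) % n) = g ((j - m) % n + 1) := by
          have : (j - m + 1) % n = ((j - m) % n + 1) % n := by
            conv_lhs => rw [← Nat.mod_add_mod]
          rw [this]
          rcases lt_or_eq_of_le (Nat.succ_le_of_lt hr) with hlt | heq
          · rw [Nat.mod_eq_of_lt hlt]
          · have heq' : (j - m) % n + 1 = n := heq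
            rw [heq', Nat.mod_self, hg00, ← hgn]
        rw [h1, h2, key]
        exact hgstep _ hr
    · intro N
      refine ⟨m + N * n, by nlinarith [Nat.one_le_iff_ne_zero.mpr (by omega : n ≠ 0)], ?_⟩
      have : cfg (m + N * n) = c := hcfg_c _ (by omega) (by simp [Nat.add_sub_cancel_left])
      rw [this]
      exact hqF
end

section
/- Let s_1, …, s_m be pairwise distinct states of Q. There is a cycle ({s_1}, …, {s_m}) →_G^+ ({s_1}, …, {s_m}) in the graph G if and only if there is a configuration c with Set(c) = {s_1, …, s_m} and c →+ c in the broadcast network. -/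
/-- `post_{?a}(S)`: successors of `S` under receive transitions on `a`. -/
def postRecv {D Q : Type} (δ : Set (Q × Op D × Q)) (a : D) (S : Set Q) : Set Q :=
  {r' | ∃ r ∈ S, (r, Op.recv a, r') ∈ δ}

/-- `enabled_{?a}(S)`: states of `S` where a receive of `a` is enabled. -/
def enabledRecv {D Q : Type} (δ : Set (Q × Op D × Q)) (a : D) (S : Set Q) : Set Q :=
  {r | r ∈ S ∧ (postRecv δ a {r}).Nonempty}

/-- The edge relation `V →_G V'` of the graph `G` on tuples of subsets of `Q`. -/
def GEdge {D Q : Type} (δ : Set (Q × Op D × Q)) {m : ℕ} (V V' : Fin m → Set Q) : Prop :=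
  ∃ (a : D) (j : Fin m) (s s' : Q), s ∈ V j ∧ s' ∈ V' j ∧ (s, Op.send a, s') ∈ δ ∧
    ∃ Gen Kill : Fin m → Set Q,
      (∀ i, Gen i ⊆ postRecv δ a (V i)) ∧
      (∀ i, Kill i ⊆ enabledRecv δ a (V i)) ∧
      (∀ i, i ≠ j → V' i = (V i \ Kill i) ∪ Gen i) ∧
      (∃ U : Set Q, (U = V j ∨ U = V j \ {s}) ∧ V' j = ((U \ Kill j) ∪ Gen j) ∪ {s'}) ∧
      (∀ i, ∀ q ∈ Kill i, (postRecv δ a {q} ∩ Gen i).Nonempty)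

open Relation Finset

variable {D Q : Type}

theorem Finset.exists_le_card_fiber_of_mul_card_le {α β : Type*} [DecidableEq α] [DecidableEq β]
    {B : Finset β} (hB : B.Nonempty) {A : Finset α} {n : ℕ} (h : n * #B ≤ #A) :
    ∃ f : α → β, (∀ x ∈ A, f x ∈ B) ∧ ∀ b ∈ B, n ≤ #{x ∈ A | f x = b} := by
  induction hB using Finset.Nonempty.cons_induction generalizing A with
  | singleton b =>
    refine ⟨fun _ => b, fun _ _ => mem_singleton_self b, fun b' hb' => ?_⟩
    rw [mem_singleton.1 hb']
    simpa using h
  | cons b B hb hB ih =>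
    rw [card_cons, mul_add_one] at h
    obtain ⟨A₀, hA₀A, hA₀⟩ := exists_subset_card_eq (show n ≤ #A by omega)
    obtain ⟨f, hfB, hf⟩ := ih (A := A \ A₀) (by rw [card_sdiff_of_subset hA₀A]; omega)
    refine ⟨fun x => if x ∈ A₀ then b else f x, fun x hx => ?_, fun b' hb' => ?_⟩
    · by_cases hxA₀ : x ∈ A₀
      · simp only [hxA₀, if_true]
        exact mem_cons_self b B
      · simp only [hxA₀, if_false]
        exact mem_cons_of_mem (hfB x (mem_sdiff.2 ⟨hx, hxA₀⟩))
    · rcases mem_cons.1 hb' with rfl | hb'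
      · exact hA₀.ge.trans (card_le_card fun x hx => by simp [hA₀A hx, hx])
      · refine (hf b' hb').trans (card_le_card fun x hx => ?_)
        simp only [mem_filter, mem_sdiff] at hx ⊢
        simp [hx.1.1, hx.1.2, hx.2]

def RoundMove (δ : Set (Q × Op D × Q)) (a : D) (q q' : Q) : Prop :=
  q' = q ∨ (q, Op.send a, q') ∈ δ ∨ (q, Op.recv a, q') ∈ δ

theorem reflTransGen_step_of_sends (δ : Set (Q × Op D × Q)) {k : ℕ} (a : D) (c T : Fin k → Q)
    (X : Finset (Fin k)) (hX : ∀ p ∈ X, (c p, Op.send a, T p) ∈ δ) :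
    ReflTransGen (Step δ) c (fun p => if p ∈ X then T p else c p) := by
  induction X using Finset.induction_on with
  | empty => simpa using ReflTransGen.refl
  | insert x X hx ih =>
    refine (ih fun p hp => hX p (mem_insert_of_mem hp)).tail
      ⟨a, x, ∅, Set.notMem_empty x, ?_, by simp, fun p _ hpx => by simp [hpx]⟩
    simpa [hx] using hX x (mem_insert_self x X)

theorem transGen_step_of_roundMove {δ : Set (Q × Op D × Q)} {k : ℕ} {a : D} {c T : Fin k → Q}
    {p₀ : Fin k} (hp₀ : (c p₀, Op.send a, T p₀) ∈ δ) (hT : ∀ p, RoundMove δ a (c p) (T p)) :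
    TransGen (Step δ) c T := by
  classical
  set X : Finset (Fin k) := {p | p ≠ p₀ ∧ T p ≠ c p ∧ (c p, Op.send a, T p) ∈ δ}
  have hp₀X : p₀ ∉ X := by simp [X]
  refine .tail' (reflTransGen_step_of_sends δ a c T X fun p hp => (mem_filter.1 hp).2.2.2)
    ⟨a, p₀, {p | p ≠ p₀ ∧ p ∉ X ∧ T p ≠ c p}, fun h => h.1 rfl, by simpa [hp₀X] using hp₀, ?_, ?_⟩
  · rintro p ⟨hp, hpX, hTp⟩
    simp only [if_neg hpX]
    rcases hT p with h | h | h
    · exact absurd h hTp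
    · exact absurd (by simp [X, hp, hTp, h]) hpX
    · exact h
  · intro p hpR hp
    dsimp only
    split_ifs with hpX
    · rfl
    · by_contra hTp
      exact hpR ⟨hp, hpX, hTp⟩

theorem GEdge.exists_roundMove {δ : Set (Q × Op D × Q)} {m : ℕ} {V V' : Fin m → Set Q}
    (hE : GEdge δ V V') :
    ∃ (a : D) (j : Fin m) (s s' : Q), s ∈ V j ∧ s' ∈ V' j ∧ (s, Op.send a, s') ∈ δ ∧
      (∀ i, ∀ q ∈ V i, ∃ q' ∈ V' i, RoundMove δ a q q') ∧
      (∀ i, ∀ q' ∈ V' i, ∃ q ∈ V i, RoundMove δ a q q') := by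
  obtain ⟨a, j, s, s', hs, hs', hsend, Gen, Kill, hGen, -, hV', ⟨U, hU, hV'j⟩, hKill⟩ := hE
  have hUV : U ⊆ V j := by
    rcases hU with rfl | rfl
    exacts [subset_rfl, Set.sdiff_subset]
  have hGenV' : ∀ i, Gen i ⊆ V' i := by
    intro i x hx
    by_cases hij : i = j
    · subst hij
      rw [hV'j]
      exact Or.inl (Or.inr hx)
    · rw [hV' i hij]
      exact Or.inr hx
  refine ⟨a, j, s, s', hs, hs', hsend, fun i q hq => ?_, fun i q' hq' => ?_⟩
  · by_cases hqV' : q ∈ V' i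
    · exact ⟨q, hqV', Or.inl rfl⟩
    by_cases hjs : i = j ∧ q = s
    · obtain ⟨rfl, rfl⟩ := hjs
      exact ⟨s', hs', Or.inr (Or.inl hsend)⟩
    have hqKill : q ∈ Kill i := by
      by_contra hk
      by_cases hij : i = j
      · subst hij
        have hqU : q ∈ U := by
          rcases hU with rfl | rfl
          exacts [hq, ⟨hq, fun h => hjs ⟨rfl, h⟩⟩]
        exact hqV' (hV'j ▸ Or.inl (Or.inl ⟨hqU, hk⟩))
      · exact hqV' (hV' i hij ▸ Or.inl ⟨hq, hk⟩)
    obtain ⟨q', ⟨_, rfl, hrecv⟩, hq'⟩ := hKill i q hqKill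
    exact ⟨q', hGenV' i hq', Or.inr (Or.inr hrecv)⟩
  · by_cases hq'Gen : q' ∈ Gen i
    · obtain ⟨q, hq, hrecv⟩ := hGen i hq'Gen
      exact ⟨q, hq, Or.inr (Or.inr hrecv)⟩
    by_cases hij : i = j
    · subst hij
      rw [hV'j] at hq'
      rcases hq' with (h | h) | rfl
      · exact ⟨q', hUV h.1, Or.inl rfl⟩
      · exact absurd h hq'Gen
      · exact ⟨s, hs, Or.inr (Or.inl hsend)⟩
    · rw [hV' i hij] at hq'
      rcases hq' with h | h
      · exact ⟨q', h.1, Or.inl rfl⟩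
      · exact absurd h hq'Gen

theorem GEdge.of_gen {δ : Set (Q × Op D × Q)} {m : ℕ} {V V' : Fin m → Set Q} {a : D} {j : Fin m}
    {s s' : Q} (hs : s ∈ V j) (hs' : s' ∈ V' j) (hsend : (s, Op.send a, s') ∈ δ)
    (Gen : Fin m → Set Q) (hGen : ∀ i, Gen i ⊆ postRecv δ a (V i)) (hGenV' : ∀ i, Gen i ⊆ V' i)
    (hV' : ∀ i, ∀ x ∈ V' i, x ∈ V i ∨ x ∈ Gen i ∨ (i = j ∧ x = s'))
    (hlost : ∀ i, ∀ q ∈ V i, q ∉ V' i → ¬(i = j ∧ q = s) → (postRecv δ a {q} ∩ Gen i).Nonempty) :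
    GEdge δ V V' := by
  classical
  refine ⟨a, j, s, s', hs, hs', hsend, Gen, fun i => {q ∈ V i | q ∉ V' i ∧ ¬(i = j ∧ q = s)},
    hGen, fun i q ⟨hq, hqV', hqs⟩ => ⟨hq, (hlost i q hq hqV' hqs).mono Set.inter_subset_left⟩,
    fun i hij => ?_, ?_, fun i q ⟨hq, hqV', hqs⟩ => hlost i q hq hqV' hqs⟩
  · ext x
    have := hV' i x
    have := @hGenV' i x
    simp only [Set.mem_union, Set.mem_sdiff, Set.mem_ofPred_eq]
    tauto
  · refine ⟨if s ∈ V' j then V j else V j \ {s}, by split_ifs <;> simp, ?_⟩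
    ext x
    have := hV' j x
    have := @hGenV' j x
    have : x = s' → x ∈ V' j := fun h => h ▸ hs'
    rcases eq_or_ne x s with rfl | hxs <;> split_ifs <;>
      simp only [Set.mem_union, Set.mem_sdiff, Set.mem_ofPred_eq, Set.mem_singleton_iff,
        true_and] at * <;> tauto

theorem Step.gEdge_image {δ : Set (Q × Op D × Q)} {k m : ℕ} (β : Fin k → Fin m)
    {d d' : Fin k → Q} (h : Step δ d d') :
    GEdge δ (fun i => d '' {p | β p = i}) (fun i => d' '' {p | β p = i}) := by
  obtain ⟨a, p₀, R, -, hsend, hrecv, hidle⟩ := h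
  refine GEdge.of_gen (j := β p₀) ⟨p₀, rfl, rfl⟩ ⟨p₀, rfl, rfl⟩ hsend
    (fun i => d' '' {p | p ∈ R ∧ β p = i}) ?_ ?_ ?_ ?_
  · rintro i _ ⟨p, ⟨hpR, hp⟩, rfl⟩
    exact ⟨d p, ⟨p, hp, rfl⟩, hrecv p hpR⟩
  · rintro i _ ⟨p, ⟨-, hp⟩, rfl⟩
    exact ⟨p, hp, rfl⟩
  · rintro i _ ⟨p, hp, rfl⟩
    by_cases hp₀ : p = p₀
    · subst hp₀
      exact Or.inr (Or.inr ⟨Eq.symm hp, rfl⟩)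
    by_cases hpR : p ∈ R
    · exact Or.inr (Or.inl ⟨p, ⟨hpR, hp⟩, rfl⟩)
    · exact Or.inl ⟨p, hp, (hidle p hpR hp₀).symm⟩
  · rintro i _ ⟨p, hp, rfl⟩ hlost hps
    have hpR : p ∈ R := by
      by_contra hpR
      have hp₀ : p ≠ p₀ := by
        rintro rfl
        exact hps ⟨Eq.symm hp, rfl⟩
      exact hlost ⟨p, hp, hidle p hpR hp₀⟩
    exact ⟨d' p, ⟨d p, rfl, hrecv p hpR⟩, p, ⟨hpR, hp⟩, rfl⟩

theorem transGen_gEdge_of_transGen_step {δ : Set (Q × Op D × Q)} {m : ℕ} {s : Fin m → Q}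
    (hs : Function.Injective s) {k : ℕ} {c : Fin k → Q} (hr : Set.range c = Set.range s)
    (hc : TransGen (Step δ) c c) :
    TransGen (GEdge δ) (fun i => ({s i} : Set Q)) (fun i => {s i}) := by
  choose β hβ using fun p => hr.le ⟨p, rfl⟩
  have hblocks : (fun i => c '' {p | β p = i}) = fun i => {s i} := by
    funext i
    ext x
    constructor
    · rintro ⟨p, rfl, rfl⟩
      exact (hβ p).symm
    · rintro rfl
      obtain ⟨p, hp⟩ := hr.ge ⟨i, rfl⟩
      exact ⟨p, hs (by rw [hβ, hp]), hp⟩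
  rw [← hblocks]
  exact hc.lift _ fun d d' h => h.gEdge_image β

section Simulation

open scoped Classical

/-- The configuration `c`, whose clients are sorted into blocks by `β`, represents the tuple `V`
with multiplicity `n`. -/
def Populates {m k : ℕ} (β : Fin k → Fin m) (V : Fin m → Set Q) (n : ℕ) (c : Fin k → Q) : Prop :=
  (∀ p, c p ∈ V (β p)) ∧ ∀ i, ∀ q ∈ V i, n ≤ #{p | β p = i ∧ c p = q}

theorem Populates.surjective {m k : ℕ} {β : Fin k → Fin m} {V : Fin m → Set Q} {n : ℕ}
    {c : Fin k → Q} (h : Populates β V n c) (hn : 0 < n) (hV : ∀ i, (V i).Nonempty) :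
    Function.Surjective β := fun i => by
  obtain ⟨q, hq⟩ := hV i
  obtain ⟨p, hp⟩ := card_pos.1 (hn.trans_le (h.2 i q hq))
  exact ⟨p, (mem_filter.1 hp).2.1⟩

theorem exists_populates_singleton {m : ℕ} (s : Fin m → Q) (M : ℕ) :
    ∃ (k : ℕ) (β : Fin k → Fin m), Populates β (fun i => {s i}) M (s ∘ β) := by
  refine ⟨m * M, fun p => (finProdFinEquiv.symm p).1, fun p => rfl, fun i q hq => ?_⟩
  rw [Set.mem_singleton_iff.1 hq]
  have := card_le_card_of_injOn (s := (univ : Finset (Fin M)))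
    (t := {p | (finProdFinEquiv.symm p).1 = i ∧ s (finProdFinEquiv.symm p).1 = s i})
    (fun x => finProdFinEquiv (i, x)) (fun x _ => by simp [-finProdFinEquiv_symm_apply])
    (fun x _ y _ hxy => by simpa using finProdFinEquiv.injective hxy)
  simpa using this

theorem GEdge.exists_populates [Fintype Q] {δ : Set (Q × Op D × Q)} {m k : ℕ}
    {V V' : Fin m → Set Q} (hE : GEdge δ V V') {n : ℕ} (hn : 0 < n) {β : Fin k → Fin m}
    {c : Fin k → Q} (hc : Populates β V (n * Fintype.card Q) c) :
    ∃ c', Populates β V' n c' ∧ TransGen (Step δ) c c' := by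
  obtain ⟨a, j, s, s', hs, hs', hsend, hfwd, hbwd⟩ := hE.exists_roundMove
  have hspread : ∀ i q, ∃ f : Fin k → Q, q ∈ V i →
      (∀ p ∈ ({p | β p = i ∧ c p = q} : Finset (Fin k)),
        f p ∈ ({q' | q' ∈ V' i ∧ RoundMove δ a q q'} : Finset Q)) ∧
      ∀ q' ∈ ({q' | q' ∈ V' i ∧ RoundMove δ a q q'} : Finset Q),
        n ≤ #{p ∈ ({p | β p = i ∧ c p = q} : Finset (Fin k)) | f p = q'} := by
    intro i q
    by_cases hq : q ∈ V i
    · obtain ⟨q', hq'⟩ := hfwd i q hq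
      obtain ⟨f, hf⟩ := exists_le_card_fiber_of_mul_card_le
        (B := ({q' | q' ∈ V' i ∧ RoundMove δ a q q'} : Finset Q)) ⟨q', by simpa using hq'⟩
        ((Nat.mul_le_mul_left n (card_le_univ _)).trans (hc.2 i q hq))
      exact ⟨f, fun _ => hf⟩
    · exact ⟨c, fun h => absurd h hq⟩
  choose f hf using hspread
  set T : Fin k → Q := fun p => f (β p) (c p) p
  have hT : ∀ p, T p ∈ V' (β p) ∧ RoundMove δ a (c p) (T p) := fun p => by
    simpa using (hf (β p) (c p) (hc.1 p)).1 p (by simp)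
  have hpop : Populates β V' n T := by
    refine ⟨fun p => (hT p).1, fun i q' hq' => ?_⟩
    obtain ⟨q, hq, hmove⟩ := hbwd i q' hq'
    refine ((hf i q hq).2 q' (by simp [hq', hmove])).trans (card_le_card fun p hp => ?_)
    simp only [mem_filter, mem_univ, true_and] at hp ⊢
    obtain ⟨⟨rfl, rfl⟩, rfl⟩ := hp
    exact ⟨rfl, rfl⟩
  obtain ⟨p₀, hp₀⟩ := card_pos.1 (hn.trans_le ((hf j s hs).2 s'
    (mem_filter.2 ⟨mem_univ _, hs', Or.inr (Or.inl hsend)⟩)))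
  simp only [mem_filter, mem_univ, true_and] at hp₀
  obtain ⟨⟨rfl, hcp₀⟩, hTp₀⟩ := hp₀
  refine ⟨T, hpop, transGen_step_of_roundMove (p₀ := p₀) ?_ fun p => (hT p).2⟩
  rw [hcp₀, show T p₀ = s' by simp only [T, hcp₀, hTp₀]]
  exact hsend

theorem exists_populates_of_transGen_gEdge [Fintype Q] {δ : Set (Q × Op D × Q)} {m : ℕ}
    {V W : Fin m → Set Q} (h : TransGen (GEdge δ) V W) {n : ℕ} (hn : 0 < n) :
    ∃ M, ∀ {k : ℕ} (β : Fin k → Fin m) (c : Fin k → Q), Populates β V M c →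
      ∃ c', Populates β W n c' ∧ TransGen (Step δ) c c' := by
  induction h generalizing n with
  | single hE => exact ⟨n * Fintype.card Q, fun β c hc => hE.exists_populates hn hc⟩
  | tail _ hE ih =>
    have : Nonempty Q := by
      obtain ⟨_, _, s, -⟩ := hE
      exact ⟨s⟩
    obtain ⟨M, hM⟩ := ih (mul_pos hn (Fintype.card_pos (α := Q)))
    refine ⟨M, fun β c hc => ?_⟩
    obtain ⟨c₁, hc₁, h₁⟩ := hM β c hc
    obtain ⟨c₂, hc₂, h₂⟩ := hE.exists_populates hn hc₁
    exact ⟨c₂, hc₂, h₁.trans h₂⟩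

end Simulation

/-- Lemma 3: For pairwise distinct states `s 0, …, s (m-1)`, there is a cycle
`({s 0}, …, {s (m-1)}) →_G⁺ ({s 0}, …, {s (m-1)})` in the graph `G` iff there is a
configuration `c` with `Set(c) = {s 0, …, s (m-1)}` and `c →⁺ c` in the broadcast network. -/
theorem graph_cycle_iff_config_cycle {D Q : Type} [Fintype Q] (δ : Set (Q × Op D × Q))
    {m : ℕ} (s : Fin m → Q) (hs : Function.Injective s) :
    Relation.TransGen (GEdge δ) (fun i => ({s i} : Set Q)) (fun i => {s i}) ↔
    ∃ (k : ℕ) (c : Fin k → Q), Set.range c = Set.range s ∧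
      Relation.TransGen (Step δ) c c := by
  refine ⟨fun h => ?_, fun ⟨k, c, hr, hc⟩ => transGen_gEdge_of_transGen_step hs hr hc⟩
  obtain ⟨M, hM⟩ := exists_populates_of_transGen_gEdge h one_pos
  obtain ⟨k, β, hβ⟩ := exists_populates_singleton s M
  obtain ⟨c, hc, hcycle⟩ := hM β _ hβ
  have hcβ : c = s ∘ β := funext hc.1
  subst hcβ
  exact ⟨k, s ∘ β, (hc.surjective one_pos fun i => ⟨s i, rfl⟩).range_comp s, hcycle⟩
end

section
/- Let c be a configuration of the broadcast network with Set(c) = {s_1, …, s_m} (the s_i pairwise distinct). If c →+ c, then there is a cycle ({s_1}, …, {s_m}) →_G^+ ({s_1}, …, {s_m}) in the graph G; in fact, a computation c → c_1 → … → c_ℓ → c induces the path whose j-th vertex is (Target_c(s_1, c_j), …, Target_c(s_m, c_j)), where Target_c(s, d) = {d[i] : c[i] = s}. -/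
/-! Group the clients by a class map `σ`. A step with sender `i` and receivers `R` changes the
image `d '' C` of a class only through its receivers and its sender: the receivers' new states
form `Gen`, a state is killed when a receiver of `C` left it and no client of `C` holds it
afterwards, and the sender adds its target state, keeping its source state exactly when some
client of its class still holds it. For the class map of `c` (clients grouped by their state in
`c`) the class images of `c` are the singletons `{s i}`, so `c →⁺ c` becomes a cycle of `G`. -/

open Set

theorem Set.image_eq_diff_union_of_eqOn {ι Q : Type} {d d' : ι → Q} {C A : Set ι}
    (h : EqOn d d' (C \ A)) :
    d' '' C = (d '' C \ (d '' (C ∩ A) \ d' '' C)) ∪ d' '' (C ∩ A) := by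
  ext q
  constructor
  · rintro ⟨t, htC, rfl⟩
    by_cases htA : t ∈ A
    · exact Or.inr ⟨t, ⟨htC, htA⟩, rfl⟩
    · rw [← h ⟨htC, htA⟩]
      exact Or.inl ⟨⟨t, htC, rfl⟩, fun hK => hK.2 ⟨t, htC, (h ⟨htC, htA⟩).symm⟩⟩
  · rintro (⟨⟨t, htC, rfl⟩, hK⟩ | ⟨t, ⟨htC, -⟩, rfl⟩)
    · by_contra hq
      have htA : t ∈ A := by_contra fun htA => hq ⟨t, htC, (h ⟨htC, htA⟩).symm⟩
      exact hK ⟨⟨t, ⟨htC, htA⟩, rfl⟩, hq⟩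
    · exact ⟨t, htC, rfl⟩

theorem Set.diff_diff_union_singleton_eq {Q : Type} (A B W : Set Q) (x : Q) :
    A \ ((B ∪ {x}) \ W) = (A \ ({x} \ W)) \ (B \ W) := by
  rw [union_sdiff_distrib, union_comm, sdiff_sdiff]

theorem Set.diff_singleton_diff_eq_or {Q : Type} (A W : Set Q) (x : Q) :
    A \ ({x} \ W) = A ∨ A \ ({x} \ W) = A \ {x} := by
  by_cases hx : x ∈ W
  · exact Or.inl (by rw [sdiff_eq_empty.mpr (singleton_subset_iff.mpr hx), sdiff_empty])
  · exact Or.inr (by rw [(disjoint_singleton_left.mpr hx).sdiff_eq_left])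

/-- For the class map `σ` of `c`, `d '' {t | σ t = i}` is the paper's `Target_c(s_i, d)`. -/
theorem Step.gEdge_image_fiber {D Q : Type} {δ : Set (Q × Op D × Q)} {m k : ℕ}
    (σ : Fin k → Fin m) {d d' : Fin k → Q} (hstep : Step δ d d') :
    GEdge δ (fun j => d '' {t | σ t = j}) (fun j => d' '' {t | σ t = j}) := by
  obtain ⟨a, i, R, -, hsend, hrecv, hidle⟩ := hstep
  refine ⟨a, σ i, d i, d' i, ⟨i, rfl, rfl⟩, ⟨i, rfl, rfl⟩, hsend,
    fun j => d' '' ({t | σ t = j} ∩ R),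
    fun j => d '' ({t | σ t = j} ∩ R) \ d' '' {t | σ t = j}, ?gen, ?kill, ?idle, ?sender, ?killed⟩
  case gen =>
    rintro j _ ⟨t, ⟨htj, htR⟩, rfl⟩
    exact ⟨d t, ⟨t, htj, rfl⟩, hrecv t htR⟩
  case kill =>
    rintro j _ ⟨⟨t, ⟨htj, htR⟩, rfl⟩, -⟩
    exact ⟨⟨t, htj, rfl⟩, d' t, d t, rfl, hrecv t htR⟩
  case killed =>
    rintro j _ ⟨⟨t, ⟨htj, htR⟩, rfl⟩, -⟩
    exact ⟨d' t, ⟨d t, rfl, hrecv t htR⟩, t, ⟨htj, htR⟩, rfl⟩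
  case idle =>
    intro j hj
    refine image_eq_diff_union_of_eqOn fun t ⟨htj, htR⟩ => (hidle t htR ?_).symm
    rintro rfl
    exact hj htj.symm
  case sender =>
    have hC : {t | σ t = σ i} ∩ insert i R = insert i ({t | σ t = σ i} ∩ R) :=
      inter_insert_of_mem (show i ∈ {t | σ t = σ i} from rfl)
    have hfix := image_eq_diff_union_of_eqOn (d := d) (d' := d')
      (C := {t | σ t = σ i}) (A := insert i R)
      fun t ⟨_, ht⟩ => (hidle t (fun h => ht (mem_insert_of_mem i h))
        fun h => ht (h ▸ mem_insert i R)).symm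
    rw [hC, image_insert_eq, image_insert_eq, insert_eq, insert_eq, union_comm {d i},
      diff_diff_union_singleton_eq, union_comm {d' i}, ← union_assoc] at hfix
    exact ⟨_, diff_singleton_diff_eq_or _ _ _, hfix⟩

theorem config_cycle_to_graph_cycle_general {D Q : Type} (δ : Set (Q × Op D × Q))
    {m k : ℕ} (s : Fin m → Q) (hs : Function.Injective s)
    (c : Fin k → Q) (hrange : Set.range c = Set.range s)
    (hcyc : Relation.TransGen (Step δ) c c) :
    Relation.TransGen (GEdge δ) (fun i => ({s i} : Set Q)) (fun i => {s i}) ∧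
    ∀ (ℓ : ℕ) (cs : ℕ → Fin k → Q), cs 0 = c → cs (ℓ + 1) = c →
      (∀ j ≤ ℓ, Step δ (cs j) (cs (j + 1))) →
      ∀ j ≤ ℓ,
        GEdge δ (fun i => {q | ∃ t, c t = s i ∧ cs j t = q})
                (fun i => {q | ∃ t, c t = s i ∧ cs (j + 1) t = q}) := by
  choose σ hσ using fun t => hrange.subset (mem_range_self t)
  have htarget (d : Fin k → Q) :
      (fun i => {q | ∃ t, c t = s i ∧ d t = q}) = fun i => d '' {t | σ t = i} := by
    ext i q
    simp only [mem_ofPred_eq, mem_image, ← hσ, hs.eq_iff]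
  have hedge (d d' : Fin k → Q) (h : Step δ d d') :
      GEdge δ (fun i => {q | ∃ t, c t = s i ∧ d t = q})
        (fun i => {q | ∃ t, c t = s i ∧ d' t = q}) := by
    rw [htarget, htarget]
    exact h.gEdge_image_fiber σ
  have hsingleton : (fun i => {q | ∃ t, c t = s i ∧ c t = q}) = fun i => ({s i} : Set Q) := by
    ext i q
    obtain ⟨t, ht⟩ := hrange.symm.subset (mem_range_self i)
    exact ⟨fun ⟨_, hts, htq⟩ => hts ▸ htq.symm, fun hq => ⟨t, ht, ht.trans hq.symm⟩⟩
  exact ⟨hsingleton ▸ hcyc.lift _ hedge, fun ℓ cs _ _ hsteps j hj => hedge _ _ (hsteps j hj)⟩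

/-- If `c` is a configuration with `Set(c) = {s 0, …, s (m-1)}` (the `s i` pairwise distinct)
and `c →⁺ c`, then there is a cycle `({s 0}, …, {s (m-1)}) →_G⁺ ({s 0}, …, {s (m-1)})` in `G`;
in fact, any computation `c → c_1 → … → c_ℓ → c` induces the path whose `j`-th vertex is
`(Target_c(s 0, c_j), …, Target_c(s (m-1), c_j))`, where `Target_c(s, d) = {d[t] : c[t] = s}`. -/
theorem config_cycle_to_graph_cycle {D Q : Type} [Fintype Q] (δ : Set (Q × Op D × Q))
    {m k : ℕ} (s : Fin m → Q) (hs : Function.Injective s)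
    (c : Fin k → Q) (hrange : Set.range c = Set.range s)
    (hcyc : Relation.TransGen (Step δ) c c) :
    Relation.TransGen (GEdge δ) (fun i => ({s i} : Set Q)) (fun i => {s i}) ∧
    ∀ (ℓ : ℕ) (cs : ℕ → Fin k → Q), cs 0 = c → cs (ℓ + 1) = c →
      (∀ j ≤ ℓ, Step δ (cs j) (cs (j + 1))) →
      ∀ j ≤ ℓ,
        GEdge δ (fun i => {q | ∃ t, c t = s i ∧ cs j t = q})
                (fun i => {q | ∃ t, c t = s i ∧ cs (j + 1) t = q}) :=
  config_cycle_to_graph_cycle_general δ s hs c hrange hcyc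
end

section
/- Let s_1, …, s_m be pairwise distinct states of Q and suppose there is a cycle ({s_1}, …, {s_m}) →_G^+ ({s_1}, …, {s_m}) in the graph G consisting of ℓ edges. Then there is a configuration c ∈ Q^n with n = m · |Q|^ℓ clients, in which for each i ∈ [1..m] all |Q|^ℓ positions of the i-th block carry state s_i (so Set(c) = {s_1, …, s_m}), such that c →+ c in the broadcast network. -/
section Aux

attribute [local instance] Classical.propDecidable

variable {D Q : Type}

/-- Perform a batch of broadcast steps: every position in the nonempty finset `T` makes the
send (one position per step), the receivers `R` all fire in the first step, everyone else
stays idle. -/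
private lemma steps_of {k : ℕ} (δ : Set (Q × Op D × Q)) (a : D) :
    ∀ (N : ℕ) (T : Finset (Fin k)) (C C' : Fin k → Q) (R : Set (Fin k)),
      T.card = N → T.Nonempty → (∀ p ∈ T, p ∉ R) →
      (∀ p ∈ T, (C p, Op.send a, C' p) ∈ δ) →
      (∀ p ∈ R, (C p, Op.recv a, C' p) ∈ δ) →
      (∀ p, p ∉ R → p ∉ T → C' p = C p) →
      Relation.TransGen (Step δ) C C' := by
  intro N
  induction N with
  | zero =>
    intro T C C' R hc hne _ _ _ _
    rcases hne with ⟨t, ht⟩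
    rw [Finset.card_eq_zero] at hc
    simp [hc] at ht
  | succ N ih =>
    intro T C C' R hc hne hTR hsnd hrcv hidle
    rcases hne with ⟨t, ht⟩
    set C₁ : Fin k → Q := fun p => if p = t ∨ p ∈ R then C' p else C p with hC₁
    have hstep : Step δ C C₁ := by
      refine ⟨a, t, R, hTR t ht, ?_, ?_, ?_⟩
      · simpa [hC₁] using hsnd t ht
      · intro p hp
        have h : C₁ p = C' p := by simp [hC₁, hp]
        rw [h]; exact hrcv p hp
      · intro p hpR hpt
        simp [hC₁, hpt, hpR]
    by_cases hN : N = 0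
    · subst hN
      have hT : T = {t} := by
        rw [Finset.card_eq_one] at hc
        rcases hc with ⟨x, hx⟩
        rw [hx] at ht ⊢
        simp at ht; rw [ht]
      have hCC : C₁ = C' := by
        funext p
        by_cases hp : p = t ∨ p ∈ R
        · simp [hC₁, hp]
        · push_neg at hp
          have hpT : p ∉ T := by rw [hT]; simp [hp.1]
          rw [hidle p hp.2 hpT]
          simp [hC₁, hp.1, hp.2]
      exact Relation.TransGen.single (hCC ▸ hstep)
    · refine Relation.TransGen.head hstep
        (ih (T.erase t) C₁ C' ∅ ?_ ?_ ?_ ?_ ?_ ?_)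
      · rw [Finset.card_erase_of_mem ht, hc]
        omega
      · rw [← Finset.card_pos, Finset.card_erase_of_mem ht, hc]; omega
      · intro p _; simp
      · intro p hp
        have hpT := Finset.mem_of_mem_erase hp
        have hpt : p ≠ t := Finset.ne_of_mem_erase hp
        have h : C₁ p = C p := by simp [hC₁, hpt, hTR p hpT]
        rw [h]; exact hsnd p hpT
      · intro p hp; simp at hp
      · intro p _ hp
        by_cases h1 : p = t
        · simp [hC₁, h1]
        · by_cases h2 : p ∈ R
          · simp [hC₁, h2]
          · have hpT : p ∉ T := fun hmem => hp (Finset.mem_erase.mpr ⟨h1, hmem⟩)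
            rw [hidle p h2 hpT]
            simp [hC₁, h1, h2]

variable [Fintype Q]

/-- The source in `V i` from which a target state `t ∈ V' i` will be populated. -/
private noncomputable def srcF (δ : Set (Q × Op D × Q)) (a : D) {m : ℕ}
    (V : Fin m → Set Q) (b : Fin m) (ss ss' : Q) (i : Fin m) (t : Q) : Q :=
  if i = b ∧ t = ss' then ss
  else if t ∈ V i then t
  else if h : ∃ r, r ∈ V i ∧ (r, Op.recv a, t) ∈ δ then h.choose else ss

/-- A receive-successor in `Gen i` of a killed state `q`. -/
private noncomputable def outletF (δ : Set (Q × Op D × Q)) (a : D) {m : ℕ}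
    (Gen : Fin m → Set Q) (i : Fin m) (q : Q) : Q :=
  if h : ∃ x, (q, Op.recv a, x) ∈ δ ∧ x ∈ Gen i then h.choose else q

/-- Default move of a position at state `q` in block `i`. -/
private noncomputable def dfltF (δ : Set (Q × Op D × Q)) (a : D) {m : ℕ}
    (V' Gen : Fin m → Set Q) (b : Fin m) (ss ss' : Q) (i : Fin m) (q : Q) : Q :=
  if q ∈ V' i then q else if i = b ∧ q = ss then ss' else outletF δ a Gen i q

/-- Move of a position at state `q` in block `i` with word letter `d`. -/
private noncomputable def moveF (δ : Set (Q × Op D × Q)) (a : D) {m : ℕ}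
    (V V' Gen : Fin m → Set Q) (b : Fin m) (ss ss' : Q) (i : Fin m) (q : Q)
    (d : Fin (Fintype.card Q)) : Q :=
  if (Fintype.equivFin Q).symm d ∈ V' i ∧
      srcF δ a V b ss ss' i ((Fintype.equivFin Q).symm d) = q
  then (Fintype.equivFin Q).symm d
  else dfltF δ a V' Gen b ss ss' i q

variable {δ : Set (Q × Op D × Q)} {a : D} {m : ℕ}
  {V V' Gen Kill : Fin m → Set Q} {b : Fin m} {ss ss' : Q} {U : Set Q}

private lemma genSub
    (hkeep : ∀ i, i ≠ b → V' i = (V i \ Kill i) ∪ Gen i)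
    (hU : V' b = ((U \ Kill b) ∪ Gen b) ∪ {ss'}) (i : Fin m) :
    Gen i ⊆ V' i := by
  intro x hx
  by_cases hib : i = b
  · subst hib; rw [hU]; exact Or.inl (Or.inr hx)
  · rw [hkeep i hib]; exact Or.inr hx

private lemma mem_gen
    (hkeep : ∀ i, i ≠ b → V' i = (V i \ Kill i) ∪ Gen i)
    (hUopt : U = V b ∨ U = V b \ {ss})
    (hU : V' b = ((U \ Kill b) ∪ Gen b) ∪ {ss'})
    {i : Fin m} {t : Q} (h1 : t ∈ V' i) (h2 : t ∉ V i)
    (h3 : ¬(i = b ∧ t = ss')) : t ∈ Gen i := by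
  by_cases hib : i = b
  · subst hib
    have ht' : t ≠ ss' := fun h => h3 ⟨rfl, h⟩
    rw [hU] at h1
    rcases h1 with (h1 | h1) | h1
    · exfalso; apply h2
      rcases hUopt with hu | hu
      · rw [← hu]; exact h1.1
      · have := h1.1; rw [hu] at this; exact this.1
    · exact h1
    · exact absurd h1 ht'
  · rw [hkeep i hib] at h1
    rcases h1 with h1 | h1
    · exact absurd h1.1 h2
    · exact h1

private lemma mem_kill
    (hkeep : ∀ i, i ≠ b → V' i = (V i \ Kill i) ∪ Gen i)
    (hUopt : U = V b ∨ U = V b \ {ss})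
    (hU : V' b = ((U \ Kill b) ∪ Gen b) ∪ {ss'})
    {i : Fin m} {q : Q} (h1 : q ∈ V i) (h2 : q ∉ V' i)
    (h3 : ¬(i = b ∧ q = ss)) : q ∈ Kill i := by
  by_cases hib : i = b
  · subst hib
    have hq' : q ≠ ss := fun h => h3 ⟨rfl, h⟩
    have hqU : q ∈ U := by
      rcases hUopt with hu | hu
      · rw [hu]; exact h1
      · rw [hu]; exact ⟨h1, hq'⟩
    by_contra hk
    exact h2 (hU ▸ Or.inl (Or.inl ⟨hqU, hk⟩))
  · by_contra hk
    exact h2 ((hkeep i hib) ▸ Or.inl ⟨h1, hk⟩)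

private lemma outlet_spec
    (h3 : ∀ i, ∀ q ∈ Kill i, (postRecv δ a {q} ∩ Gen i).Nonempty)
    {i : Fin m} {q : Q} (hk : q ∈ Kill i) :
    (q, Op.recv a, outletF δ a Gen i q) ∈ δ ∧ outletF δ a Gen i q ∈ Gen i := by
  have hex : ∃ x, (q, Op.recv a, x) ∈ δ ∧ x ∈ Gen i := by
    rcases h3 i q hk with ⟨x, hx1, hx2⟩
    rcases hx1 with ⟨r, hr, hrd⟩
    rcases hr with rfl
    exact ⟨x, hrd, hx2⟩
  unfold outletF
  rw [dif_pos hex]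
  exact hex.choose_spec

private lemma src_mem
    (hGen : ∀ i, Gen i ⊆ postRecv δ a (V i))
    (hkeep : ∀ i, i ≠ b → V' i = (V i \ Kill i) ∪ Gen i)
    (hUopt : U = V b ∨ U = V b \ {ss})
    (hU : V' b = ((U \ Kill b) ∪ Gen b) ∪ {ss'})
    (hss : ss ∈ V b)
    {i : Fin m} {t : Q} (h : t ∈ V' i) :
    srcF δ a V b ss ss' i t ∈ V i := by
  unfold srcF
  split_ifs with h1 h2 hex
  · rw [h1.1]; exact hss
  · exact h2
  · exact hex.choose_spec.1
  · exfalso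
    have hg : t ∈ Gen i := mem_gen hkeep hUopt hU h h2 h1
    exact hex (hGen i hg)

private lemma src_move {i : Fin m} {t : Q} (h : t ∈ V' i) :
    moveF δ a V V' Gen b ss ss' i (srcF δ a V b ss ss' i t) ((Fintype.equivFin Q) t) = t := by
  unfold moveF
  rw [Equiv.symm_apply_apply]
  exact if_pos ⟨h, rfl⟩

private lemma move_mem
    (hkeep : ∀ i, i ≠ b → V' i = (V i \ Kill i) ∪ Gen i)
    (hUopt : U = V b ∨ U = V b \ {ss})
    (hU : V' b = ((U \ Kill b) ∪ Gen b) ∪ {ss'})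
    (h3 : ∀ i, ∀ q ∈ Kill i, (postRecv δ a {q} ∩ Gen i).Nonempty)
    (hss' : ss' ∈ V' b)
    {i : Fin m} {q : Q} (hq : q ∈ V i) (d : Fin (Fintype.card Q)) :
    moveF δ a V V' Gen b ss ss' i q d ∈ V' i := by
  unfold moveF
  split_ifs with h1
  · exact h1.1
  · unfold dfltF
    split_ifs with h2 hbs
    · exact h2
    · rw [hbs.1]; exact hss'
    · have hk : q ∈ Kill i := mem_kill hkeep hUopt hU hq h2 hbs
      exact genSub hkeep hU i (outlet_spec h3 hk).2

private lemma move_master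
    (hGen : ∀ i, Gen i ⊆ postRecv δ a (V i))
    (hkeep : ∀ i, i ≠ b → V' i = (V i \ Kill i) ∪ Gen i)
    (hUopt : U = V b ∨ U = V b \ {ss})
    (hU : V' b = ((U \ Kill b) ∪ Gen b) ∪ {ss'})
    (h3 : ∀ i, ∀ q ∈ Kill i, (postRecv δ a {q} ∩ Gen i).Nonempty)
    {i : Fin m} {q : Q} (hq : q ∈ V i) (d : Fin (Fintype.card Q)) :
    moveF δ a V V' Gen b ss ss' i q d = q ∨
    (q, Op.recv a, moveF δ a V V' Gen b ss ss' i q d) ∈ δ ∨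
    (i = b ∧ q = ss ∧ moveF δ a V V' Gen b ss ss' i q d = ss') := by
  unfold moveF
  split_ifs with h1
  · rcases h1 with ⟨htV', hsrc⟩
    unfold srcF at hsrc
    split_ifs at hsrc with g1 g2 g3
    · exact Or.inr (Or.inr ⟨g1.1, hsrc.symm, g1.2⟩)
    · exact Or.inl hsrc
    · refine Or.inr (Or.inl ?_)
      have := g3.choose_spec.2
      rw [hsrc] at this
      exact this
    · exfalso
      exact g3 (hGen i (mem_gen hkeep hUopt hU htV' g2 g1))
  · unfold dfltF
    split_ifs with h2 hbs
    · exact Or.inl rfl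
    · exact Or.inr (Or.inr ⟨hbs.1, hbs.2, rfl⟩)
    · have hk : q ∈ Kill i := mem_kill hkeep hUopt hU hq h2 hbs
      exact Or.inr (Or.inl (outlet_spec h3 hk).1)

/-- Decoding positions into (block index, word). -/
private def decW (m ℓ : ℕ) (Q : Type) [Fintype Q] :
    Fin (m * Fintype.card Q ^ ℓ) ≃ Fin m × (Fin ℓ → Fin (Fintype.card Q)) :=
  finProdFinEquiv.symm.trans
    (Equiv.prodCongr (Equiv.refl (Fin m)) finFunctionFinEquiv.symm)

/-- Configuration induced by a block/word state table. -/
private def cfgF {m ℓ : ℕ} (F : Fin m → (Fin ℓ → Fin (Fintype.card Q)) → Q) :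
    Fin (m * Fintype.card Q ^ ℓ) → Q :=
  fun t => F ((decW m ℓ Q) t).1 ((decW m ℓ Q) t).2

/-- One phase: simulate one edge of `G` by a batch of broadcast steps. -/
private lemma phase {m ℓ : ℕ} (δ : Set (Q × Op D × Q)) {j : ℕ} (hj : j < ℓ)
    {V V' : Fin m → Set Q} (hedge : GEdge δ V V')
    (F : Fin m → (Fin ℓ → Fin (Fintype.card Q)) → Q)
    (hdep : ∀ i w w', (∀ r : Fin ℓ, (r : ℕ) < j → w r = w' r) → F i w = F i w')
    (hmem : ∀ i w, F i w ∈ V i)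
    (hsur : ∀ i, ∀ q ∈ V i, ∃ w, F i w = q) :
    ∃ F' : Fin m → (Fin ℓ → Fin (Fintype.card Q)) → Q,
      (∀ i w w', (∀ r : Fin ℓ, (r : ℕ) < j + 1 → w r = w' r) → F' i w = F' i w') ∧
      (∀ i w, F' i w ∈ V' i) ∧ (∀ i, ∀ q ∈ V' i, ∃ w, F' i w = q) ∧
      Relation.TransGen (Step δ) (cfgF F) (cfgF F') := by
  obtain ⟨a, b, ss, ss', hss, hss', hsnd, Gen, Kill, hGen, hKill, hkeep,
    ⟨U, hUopt, hU⟩, h3⟩ := hedge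
  have jF : Fin ℓ := ⟨j, hj⟩
  set F' : Fin m → (Fin ℓ → Fin (Fintype.card Q)) → Q :=
    fun i w => moveF δ a V V' Gen b ss ss' i (F i w) (w ⟨j, hj⟩) with hF'
  refine ⟨F', ?_, ?_, ?_, ?_⟩
  · intro i w w' hagree
    rw [hF']
    simp only
    rw [hdep i w w' (fun r hr => hagree r (by omega)),
      hagree ⟨j, hj⟩ (by simp)]
  · intro i w
    exact move_mem hkeep hUopt hU h3 hss' (hmem i w) _
  · intro i t ht
    obtain ⟨w0, hw0⟩ :=
      hsur i (srcF δ a V b ss ss' i t) (src_mem hGen hkeep hUopt hU hss ht)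
    refine ⟨Function.update w0 ⟨j, hj⟩ ((Fintype.equivFin Q) t), ?_⟩
    have h1 : F i (Function.update w0 ⟨j, hj⟩ ((Fintype.equivFin Q) t))
        = srcF δ a V b ss ss' i t := by
      rw [← hw0]
      refine hdep i _ _ (fun r hr => ?_)
      exact Function.update_of_ne (fun h => by rw [h] at hr; simp at hr) _ _
    rw [hF']
    simp only
    rw [h1, Function.update_self]
    exact src_move ht
  · -- the broadcast steps
    obtain ⟨w0, hw0⟩ := hsur b ss hss
    set wstar : Fin ℓ → Fin (Fintype.card Q) :=
      Function.update w0 ⟨j, hj⟩ ((Fintype.equivFin Q) ss') with hwstar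
    set pstar : Fin (m * Fintype.card Q ^ ℓ) := (decW m ℓ Q).symm (b, wstar) with hpstar
    have hdecp : (decW m ℓ Q) pstar = (b, wstar) := by
      rw [hpstar]; exact Equiv.apply_symm_apply _ _
    have hFw : F b wstar = ss := by
      rw [← hw0]
      refine hdep b _ _ (fun r hr => ?_)
      rw [hwstar]
      exact Function.update_of_ne (fun h => by rw [h] at hr; simp at hr) _ _
    have hCp : cfgF F pstar = ss := by
      show F ((decW m ℓ Q) pstar).1 ((decW m ℓ Q) pstar).2 = ss
      rw [hdecp]; exact hFw
    have hC'p : cfgF F' pstar = ss' := by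
      show F' ((decW m ℓ Q) pstar).1 ((decW m ℓ Q) pstar).2 = ss'
      rw [hdecp, hF']
      simp only
      rw [hFw, hwstar, Function.update_self]
      unfold moveF
      rw [Equiv.symm_apply_apply]
      rw [if_pos ⟨hss', by unfold srcF; rw [if_pos ⟨rfl, rfl⟩]⟩]
    set C : Fin (m * Fintype.card Q ^ ℓ) → Q := cfgF F with hC
    set C' : Fin (m * Fintype.card Q ^ ℓ) → Q := cfgF F' with hC'def
    have hC'eq : ∀ p, C' p = moveF δ a V V' Gen b ss ss' ((decW m ℓ Q) p).1 (C p)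
        (((decW m ℓ Q) p).2 ⟨j, hj⟩) := fun p => rfl
    set sendish : Fin (m * Fintype.card Q ^ ℓ) → Prop :=
      fun p => p = pstar ∨
        (C' p ≠ C p ∧ ((decW m ℓ Q) p).1 = b ∧ C p = ss ∧ C' p = ss') with hsendish
    set T : Finset (Fin (m * Fintype.card Q ^ ℓ)) := Finset.univ.filter sendish with hT
    set R : Set (Fin (m * Fintype.card Q ^ ℓ)) := {p | C' p ≠ C p ∧ ¬ sendish p} with hR
    refine steps_of δ a T.card T C C' R rfl ?_ ?_ ?_ ?_ ?_
    · refine ⟨pstar, ?_⟩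
      rw [hT]
      exact Finset.mem_filter.mpr ⟨Finset.mem_univ _, Or.inl rfl⟩
    · intro p hp
      rw [hT] at hp
      have hsp := (Finset.mem_filter.mp hp).2
      intro hmemR
      rw [hR] at hmemR
      exact hmemR.2 hsp
    · intro p hp
      rw [hT] at hp
      have hsp := (Finset.mem_filter.mp hp).2
      rcases hsp with h | h
      · rw [h, hCp, hC'p]; exact hsnd
      · rw [h.2.2.1, h.2.2.2]; exact hsnd
    · intro p hp
      rw [hR] at hp
      rcases hp with ⟨hne, hns⟩
      have hqV : C p ∈ V ((decW m ℓ Q) p).1 := hmem _ _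
      rcases move_master hGen hkeep hUopt hU h3 hqV (((decW m ℓ Q) p).2 ⟨j, hj⟩)
        with h | h | h
      · exact absurd ((hC'eq p).trans h) hne
      · rw [hC'eq p]; exact h
      · exact absurd (Or.inr ⟨hne, h.1, h.2.1, (hC'eq p).trans h.2.2⟩) hns
    · intro p hpR hpT
      by_contra hne'
      apply hpR
      rw [hR]
      refine ⟨hne', fun hsp => hpT ?_⟩
      rw [hT]
      exact Finset.mem_filter.mpr ⟨Finset.mem_univ _, hsp⟩

end Aux

/-- If there is a cycle `({s 0}, …, {s (m-1)}) →_G⁺ ({s 0}, …, {s (m-1)})` in `G` consisting of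
`ℓ` edges (the `s i` pairwise distinct), then there is a configuration `c` with
`n = m · |Q|^ℓ` clients in which the `i`-th block of `|Q|^ℓ` positions carries state `s i`
(so `Set(c) = {s 0, …, s (m-1)}`), such that `c →⁺ c` in the broadcast network. -/
theorem graph_cycle_to_config_cycle {D Q : Type} [Fintype Q] (δ : Set (Q × Op D × Q))
    {m : ℕ} (s : Fin m → Q) (hs : Function.Injective s)
    (ℓ : ℕ) (hℓ : 1 ≤ ℓ) (Vs : ℕ → Fin m → Set Q)
    (h0 : Vs 0 = fun i => ({s i} : Set Q)) (hend : Vs ℓ = fun i => ({s i} : Set Q))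
    (hedge : ∀ j < ℓ, GEdge δ (Vs j) (Vs (j + 1))) :
    ∃ c : Fin (m * Fintype.card Q ^ ℓ) → Q,
      (∀ (t : Fin (m * Fintype.card Q ^ ℓ)) (i : Fin m),
        (i : ℕ) * Fintype.card Q ^ ℓ ≤ (t : ℕ) →
        (t : ℕ) < ((i : ℕ) + 1) * Fintype.card Q ^ ℓ → c t = s i) ∧
      Set.range c = Set.range s ∧
      Relation.TransGen (Step δ) c c := by
  by_cases hm0 : m = 0
  · subst hm0
    obtain ⟨a, jj, -⟩ := hedge 0 hℓ
    exact jj.elim0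
  have hmpos : 0 < m := Nat.pos_of_ne_zero hm0
  have hQ : 0 < Fintype.card Q := Fintype.card_pos_iff.mpr ⟨s ⟨0, hmpos⟩⟩
  set F0 : Fin m → (Fin ℓ → Fin (Fintype.card Q)) → Q := fun i _ => s i with hF0
  have hdep0 : ∀ (i : Fin m) w w',
      (∀ r : Fin ℓ, (r : ℕ) < 0 → w r = w' r) → F0 i w = F0 i w' := by
    intro i w w' _; rfl
  have hmem0 : ∀ (i : Fin m) w, F0 i w ∈ Vs 0 i := by
    intro i w; rw [h0]; simp [hF0]
  have hsur0 : ∀ (i : Fin m), ∀ q ∈ Vs 0 i, ∃ w, F0 i w = q := by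
    intro i q hq
    rw [h0] at hq
    simp only [Set.mem_singleton_iff] at hq
    exact ⟨fun _ => ⟨0, hQ⟩, hq.symm⟩
  have key : ∀ jj, 1 ≤ jj → jj ≤ ℓ →
      ∃ F : Fin m → (Fin ℓ → Fin (Fintype.card Q)) → Q,
        (∀ i w w', (∀ r : Fin ℓ, (r : ℕ) < jj → w r = w' r) → F i w = F i w') ∧
        (∀ i w, F i w ∈ Vs jj i) ∧ (∀ i, ∀ q ∈ Vs jj i, ∃ w, F i w = q) ∧
        Relation.TransGen (Step δ) (cfgF F0) (cfgF F) := by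
    intro jj
    induction jj with
    | zero => omega
    | succ n ihn =>
      intro _ hle
      by_cases hn : n = 0
      · subst hn
        exact phase δ (show 0 < ℓ by omega) (hedge 0 (by omega)) F0 hdep0 hmem0 hsur0
      · obtain ⟨F, hdep, hmem, hsur, htr⟩ := ihn (by omega) (by omega)
        obtain ⟨F', h1, h2, h3', h4⟩ :=
          phase δ (show n < ℓ by omega) (hedge n (by omega)) F hdep hmem hsur
        exact ⟨F', h1, h2, h3', htr.trans h4⟩
  obtain ⟨Fl, hdepl, hmeml, hsurl, htr⟩ := key ℓ hℓ le_rfl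
  have hcfg : cfgF Fl = cfgF F0 := by
    funext t
    have h := hmeml ((decW m ℓ Q) t).1 ((decW m ℓ Q) t).2
    rw [hend] at h
    simp only [Set.mem_singleton_iff] at h
    simpa [cfgF, hF0] using h
  rw [hcfg] at htr
  refine ⟨cfgF F0, ?_, ?_, htr⟩
  · intro t i h1 h2
    show s ((decW m ℓ Q) t).1 = s i
    congr 1
    have hval : ((((decW m ℓ Q) t).1 : Fin m) : ℕ)
        = (t : ℕ) / (Fintype.card Q ^ ℓ) := rfl
    have hE : 0 < Fintype.card Q ^ ℓ := pow_pos hQ ℓ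
    apply Fin.ext
    rw [hval]
    have hle : (i : ℕ) ≤ (t : ℕ) / (Fintype.card Q ^ ℓ) :=
      (Nat.le_div_iff_mul_le hE).mpr h1
    have hlt : (t : ℕ) / (Fintype.card Q ^ ℓ) < (i : ℕ) + 1 :=
      (Nat.div_lt_iff_lt_mul hE).mpr h2
    omega
  · ext x
    constructor
    · rintro ⟨t, rfl⟩
      exact ⟨((decW m ℓ Q) t).1, rfl⟩
    · rintro ⟨i, rfl⟩
      refine ⟨(decW m ℓ Q).symm (i, fun _ => (⟨0, hQ⟩ : Fin (Fintype.card Q))), ?_⟩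
      simp [cfgF, hF0, Equiv.apply_symm_apply]
end

section
/- Let d →_a d' be a transition of the broadcast network between configurations d, d' ∈ Q^n, and let I(1), …, I(m) be a partition of the position set [1..n] into nonempty blocks. For a configuration e and i ∈ [1..m] write B_e(i) = {e[t] : t ∈ I(i)}. Then there is an edge (B_d(1), …, B_d(m)) →_G (B_{d'}(1), …, B_{d'}(m)) in the graph G. -/
/-- If `d →_a d'` is a transition of the broadcast network and the positions `[1..n]` are
partitioned into `m ≤ |Q|` nonempty blocks (given by the block-index function `β`, surjective
so that every block is nonempty), then there is an edge
`(B_d(1), …, B_d(m)) →_G (B_{d'}(1), …, B_{d'}(m))` in the graph `G`,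
where `B_e(i) = {e[t] : β t = i}`. -/
theorem step_induces_graph_edge {D Q : Type} [Fintype Q] (δ : Set (Q × Op D × Q)) (a : D)
    {n m : ℕ} (hm : m ≤ Fintype.card Q)
    (d d' : Fin n → Q) (i : Fin n) (R : Set (Fin n)) (hstep : StepAt δ a d d' i R)
    (β : Fin n → Fin m) (hβ : Function.Surjective β) :
    GEdge δ (fun b => d '' (β ⁻¹' {b})) (fun b => d' '' (β ⁻¹' {b})) := by
  classical
  obtain ⟨hiR, hsend, hrecv, hidle⟩ := hstep
  set j := β i with hj
  set Gen : Fin m → Set Q := fun b => d' '' (R ∩ β ⁻¹' {b}) with hGenDef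
  set Kill : Fin m → Set Q := fun b =>
    {q | q ∈ d '' (β ⁻¹' {b}) ∧ q ∉ d' '' (β ⁻¹' {b}) ∧ ¬(b = j ∧ q = d i)} with hKillDef
  have key : ∀ b q, q ∈ Kill b → ∀ t : Fin n, β t = b → d t = q → t ∈ R := by
    intro b q hq t hbt hdt
    by_contra htR
    rcases hq with ⟨_, hq2, hq3⟩
    by_cases hti : t = i
    · exact hq3 ⟨by rw [← hbt, hti], by rw [← hdt, hti]⟩
    · exact hq2 ⟨t, hbt, by rw [hidle t htR hti]; exact hdt⟩
  refine ⟨a, j, d i, d' i, ⟨i, rfl, rfl⟩, ⟨i, rfl, rfl⟩, hsend,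
    Gen, Kill, ?_, ?_, ?_, ?_, ?_⟩
  · rintro b q' ⟨t, ⟨htR, hbt⟩, rfl⟩
    exact ⟨d t, ⟨t, hbt, rfl⟩, hrecv t htR⟩
  · rintro b q hq
    obtain ⟨t, hbt, hdt⟩ := hq.1
    have htR := key b q hq t hbt hdt
    refine ⟨⟨t, hbt, hdt⟩, d' t, q, rfl, ?_⟩
    rw [← hdt]; exact hrecv t htR
  · intro b hbj
    ext q'
    constructor
    · rintro ⟨t, hbt, rfl⟩
      by_cases htR : t ∈ R
      · exact Or.inr ⟨t, ⟨htR, hbt⟩, rfl⟩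
      · have hti : t ≠ i := by
          intro h; exact hbj (by rw [← hbt, h])
        have hidt : d' t = d t := hidle t htR hti
        refine Or.inl ⟨⟨t, hbt, hidt.symm⟩, fun hk => ?_⟩
        exact hk.2.1 ⟨t, hbt, rfl⟩
    · rintro (⟨hq1, hq2⟩ | ⟨t, ⟨htR, hbt⟩, rfl⟩)
      · by_contra hq'
        exact hq2 ⟨hq1, hq', fun h => hbj h.1⟩
      · exact ⟨t, hbt, rfl⟩
  · by_cases hs : d i ∈ d' '' (β ⁻¹' {j})
    · refine ⟨d '' (β ⁻¹' {j}), Or.inl rfl, ?_⟩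
      ext q'
      constructor
      · rintro ⟨t, hbt, rfl⟩
        by_cases hti : t = i
        · exact Or.inr (by subst hti; rfl)
        by_cases htR : t ∈ R
        · exact Or.inl (Or.inr ⟨t, ⟨htR, hbt⟩, rfl⟩)
        · have hidt : d' t = d t := hidle t htR hti
          refine Or.inl (Or.inl ⟨⟨t, hbt, hidt.symm⟩, fun hk => ?_⟩)
          exact hk.2.1 ⟨t, hbt, rfl⟩
      · rintro ((⟨hq1, hq2⟩ | ⟨t, ⟨htR, hbt⟩, rfl⟩) | hq)
        · by_contra hq'
          by_cases hqs : q' = d i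
          · exact hq' (hqs ▸ hs)
          · exact hq2 ⟨hq1, hq', fun h => hqs h.2⟩
        · exact ⟨t, hbt, rfl⟩
        · rw [Set.mem_singleton_iff] at hq
          exact ⟨i, rfl, hq.symm⟩
    · refine ⟨d '' (β ⁻¹' {j}) \ {d i}, Or.inr rfl, ?_⟩
      ext q'
      constructor
      · rintro ⟨t, hbt, rfl⟩
        by_cases hti : t = i
        · exact Or.inr (by subst hti; rfl)
        by_cases htR : t ∈ R
        · exact Or.inl (Or.inr ⟨t, ⟨htR, hbt⟩, rfl⟩)
        · have hidt : d' t = d t := hidle t htR hti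
          have hqs : d' t ≠ d i := by
            intro h; exact hs ⟨t, hbt, h⟩
          refine Or.inl (Or.inl ⟨⟨⟨t, hbt, hidt.symm⟩, hqs⟩, fun hk => ?_⟩)
          exact hk.2.1 ⟨t, hbt, rfl⟩
      · rintro ((⟨⟨hq1, hqs⟩, hq2⟩ | ⟨t, ⟨htR, hbt⟩, rfl⟩) | hq)
        · by_contra hq'
          exact hq2 ⟨hq1, hq', fun h => hqs h.2⟩
        · exact ⟨t, hbt, rfl⟩
        · rw [Set.mem_singleton_iff] at hq
          exact ⟨i, rfl, hq.symm⟩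
  · intro b q hq
    obtain ⟨t, hbt, hdt⟩ := hq.1
    have htR := key b q hq t hbt hdt
    refine ⟨d' t, ⟨q, rfl, ?_⟩, ⟨t, ⟨htR, hbt⟩, rfl⟩⟩
    rw [← hdt]; exact hrecv t htR
end

section
/- There is a path from V_1 to V_2 in the graph G if and only if there is a path in normal form from V_1 to V_2, i.e., a path V_1 →_G^* V_m →_G^* V_2 whose prefix is componentwise monotonically increasing (V_i ⊑ V_{i+1} for consecutive vertices of the prefix) and whose suffix is componentwise monotonically decreasing (V_i ⊒ V_{i+1} for consecutive vertices of the suffix). -/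
/-!
Every edge `B →_G C` can be replayed from a larger vertex `A ⊒ B` without killing anything, which
leads to `A ⊔ C`; and from `B ⊔ E` for any `E ⊒ C`, which leads to `E`: a state of `B` missing
from `C` was killed or was the sender's source, so the same `Gen`/`Kill` remove it again unless it
is in `E`. Hence, given a normal-form path `V₁ ↗* Vm ↘* B` and an edge `B → C`, the path
`V₁ ↗* Vm ↗ Vm ⊔ C ↘* C` is again in normal form: each decreasing step `X → Y` of the suffix
becomes `X ⊔ C → Y ⊔ C`, and the last one is `B ⊔ C → C`.
-/

section

variable {D Q : Type} {δ : Set (Q × Op D × Q)} {a : D} {m : ℕ}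

lemma postRecv_mono {S T : Set Q} (h : S ⊆ T) : postRecv δ a S ⊆ postRecv δ a T :=
  fun _ ⟨r, hr, hδ⟩ => ⟨r, h hr, hδ⟩

lemma enabledRecv_mono {S T : Set Q} (h : S ⊆ T) : enabledRecv δ a S ⊆ enabledRecv δ a T :=
  fun _ ⟨hr, hpost⟩ => ⟨h hr, hpost⟩

namespace Set

lemma union_diff_union_eq_union_of_subset {U A K G : Set Q} (h : U ⊆ A) :
    A ∪ ((U \ K) ∪ G) = A ∪ G := by
  rw [← union_assoc, union_eq_left.2 (sdiff_subset.trans h)]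

lemma eq_diff_diff_union_of_subset {U E K G U' : Set Q} (hsub : (U \ K) ∪ G ⊆ E)
    (hEU' : E ⊆ U') (hU' : U' ⊆ U ∪ E) : E = (U' \ (K \ E)) ∪ G := by
  refine subset_antisymm (fun q hq => Or.inl ⟨hEU' hq, fun hk => hk.2 hq⟩) ?_
  rintro q (⟨hqU', hqK⟩ | hqG)
  · by_contra hqE
    rcases hU' hqU' with hqU | hqE'
    · exact hqE (hsub (Or.inl ⟨hqU, fun hk => hqK ⟨hk, hqE⟩⟩))
    · exact hqE hqE'
  · exact hsub (Or.inr hqG)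

end Set

lemma GEdge.of_source_le {A B C : Fin m → Set Q} (h : GEdge δ B C) (hBA : B ≤ A) :
    GEdge δ A (A ⊔ C) := by
  obtain ⟨a, j, s, s', hs, hs', hsend, Gen, Kill, hGen, -, hC, ⟨U, hU, hCj⟩, -⟩ := h
  have hUA : U ⊆ A j := by
    rcases hU with rfl | rfl
    exacts [hBA j, Set.sdiff_subset.trans (hBA j)]
  refine ⟨a, j, s, s', hBA j hs, Or.inr hs', hsend, Gen, fun _ => ∅,
    fun i => (hGen i).trans (postRecv_mono (hBA i)), fun i => Set.empty_subset _,
    fun i hij => ?_, ⟨A j, Or.inl rfl, ?_⟩, by simp⟩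
  · simp only [Pi.sup_apply, Set.sup_eq_union, hC i hij, Set.sdiff_empty]
    exact Set.union_diff_union_eq_union_of_subset (hBA i)
  · simp only [Pi.sup_apply, Set.sup_eq_union, hCj, Set.sdiff_empty, Set.union_assoc]
    exact Set.union_diff_union_eq_union_of_subset hUA

lemma GEdge.of_target_le {B C E : Fin m → Set Q} (h : GEdge δ B C) (hCE : C ≤ E) :
    GEdge δ (B ⊔ E) E := by
  obtain ⟨a, j, s, s', hs, hs', hsend, Gen, Kill, hGen, hKill, hC, ⟨U, hU, hCj⟩, hKillGen⟩ := h
  have hBU : B j \ {s} ⊆ U := by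
    rcases hU with rfl | rfl
    exacts [Set.sdiff_subset, subset_rfl]
  -- the sender's source is dropped exactly when it is not in `E j`
  obtain ⟨U', hU', hEU', hU'U⟩ : ∃ U', (U' = (B ⊔ E) j ∨ U' = (B ⊔ E) j \ {s}) ∧
      E j ⊆ U' ∧ U' ⊆ U ∪ E j := by
    by_cases hsE : s ∈ E j
    · refine ⟨(B ⊔ E) j, Or.inl rfl, Set.subset_union_right,
        Set.union_subset ?_ Set.subset_union_right⟩
      intro q hq
      by_cases hqs : q = s
      exacts [Or.inr (hqs ▸ hsE), Or.inl (hBU ⟨hq, hqs⟩)]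
    · refine ⟨(B ⊔ E) j \ {s}, Or.inr rfl,
        fun q hq => ⟨Or.inr hq, fun hqs => hsE (hqs ▸ hq)⟩, ?_⟩
      rintro q ⟨hq | hq, hqs⟩
      exacts [Or.inl (hBU ⟨hq, hqs⟩), Or.inr hq]
  refine ⟨a, j, s, s', Or.inl hs, hCE j hs', hsend, Gen, fun i => Kill i \ E i,
    fun i => (hGen i).trans (postRecv_mono Set.subset_union_left),
    fun i => Set.sdiff_subset.trans ((hKill i).trans (enabledRecv_mono Set.subset_union_left)),
    fun i hij => ?_, ⟨U', hU', ?_⟩, fun i q hq => hKillGen i q hq.1⟩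
  · exact Set.eq_diff_diff_union_of_subset (U := B i) (hC i hij ▸ hCE i)
      Set.subset_union_right subset_rfl
  · rw [Set.union_assoc]
    refine Set.eq_diff_diff_union_of_subset ?_ hEU' hU'U
    rw [← Set.union_assoc, ← hCj]
    exact hCE j

def IncEdge (δ : Set (Q × Op D × Q)) (A B : Fin m → Set Q) : Prop := GEdge δ A B ∧ A ≤ B

def DecEdge (δ : Set (Q × Op D × Q)) (A B : Fin m → Set Q) : Prop := GEdge δ A B ∧ B ≤ A

lemma le_of_reflTransGen_decEdge {A B : Fin m → Set Q}
    (h : Relation.ReflTransGen (DecEdge δ) A B) : B ≤ A := by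
  induction h with
  | refl => exact le_rfl
  | tail _ hstep ih => exact hstep.2.trans ih

lemma reflTransGen_decEdge_sup_of_gEdge {A B C : Fin m → Set Q}
    (hAB : Relation.ReflTransGen (DecEdge δ) A B) (hBC : GEdge δ B C) :
    Relation.ReflTransGen (DecEdge δ) (A ⊔ C) C := by
  induction hAB using Relation.ReflTransGen.head_induction_on with
  | refl => exact .single ⟨hBC.of_target_le le_rfl, le_sup_right⟩
  | @head X Y hXY _ ih =>
    have hedge : GEdge δ (X ⊔ C) (Y ⊔ C) := by
      simpa only [← sup_assoc, sup_eq_left.2 hXY.2] using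
        hXY.1.of_target_le (le_sup_left (b := C))
    exact .head ⟨hedge, sup_le_sup_right hXY.2 C⟩ ih

end

theorem path_iff_normal_form_path_general {D Q : Type} (δ : Set (Q × Op D × Q))
    {m : ℕ} (V₁ V₂ : Fin m → Set Q) :
    Relation.ReflTransGen (GEdge δ) V₁ V₂ ↔
    ∃ Vm : Fin m → Set Q,
      Relation.ReflTransGen (fun A B => GEdge δ A B ∧ ∀ i, A i ⊆ B i) V₁ Vm ∧
      Relation.ReflTransGen (fun A B => GEdge δ A B ∧ ∀ i, B i ⊆ A i) Vm V₂ := by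
  show _ ↔ ∃ Vm, Relation.ReflTransGen (IncEdge δ) V₁ Vm ∧
    Relation.ReflTransGen (DecEdge δ) Vm V₂
  constructor
  · intro hpath
    induction hpath with
    | refl => exact ⟨V₁, .refl, .refl⟩
    | @tail B C _ hBC ih =>
      obtain ⟨Vm, hinc, hdec⟩ := ih
      have hinc' : IncEdge δ Vm (Vm ⊔ C) :=
        ⟨hBC.of_source_le (le_of_reflTransGen_decEdge hdec), le_sup_left⟩
      exact ⟨Vm ⊔ C, hinc.tail hinc', reflTransGen_decEdge_sup_of_gEdge hdec hBC⟩
  · rintro ⟨Vm, hinc, hdec⟩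
    exact (Relation.ReflTransGen.mono (fun _ _ h => h.1) _ _ hinc).trans
      (Relation.ReflTransGen.mono (fun _ _ h => h.1) _ _ hdec)

/-- Lemma 4 (normal form): There is a path from `V₁` to `V₂` in the graph `G` iff there is a
path in normal form from `V₁` to `V₂`, i.e. a path `V₁ →_G* Vm →_G* V₂` whose prefix is
componentwise monotonically increasing and whose suffix is componentwise monotonically
decreasing. -/
theorem path_iff_normal_form_path {D Q : Type} [Fintype Q] (δ : Set (Q × Op D × Q))
    {m : ℕ} (V₁ V₂ : Fin m → Set Q) :
    Relation.ReflTransGen (GEdge δ) V₁ V₂ ↔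
    ∃ Vm : Fin m → Set Q,
      Relation.ReflTransGen (fun A B => GEdge δ A B ∧ ∀ i, A i ⊆ B i) V₁ Vm ∧
      Relation.ReflTransGen (fun A B => GEdge δ A B ∧ ∀ i, B i ⊆ A i) Vm V₂ :=
  path_iff_normal_form_path_general δ V₁ V₂
end

section
/- Let s_1, …, s_m be pairwise distinct states of Q. There is a cycle ({s_1}, …, {s_m}) →_G^+ ({s_1}, …, {s_m}) in the graph G if and only if there is a non-trivial solution C = (C_1, …, C_m) ≠ (∅, …, ∅) to the equation C = post^+_C({s_1}, …, {s_m}) ∩ pre^*_C({s_1}, …, {s_m}), where the intersection is componentwise. -/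
/-- A send transition `x →!a y` of the client `P` restricted to the states `C`. -/
def sendIn {D Q : Type} (δ : Set (Q × Op D × Q)) (C : Set Q) (a : D) (x y : Q) : Prop :=
  x ∈ C ∧ y ∈ C ∧ (x, Op.send a, y) ∈ δ

/-- A receive transition `x →?a y` of the client `P` restricted to the states `C`. -/
def recvIn {D Q : Type} (δ : Set (Q × Op D × Q)) (C : Set Q) (a : D) (x y : Q) : Prop :=
  x ∈ C ∧ y ∈ C ∧ (x, Op.recv a, y) ∈ δ

/-- The constrained post operator `post_C`. -/
def postC {D Q : Type} (δ : Set (Q × Op D × Q)) {m : ℕ} (C X : Fin m → Set Q) :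
    Fin m → Set Q := fun i =>
  {s' | ∃ (a : D) (s : Q), s ∈ X i ∧ sendIn δ (C i) a s s'} ∪
  {s' | ∃ (a : D) (l : Fin m) (s₁ s₂ : Q), s₁ ∈ X l ∧ s₂ ∈ X l ∧ sendIn δ (C l) a s₁ s₂ ∧
        ∃ s ∈ X i, recvIn δ (C i) a s s'}

/-- The constrained pre operator `pre_C`. -/
def preC {D Q : Type} (δ : Set (Q × Op D × Q)) {m : ℕ} (C X : Fin m → Set Q) :
    Fin m → Set Q := fun i =>
  {s | ∃ (a : D) (s' : Q), s' ∈ X i ∧ sendIn δ (C i) a s s'} ∪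
  {s | ∃ (a : D) (l : Fin m) (s₁ s₂ : Q), s₁ ∈ X l ∧ s₂ ∈ X l ∧ sendIn δ (C l) a s₁ s₂ ∧
       ∃ s' ∈ X i, recvIn δ (C i) a s s'}

/-- `post⁺_C(X)`: the componentwise-least tuple `R` with `post_C(X ⊔ R) ≤ R`, i.e. the
transitive closure of the saturation of `post_C` starting from `X`. -/
def postPlus {D Q : Type} (δ : Set (Q × Op D × Q)) {m : ℕ} (C X : Fin m → Set Q) :
    Fin m → Set Q :=
  sInf {R | postC δ C (X ⊔ R) ≤ R}

/-- `pre*_C(X)`: the componentwise-least tuple containing `X` and closed under `pre_C`,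
i.e. the reflexive-transitive closure of the saturation of `pre_C` starting from `X`. -/
def preStar {D Q : Type} (δ : Set (Q × Op D × Q)) {m : ℕ} (C X : Fin m → Set Q) :
    Fin m → Set Q :=
  sInf {R | X ≤ R ∧ preC δ C R ≤ R}

section Aux
set_option linter.unusedSectionVars false

variable {D Q : Type} [Fintype Q] {m : ℕ} (δ : Set (Q × Op D × Q))

lemma postC_subset (C Y : Fin m → Set Q) (i : Fin m) : postC δ C Y i ⊆ C i := by
  rintro q (⟨a, w, _, _, hq, _⟩ | ⟨a, l, s₁, s₂, _, _, _, w, _, _, hq, _⟩) <;> exact hq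

lemma preC_subset (C Y : Fin m → Set Q) (i : Fin m) : preC δ C Y i ⊆ C i := by
  rintro q (⟨a, w, _, hq, _, _⟩ | ⟨a, l, s₁, s₂, _, _, _, w, _, hq, _, _⟩) <;> exact hq

lemma postC_mono (C : Fin m → Set Q) {Y Y' : Fin m → Set Q} (h : Y ≤ Y') :
    postC δ C Y ≤ postC δ C Y' := by
  intro i q hq
  rcases hq with ⟨a, w, hw, hsend⟩ | ⟨a, l, s₁, s₂, h₁, h₂, hsend, w, hw, hrecv⟩
  · exact Or.inl ⟨a, w, h i hw, hsend⟩
  · exact Or.inr ⟨a, l, s₁, s₂, h l h₁, h l h₂, hsend, w, h i hw, hrecv⟩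

lemma preC_mono (C : Fin m → Set Q) {Y Y' : Fin m → Set Q} (h : Y ≤ Y') :
    preC δ C Y ≤ preC δ C Y' := by
  intro i q hq
  rcases hq with ⟨a, w, hw, hsend⟩ | ⟨a, l, s₁, s₂, h₁, h₂, hsend, w, hw, hrecv⟩
  · exact Or.inl ⟨a, w, h i hw, hsend⟩
  · exact Or.inr ⟨a, l, s₁, s₂, h l h₁, h l h₂, hsend, w, h i hw, hrecv⟩

lemma postPlus_le (C X R : Fin m → Set Q) (h : postC δ C (X ⊔ R) ≤ R) :
    postPlus δ C X ≤ R := sInf_le h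

lemma postC_postPlus_le (C X : Fin m → Set Q) :
    postC δ C (X ⊔ postPlus δ C X) ≤ postPlus δ C X := by
  refine le_sInf fun R hR => ?_
  exact le_trans (postC_mono δ C (sup_le_sup_left (sInf_le hR) X)) hR

lemma postPlus_le_postC (C X : Fin m → Set Q) :
    postPlus δ C X ≤ postC δ C (X ⊔ postPlus δ C X) := by
  apply postPlus_le
  exact postC_mono δ C (sup_le_sup_left (postC_postPlus_le δ C X) X)

lemma X_le_preStar (C X : Fin m → Set Q) : X ≤ preStar δ C X :=
  le_sInf fun _ hR => hR.1

lemma preC_preStar_le (C X : Fin m → Set Q) :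
    preC δ C (preStar δ C X) ≤ preStar δ C X := by
  refine le_sInf fun R hR => ?_
  exact le_trans (preC_mono δ C (sInf_le hR)) hR.2

lemma preStar_le (C X R : Fin m → Set Q) (h1 : X ≤ R) (h2 : preC δ C R ≤ R) :
    preStar δ C X ≤ R := sInf_le ⟨h1, h2⟩

lemma postPlus_le_C (C X : Fin m → Set Q) : postPlus δ C X ≤ C :=
  postPlus_le δ C X C (fun i => postC_subset δ C _ i)



/-- A monotone ℕ-chain of tuples of sets (over a fintype) stabilizes at some step. -/
lemma chain_stab (h : ℕ → Fin m → Set Q) (hmono : ∀ n, h n ≤ h (n + 1)) :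
    ∃ N, h (N + 1) = h N := by
  classical
  by_contra hcon
  push_neg at hcon
  set M : ℕ → ℕ := fun n => ∑ i : Fin m, (h n i).ncard with hM
  have hlt : ∀ n, M n < M (n + 1) := by
    intro n
    have hne : ∃ i, h n i ≠ h (n + 1) i := by
      by_contra hall
      push_neg at hall
      exact hcon n (funext fun i => (hall i).symm)
    obtain ⟨i, hi⟩ := hne
    apply Finset.sum_lt_sum
    · intro j _
      exact Set.ncard_le_ncard (hmono n j) (Set.toFinite _)
    · refine ⟨i, Finset.mem_univ i, ?_⟩
      apply Set.ncard_lt_ncard ?_ (Set.toFinite _)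
      exact Set.ssubset_iff_subset_ne.2 ⟨hmono n i, hi⟩
  have hge : ∀ n, n ≤ M n := by
    intro n
    induction n with
    | zero => exact Nat.zero_le _
    | succ k ih => exact Nat.lt_of_le_of_lt ih (hlt k)
  have hbd : ∀ n, M n ≤ m * Fintype.card Q := by
    intro n
    calc M n ≤ ∑ _i : Fin m, Fintype.card Q := by
          apply Finset.sum_le_sum
          intro j _
          simpa [Set.ncard_univ, Nat.card_eq_fintype_card] using
            Set.ncard_le_ncard (Set.subset_univ (h n j)) (Set.toFinite _)
      _ = m * Fintype.card Q := by simp [Finset.sum_const, mul_comm]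
  have := hge (m * Fintype.card Q + 1)
  have := hbd (m * Fintype.card Q + 1)
  omega

/-- Insert a state `q` into component `i` of a tuple. -/
def insTuple {m : ℕ} (V : Fin m → Set Q) (i : Fin m) (q : Q) : Fin m → Set Q :=
  fun k => if k = i then insert q (V k) else V k

/-- Remove a state `q` from component `i` of a tuple. -/
def remTuple {m : ℕ} (V : Fin m → Set Q) (i : Fin m) (q : Q) : Fin m → Set Q :=
  fun k => if k = i then V k \ {q} else V k

lemma edge_send_add (V : Fin m → Set Q) (i : Fin m) (a : D) (w q : Q)
    (hw : w ∈ V i) (hδ : (w, Op.send a, q) ∈ δ) : GEdge δ V (insTuple V i q) := by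
  classical
  refine ⟨a, i, w, q, hw, by simp [insTuple], hδ, fun _ => ∅, fun _ => ∅,
    fun k => by simp, fun k => by simp, fun k hk => by simp [insTuple, hk],
    ⟨V i, Or.inl rfl, ?_⟩, fun k p hp => absurd hp (Set.notMem_empty p)⟩
  ext x
  by_cases hx : x = q <;> simp [insTuple, hx]

lemma edge_recv_add (V : Fin m → Set Q) (i l : Fin m) (a : D) (s₁ s₂ w q : Q)
    (h₁ : s₁ ∈ V l) (h₂ : s₂ ∈ V l) (hδs : (s₁, Op.send a, s₂) ∈ δ)
    (hw : w ∈ V i) (hδr : (w, Op.recv a, q) ∈ δ) : GEdge δ V (insTuple V i q) := by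
  classical
  refine ⟨a, l, s₁, s₂, h₁, ?_, hδs, (fun k => if k = i then {q} else ∅), fun _ => ∅,
    ?_, fun k => by simp, ?_, ⟨V l, Or.inl rfl, ?_⟩,
    fun k p hp => absurd (by simp at hp) (fun h => h)⟩
  · by_cases hli : l = i
    · subst hli; simp [insTuple, h₂]
    · simpa [insTuple, hli] using h₂
  · intro k
    by_cases hk : k = i
    · subst hk
      intro x hx
      simp at hx
      subst hx
      exact ⟨w, hw, hδr⟩
    · simp [hk]
  · intro k hk
    by_cases hki : k = i
    · subst hki
      ext x
      by_cases hx : x = q <;> simp [insTuple, hx]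
    · simp [insTuple, hki, hk]
  · by_cases hli : l = i
    · subst hli
      ext x
      by_cases hx : x = q
      · simp [insTuple, hx]
      · by_cases hx2 : x = s₂ <;> simp [insTuple, hx, hx2, h₂]
    · ext x
      by_cases hx2 : x = s₂ <;> simp [insTuple, hli, hx2, h₂]

lemma edge_send_remove (V : Fin m → Set Q) (i : Fin m) (a : D) (q y : Q)
    (hq : q ∈ V i) (hy : y ∈ V i) (hne : y ≠ q) (hδ : (q, Op.send a, y) ∈ δ) :
    GEdge δ V (remTuple V i q) := by
  classical
  refine ⟨a, i, q, y, hq, by simp [remTuple, hy, hne], hδ, fun _ => ∅, fun _ => ∅,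
    fun k => by simp, fun k => by simp, fun k hk => by simp [remTuple, hk],
    ⟨V i \ {q}, Or.inr rfl, ?_⟩, fun k p hp => absurd hp (Set.notMem_empty p)⟩
  ext x
  by_cases hx : x = y <;> simp [remTuple, hx, hy, hne]

lemma edge_recv_remove (V : Fin m → Set Q) (i l : Fin m) (a : D) (s₁ s₂ q y : Q)
    (h₁ : s₁ ∈ V l) (h₂ : s₂ ∈ V l) (hδs : (s₁, Op.send a, s₂) ∈ δ)
    (hs2q : l = i → s₂ ≠ q)
    (hq : q ∈ V i) (hy : y ∈ V i) (hyq : y ≠ q) (hδr : (q, Op.recv a, y) ∈ δ) :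
    GEdge δ V (remTuple V i q) := by
  classical
  refine ⟨a, l, s₁, s₂, h₁, ?_, hδs,
    (fun k => if k = i then {y} else ∅), (fun k => if k = i then {q} else ∅),
    ?_, ?_, ?_, ⟨V l, Or.inl rfl, ?_⟩, ?_⟩
  · by_cases hli : l = i
    · subst hli; simp [remTuple, h₂, hs2q rfl]
    · simp [remTuple, hli, h₂]
  · intro k
    by_cases hk : k = i
    · subst hk
      intro x hx
      simp at hx
      subst hx
      exact ⟨q, hq, hδr⟩
    · simp [hk]
  · intro k
    by_cases hk : k = i
    · subst hk
      intro x hx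
      simp at hx
      subst hx
      exact ⟨hq, y, x, rfl, hδr⟩
    · simp [hk]
  · intro k hk
    by_cases hki : k = i
    · subst hki
      ext x
      by_cases hx : x = y <;> simp [remTuple, hx, hy, hyq]
    · simp [remTuple, hki, hk]
  · by_cases hli : l = i
    · subst hli
      ext x
      by_cases hx2 : x = s₂
      · subst hx2; simp [remTuple, h₂, hs2q rfl]
      · by_cases hx : x = y <;> simp [remTuple, hx, hx2, hy, hyq]
    · ext x
      by_cases hx2 : x = s₂ <;> simp [remTuple, hli, hx2, h₂]
  · intro k p hp
    by_cases hk : k = i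
    · subst hk
      simp at hp
      · subst hp
        exact ⟨y, ⟨p, rfl, hδr⟩, by simp⟩
    · simp [hk] at hp



lemma tuple_exists_diff {A B : Fin m → Set Q} (hAB : A ≤ B) (hne : A ≠ B) :
    ∃ i q, q ∈ B i ∧ q ∉ A i := by
  by_contra hcon
  push_neg at hcon
  apply hne
  funext i
  exact le_antisymm (hAB i) (fun q hq => hcon i q hq)

lemma sum_ncard_lt {A B : Fin m → Set Q} (i : Fin m)
    (hsub : ∀ k, A k ⊆ B k) (hstrict : A i ⊂ B i) :
    (∑ k, (A k).ncard) < ∑ k, (B k).ncard := by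
  apply Finset.sum_lt_sum
  · exact fun k _ => Set.ncard_le_ncard (hsub k) (Set.toFinite _)
  · exact ⟨i, Finset.mem_univ i, Set.ncard_lt_ncard hstrict (Set.toFinite _)⟩

lemma grow_inner (A B : Fin m → Set Q) (hAB : A ≤ B)
    (h : ∀ i q, q ∈ B i → q ∉ A i →
      (∃ a w, w ∈ A i ∧ (w, Op.send a, q) ∈ δ) ∨
      (∃ a l s₁ s₂ w, s₁ ∈ A l ∧ s₂ ∈ A l ∧ (s₁, Op.send a, s₂) ∈ δ ∧
        w ∈ A i ∧ (w, Op.recv a, q) ∈ δ)) :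
    ∀ k (V : Fin m → Set Q), A ≤ V → V ≤ B → (∑ i, (B i \ V i).ncard) ≤ k →
      Relation.ReflTransGen (GEdge δ) V B := by
  intro k
  induction k with
  | zero =>
    intro V hAV hVB hcard
    have : V = B := by
      funext i
      refine le_antisymm (hVB i) fun q hq => by_contra fun hq' => ?_
      have h0 : (B i \ V i).ncard = 0 :=
        Nat.le_zero.1 (le_trans (Finset.single_le_sum
          (f := fun j => (B j \ V j).ncard) (fun j _ => Nat.zero_le _)
          (Finset.mem_univ i)) hcard)
      have : q ∈ B i \ V i := ⟨hq, hq'⟩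
      rw [(Set.ncard_eq_zero (Set.toFinite _)).1 h0] at this
      exact this
    rw [this]
  | succ k ih =>
    intro V hAV hVB hcard
    by_cases hVB' : V = B
    · rw [hVB']
    · obtain ⟨i, q, hqB, hqV⟩ := tuple_exists_diff hVB hVB'
      have hedge : GEdge δ V (insTuple V i q) := by
        rcases h i q hqB (fun hqA => hqV (hAV i hqA)) with
          ⟨a, w, hw, hδ⟩ | ⟨a, l, s₁, s₂, w, h₁, h₂, hδs, hw, hδr⟩
        · exact edge_send_add δ V i a w q (hAV i hw) hδ
        · exact edge_recv_add δ V i l a s₁ s₂ w q (hAV l h₁) (hAV l h₂) hδs (hAV i hw) hδr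
      refine Relation.ReflTransGen.head hedge (ih (insTuple V i q) ?_ ?_ ?_)
      · intro j x hx
        by_cases hj : j = i
        · subst hj
          simp only [insTuple, if_pos rfl]
          exact Set.mem_insert_of_mem q (hAV j hx)
        · simpa [insTuple, hj] using hAV j hx
      · intro j x hx
        by_cases hj : j = i
        · subst hj
          simp [insTuple] at hx
          rcases hx with rfl | hx
          · exact hqB
          · exact hVB j hx
        · simp [insTuple, hj] at hx
          exact hVB j hx
      · refine Nat.lt_succ_iff.1 (lt_of_lt_of_le ?_ hcard)
        apply sum_ncard_lt i
        · intro j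
          by_cases hj : j = i
          · subst hj
            intro x hx
            simp only [insTuple, if_pos rfl] at hx
            exact ⟨hx.1, fun h' => hx.2 (Set.mem_insert_of_mem q h')⟩
          · simp [insTuple, hj]
        · rw [(Set.ssubset_iff_of_subset ?_)]
          · exact ⟨q, ⟨hqB, hqV⟩, by simp [insTuple]⟩
          · intro x hx
            simp [insTuple] at hx
            exact ⟨hx.1, hx.2.2⟩

lemma shrink_inner (A B : Fin m → Set Q) (hAB : A ≤ B)
    (h : ∀ i q, q ∈ B i → q ∉ A i →
      (∃ a y, y ∈ A i ∧ (q, Op.send a, y) ∈ δ) ∨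
      (∃ a l s₁ s₂ y, s₁ ∈ A l ∧ s₂ ∈ A l ∧ (s₁, Op.send a, s₂) ∈ δ ∧
        y ∈ A i ∧ (q, Op.recv a, y) ∈ δ)) :
    ∀ k (V : Fin m → Set Q), A ≤ V → V ≤ B → (∑ i, (V i \ A i).ncard) ≤ k →
      Relation.ReflTransGen (GEdge δ) V A := by
  intro k
  induction k with
  | zero =>
    intro V hAV hVB hcard
    have : V = A := by
      funext i
      refine le_antisymm (fun q hq => by_contra fun hq' => ?_) (hAV i)
      have h0 : (V i \ A i).ncard = 0 :=
        Nat.le_zero.1 (le_trans (Finset.single_le_sum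
          (f := fun j => (V j \ A j).ncard) (fun j _ => Nat.zero_le _)
          (Finset.mem_univ i)) hcard)
      have : q ∈ V i \ A i := ⟨hq, hq'⟩
      rw [(Set.ncard_eq_zero (Set.toFinite _)).1 h0] at this
      exact this
    rw [this]
  | succ k ih =>
    intro V hAV hVB hcard
    by_cases hVA : V = A
    · rw [hVA]
    · obtain ⟨i, q, hqV, hqA⟩ := tuple_exists_diff hAV (fun h' => hVA h'.symm)
      have hedge : GEdge δ V (remTuple V i q) := by
        rcases h i q (hVB i hqV) hqA with
          ⟨a, y, hy, hδ⟩ | ⟨a, l, s₁, s₂, y, h₁, h₂, hδs, hy, hδr⟩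
        · exact edge_send_remove δ V i a q y hqV (hAV i hy)
            (fun h' => hqA (h' ▸ hy)) hδ
        · refine edge_recv_remove δ V i l a s₁ s₂ q y (hAV l h₁) (hAV l h₂) hδs
            (fun hli h' => hqA (hli ▸ h' ▸ h₂)) hqV (hAV i hy)
            (fun h' => hqA (h' ▸ hy)) hδr
      refine Relation.ReflTransGen.head hedge (ih (remTuple V i q) ?_ ?_ ?_)
      · intro j x hx
        by_cases hj : j = i
        · subst hj
          simp [remTuple]
          exact ⟨hAV j hx, fun h' => hqA (h' ▸ hx)⟩
        · simp [remTuple, hj]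
          exact hAV j hx
      · intro j x hx
        by_cases hj : j = i
        · subst hj
          simp only [remTuple, if_pos rfl] at hx
          exact hVB j hx.1
        · simp only [remTuple, if_neg hj] at hx
          exact hVB j hx
      · refine Nat.lt_succ_iff.1 (lt_of_lt_of_le ?_ hcard)
        apply sum_ncard_lt i
        · intro j
          by_cases hj : j = i
          · subst hj
            intro x hx
            simp only [remTuple, if_pos rfl] at hx
            exact ⟨hx.1.1, hx.2⟩
          · simp [remTuple, hj]
        · rw [(Set.ssubset_iff_of_subset ?_)]
          · exact ⟨q, ⟨hqV, hqA⟩, by simp [remTuple]⟩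
          · intro x hx
            simp [remTuple] at hx
            exact ⟨hx.1.1, hx.2⟩



variable (C X : Fin m → Set Q)

/-- Iteration chain for `postPlus`. -/
def fchain : ℕ → Fin m → Set Q
  | 0 => ⊥
  | n + 1 => fchain n ⊔ postC δ C (X ⊔ fchain n)

/-- Iteration chain for `preStar`. -/
def gchain : ℕ → Fin m → Set Q
  | 0 => X
  | n + 1 => gchain n ⊔ preC δ C (gchain n)

lemma fchain_le_postPlus : ∀ n, fchain δ C X n ≤ postPlus δ C X := by
  intro n
  induction n with
  | zero => exact bot_le
  | succ n ih =>
    exact sup_le ih (le_trans (postC_mono δ C (sup_le_sup_left ih X))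
      (postC_postPlus_le δ C X))

lemma gchain_le_preStar : ∀ n, gchain δ C X n ≤ preStar δ C X := by
  intro n
  induction n with
  | zero => exact X_le_preStar δ C X
  | succ n ih =>
    exact sup_le ih (le_trans (preC_mono δ C ih) (preC_preStar_le δ C X))

lemma exists_postPlus_eq_fchain : ∃ N, postPlus δ C X = fchain δ C X N := by
  obtain ⟨N, hN⟩ := chain_stab (fchain δ C X) (fun n => le_sup_left)
  refine ⟨N, le_antisymm ?_ (fchain_le_postPlus δ C X N)⟩
  apply postPlus_le
  calc postC δ C (X ⊔ fchain δ C X N) ≤ fchain δ C X (N + 1) := le_sup_right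
    _ = fchain δ C X N := hN

lemma exists_preStar_eq_gchain : ∃ N, preStar δ C X = gchain δ C X N := by
  obtain ⟨N, hN⟩ := chain_stab (gchain δ C X) (fun n => le_sup_left)
  refine ⟨N, le_antisymm ?_ (gchain_le_preStar δ C X N)⟩
  apply preStar_le
  · exact fun i => by
      have : gchain δ C X 0 ≤ gchain δ C X N := by
        clear hN
        induction N with
        | zero => exact le_refl _
        | succ n ih => exact le_trans ih le_sup_left
      exact this i
  · calc preC δ C (gchain δ C X N) ≤ gchain δ C X (N + 1) := le_sup_right
      _ = gchain δ C X N := hN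

lemma insTuple_eq_self (V : Fin m → Set Q) (i : Fin m) (q : Q) (hq : q ∈ V i) :
    insTuple V i q = V := by
  funext k
  by_cases hk : k = i
  · subst hk; simp [insTuple, hq]
  · simp [insTuple, hk]

lemma tuple_nontrivial (hne : C ≠ (fun _ => (∅ : Set Q))) : ∃ i q, q ∈ C i := by
  by_contra hcon
  push_neg at hcon
  exact hne (funext fun i => Set.eq_empty_iff_forall_notMem.2 (hcon i))

/-- The reverse direction: a non-trivial fixed point yields a cycle. -/
lemma fixed_point_to_cycle (sv : Fin m → Q)
    (C : Fin m → Set Q) (hne : C ≠ (fun _ => (∅ : Set Q)))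
    (hC : C = postPlus δ C (fun i => {sv i}) ⊓ preStar δ C (fun i => {sv i})) :
    Relation.TransGen (GEdge δ) (fun i => ({sv i} : Set Q)) (fun i => {sv i}) := by
  classical
  set X : Fin m → Set Q := fun i => {sv i} with hX
  have hCpost : C ≤ postPlus δ C X := hC.le.trans inf_le_left
  have hCpre : C ≤ preStar δ C X := hC.le.trans inf_le_right
  obtain ⟨N, hN⟩ := exists_postPlus_eq_fchain δ C X
  obtain ⟨M, hM⟩ := exists_preStar_eq_gchain δ C X
  -- the growth phase
  have grow : ∀ n, Relation.ReflTransGen (GEdge δ) X (X ⊔ (fchain δ C X n ⊓ C)) := by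
    intro n
    induction n with
    | zero =>
      have h0 : X ⊔ (fchain δ C X 0 ⊓ C) = X := by
        rw [show fchain δ C X (0 : ℕ) = ⊥ from rfl, bot_inf_eq, sup_bot_eq]
      rw [h0]
    | succ n ih =>
      refine Relation.ReflTransGen.trans ih ?_
      apply grow_inner δ (X ⊔ (fchain δ C X n ⊓ C)) (X ⊔ (fchain δ C X (n + 1) ⊓ C))
        (sup_le_sup_left (inf_le_inf_right C le_sup_left) X) ?_
        (∑ i, ((X ⊔ (fchain δ C X (n + 1) ⊓ C)) i \ (X ⊔ (fchain δ C X n ⊓ C)) i).ncard)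
        _ (le_refl _) (sup_le_sup_left (inf_le_inf_right C le_sup_left) X) (le_refl _)
      intro i q hqB hqA
      have hqX : q ∉ X i := fun h => hqA (Or.inl h)
      have hqC : q ∈ C i := by
        rcases hqB with h | h
        · exact absurd h hqX
        · exact h.2
      have hqf : q ∈ postC δ C (X ⊔ fchain δ C X n) i := by
        rcases hqB with h | h
        · exact absurd h hqX
        · rcases h.1 with h' | h'
          · exact absurd (Or.inr ⟨h', h.2⟩) hqA
          · exact h'
      have memA : ∀ (k : Fin m) (w : Q), w ∈ (X ⊔ fchain δ C X n) k → w ∈ C k →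
          w ∈ (X ⊔ (fchain δ C X n ⊓ C)) k := by
        rintro k w (hw | hw) hwC
        · exact Or.inl hw
        · exact Or.inr ⟨hw, hwC⟩
      rcases hqf with ⟨a, w, hw, hsend⟩ | ⟨a, l, s₁, s₂, h₁, h₂, hsend, w, hw, hrecv⟩
      · exact Or.inl ⟨a, w, memA i w hw hsend.1, hsend.2.2⟩
      · exact Or.inr ⟨a, l, s₁, s₂, w, memA l s₁ h₁ hsend.1, memA l s₂ h₂ hsend.2.1,
          hsend.2.2, memA i w hw hrecv.1, hrecv.2.2⟩
  -- the shrinking phase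
  have shrink : ∀ n, Relation.ReflTransGen (GEdge δ) (X ⊔ (gchain δ C X n ⊓ C)) X := by
    intro n
    induction n with
    | zero =>
      have : X ⊔ (gchain δ C X 0 ⊓ C) = X := by
        rw [show gchain δ C X 0 = X from rfl, sup_inf_self]
      rw [this]
    | succ n ih =>
      refine Relation.ReflTransGen.trans ?_ ih
      apply shrink_inner δ (X ⊔ (gchain δ C X n ⊓ C)) (X ⊔ (gchain δ C X (n + 1) ⊓ C))
        (sup_le_sup_left (inf_le_inf_right C le_sup_left) X) ?_
        (∑ i, ((X ⊔ (gchain δ C X (n + 1) ⊓ C)) i \ (X ⊔ (gchain δ C X n ⊓ C)) i).ncard)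
        _ (sup_le_sup_left (inf_le_inf_right C le_sup_left) X) (le_refl _) (le_refl _)
      intro i q hqB hqA
      have hqX : q ∉ X i := fun h => hqA (Or.inl h)
      have hqg : q ∈ preC δ C (gchain δ C X n) i := by
        rcases hqB with h | h
        · exact absurd h hqX
        · rcases h.1 with h' | h'
          · exact absurd (Or.inr ⟨h', h.2⟩) hqA
          · exact h'
      have memA : ∀ (k : Fin m) (w : Q), w ∈ gchain δ C X n k → w ∈ C k →
          w ∈ (X ⊔ (gchain δ C X n ⊓ C)) k := fun k w hw hwC => Or.inr ⟨hw, hwC⟩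
      rcases hqg with ⟨a, y, hy, hsend⟩ | ⟨a, l, s₁, s₂, h₁, h₂, hsend, y, hy, hrecv⟩
      · exact Or.inl ⟨a, y, memA i y hy hsend.2.1, hsend.2.2⟩
      · exact Or.inr ⟨a, l, s₁, s₂, y, memA l s₁ h₁ hsend.1, memA l s₂ h₂ hsend.2.1,
          hsend.2.2, memA i y hy hrecv.2.1, hrecv.2.2⟩
  have hfC : fchain δ C X N ⊓ C = C := inf_eq_right.2 (hN ▸ hCpost)
  have hgC : gchain δ C X M ⊓ C = C := inf_eq_right.2 (hM ▸ hCpre)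
  have growSat : Relation.ReflTransGen (GEdge δ) X (X ⊔ C) := by
    have := grow N; rwa [hfC] at this
  have shrinkSat : Relation.ReflTransGen (GEdge δ) (X ⊔ C) X := by
    have := shrink M; rwa [hgC] at this
  by_cases hCX : C ≤ X
  · -- degenerate case: a self-loop edge at X
    obtain ⟨i, q, hq⟩ := tuple_nontrivial C hne
    have hq' : q ∈ postC δ C (X ⊔ postPlus δ C X) i :=
      postPlus_le_postC δ C X i (hCpost i hq)
    have hqX : q ∈ X i := hCX i hq
    rcases hq' with ⟨a, w, _, hsend⟩ | ⟨a, l, s₁, s₂, _, _, hsend, w, _, hrecv⟩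
    · have hedge := edge_send_add δ X i a w q (hCX i hsend.1) hsend.2.2
      rw [insTuple_eq_self X i q hqX] at hedge
      exact Relation.TransGen.single hedge
    · have hedge := edge_recv_add δ X i l a s₁ s₂ w q (hCX l hsend.1) (hCX l hsend.2.1)
        hsend.2.2 (hCX i hrecv.1) hrecv.2.2
      rw [insTuple_eq_self X i q hqX] at hedge
      exact Relation.TransGen.single hedge
  · have hne' : X ≠ X ⊔ C := fun h => hCX (by
      intro i x hx
      have : (X ⊔ C) i = X i := by rw [← h]
      exact this ▸ Or.inr hx)
    rcases (Relation.ReflTransGen.cases_head growSat) with heq | ⟨b, hXb, hbSat⟩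
    · exact absurd heq hne'
    · exact Relation.TransGen.head' hXb (Relation.ReflTransGen.trans hbSat shrinkSat)




lemma transGen_to_seq {α : Type*} {r : α → α → Prop} {x y : α} (h : Relation.TransGen r x y) :
    ∃ (n : ℕ) (V : ℕ → α), 0 < n ∧ V 0 = x ∧ V n = y ∧ ∀ t, t < n → r (V t) (V (t + 1)) := by
  induction h with
  | @single b h =>
    refine ⟨1, fun t => if t = 0 then x else b, one_pos, by simp, by simp, ?_⟩
    intro t ht
    have : t = 0 := by omega
    subst this
    simpa using h
  | @tail b c h₁ h₂ ih =>
    obtain ⟨n, V, hn, hV0, hVn, hstep⟩ := ih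
    refine ⟨n + 1, fun t => if t ≤ n then V t else c, by omega, by simp [hV0], by simp, ?_⟩
    intro t ht
    by_cases htn : t < n
    · simpa [show t ≤ n by omega, show t + 1 ≤ n by omega] using hstep t htn
    · have : t = n := by omega
      subst this
      simpa [hVn] using h₂

/-- The forward direction: a cycle yields a non-trivial fixed point. -/
lemma cycle_to_fixed_point (sv : Fin m → Q)
    (hcyc : Relation.TransGen (GEdge δ) (fun i => ({sv i} : Set Q)) (fun i => {sv i})) :
    ∃ C : Fin m → Set Q, C ≠ (fun _ => (∅ : Set Q)) ∧
      C = postPlus δ C (fun i => {sv i}) ⊓ preStar δ C (fun i => {sv i}) := by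
  classical
  set X : Fin m → Set Q := fun i => {sv i} with hX
  obtain ⟨n, V, hn, hV0, hVn, hstep⟩ := transGen_to_seq hcyc
  choose a jf st st' h1 h2 h3 Gen Kill hGen hKill hVi hUex kf hkpost hkgen using hstep
  set Act : Fin m → Prop :=
    fun i => ∃ t, ∃ ht : t < n, jf t ht = i ∨ (Gen t ht i).Nonempty with hAct
  set C : Fin m → Set Q := fun i => {q | Act i ∧ ∃ t, t ≤ n ∧ q ∈ V t i} with hCdef
  have memC : ∀ i q t, Act i → t ≤ n → q ∈ V t i → q ∈ C i :=
    fun i q t h1 h2 h3 => ⟨h1, t, h2, h3⟩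
  have hActj : ∀ t (ht : t < n), Act (jf t ht) := fun t ht => ⟨t, ht, Or.inl rfl⟩
  have hActGen : ∀ t (ht : t < n) i q, q ∈ Gen t ht i → Act i :=
    fun t ht i q hq => ⟨t, ht, Or.inr ⟨q, hq⟩⟩
  -- Gen is contained in the next configuration
  have hGenSub : ∀ t (ht : t < n) i, Gen t ht i ⊆ V (t + 1) i := by
    intro t ht i q hq
    by_cases hij : i = jf t ht
    · subst hij
      obtain ⟨Us, hUor, hVj⟩ := hUex t ht
      rw [hVj]
      exact Or.inl (Or.inr hq)
    · rw [hVi t ht i hij]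
      exact Or.inr hq
  -- provenance: where does a state at time t+1 come from
  have prov : ∀ t (ht : t < n) i q, q ∈ V (t + 1) i →
      q ∈ V t i ∨ q ∈ Gen t ht i ∨ (i = jf t ht ∧ q = st' t ht) := by
    intro t ht i q hq
    by_cases hij : i = jf t ht
    · subst hij
      obtain ⟨Us, hUor, hVj⟩ := hUex t ht
      rw [hVj] at hq
      rcases hq with (hq | hq) | hq
      · left
        rcases hUor with hU | hU <;> rw [hU] at hq
        · exact hq.1
        · exact hq.1.1
      · exact Or.inr (Or.inl hq)
      · exact Or.inr (Or.inr ⟨rfl, hq⟩)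
    · rw [hVi t ht i hij] at hq
      rcases hq with hq | hq
      · exact Or.inl hq.1
      · exact Or.inr (Or.inl hq)
  -- trichotomy: where does a state at time t go
  have tri : ∀ t (ht : t < n) i q, q ∈ V t i →
      q ∈ V (t + 1) i ∨
      (∃ r', r' ∈ Gen t ht i ∧ r' ∈ V (t + 1) i ∧ (q, Op.recv (a t ht), r') ∈ δ) ∨
      (i = jf t ht ∧ q = st t ht) := by
    intro t ht i q hq
    by_cases hkill : q ∈ Kill t ht i
    · obtain ⟨p, hp, hδr⟩ := hkpost t ht i q hkill
      rw [Set.mem_singleton_iff] at hp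
      subst hp
      exact Or.inr (Or.inl ⟨kf t ht i p hkill, hkgen t ht i p hkill,
        hGenSub t ht i (hkgen t ht i p hkill), hδr⟩)
    · by_cases hij : i = jf t ht
      · subst hij
        obtain ⟨Us, hUor, hVj⟩ := hUex t ht
        rcases hUor with hU | hU
        · left
          rw [hVj, hU]
          exact Or.inl (Or.inl ⟨hq, hkill⟩)
        · by_cases hqs : q = st t ht
          · exact Or.inr (Or.inr ⟨rfl, hqs⟩)
          · left
            rw [hVj, hU]
            exact Or.inl (Or.inl ⟨⟨hq, hqs⟩, hkill⟩)
      · left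
        rw [hVi t ht i hij]
        exact Or.inl ⟨hq, hkill⟩
  -- every active state is in preStar
  have hpre : ∀ k t, t + k = n → ∀ i, Act i → ∀ q, q ∈ V t i →
      q ∈ preStar δ C X i := by
    intro k
    induction k with
    | zero =>
      intro t htk i _ q hq
      have : t = n := by omega
      subst this
      rw [hVn] at hq
      exact X_le_preStar δ C X i hq
    | succ k ih =>
      intro t htk i hActi q hq
      have ht : t < n := by omega
      have ih' : ∀ i, Act i → ∀ q, q ∈ V (t + 1) i → q ∈ preStar δ C X i :=
        fun i hi q hq => ih (t + 1) (by omega) i hi q hq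
      have hsendC : sendIn δ (C (jf t ht)) (a t ht) (st t ht) (st' t ht) :=
        ⟨memC _ _ t (hActj t ht) (le_of_lt ht) (h1 t ht),
         memC _ _ (t + 1) (hActj t ht) (by omega) (h2 t ht), h3 t ht⟩
      have hst'Pre : st' t ht ∈ preStar δ C X (jf t ht) :=
        ih' _ (hActj t ht) _ (h2 t ht)
      have hstPre : st t ht ∈ preStar δ C X (jf t ht) :=
        preC_preStar_le δ C X (jf t ht)
          (Or.inl ⟨a t ht, st' t ht, hst'Pre, hsendC⟩)
      rcases tri t ht i q hq with hq1 | ⟨r', hrGen, hrV, hδr⟩ | ⟨hij, hqst⟩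
      · exact ih' i hActi q hq1
      · apply preC_preStar_le δ C X i
        exact Or.inr ⟨a t ht, jf t ht, st t ht, st' t ht, hstPre, hst'Pre, hsendC, r',
          ih' i hActi r' hrV,
          memC i q t hActi (le_of_lt ht) hq, memC i r' (t + 1) hActi (by omega) hrV, hδr⟩
      · rw [hqst, hij]
        exact hstPre
  have hCpre : C ≤ preStar δ C X := by
    rintro i q ⟨hActi, t, htn, hq⟩
    exact hpre (n - t) t (by omega) i hActi q hq
  -- every state occurring is in X ⊔ postPlus
  set R : Fin m → Set Q := postPlus δ C X with hR
  have hRpre : postC δ C (X ⊔ R) ≤ R := postC_postPlus_le δ C X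
  have claim2 : ∀ t, t ≤ n → ∀ i q, q ∈ V t i → q ∈ X i ∨ q ∈ R i := by
    intro t
    induction t with
    | zero =>
      intro _ i q hq
      rw [hV0] at hq
      exact Or.inl hq
    | succ t ih =>
      intro htn i q hq
      have ht : t < n := by omega
      have ih' : ∀ i q, q ∈ V t i → q ∈ (X ⊔ R) i := fun i q hq => ih (by omega) i q hq
      have hsendC : sendIn δ (C (jf t ht)) (a t ht) (st t ht) (st' t ht) :=
        ⟨memC _ _ t (hActj t ht) (le_of_lt ht) (h1 t ht),
         memC _ _ (t + 1) (hActj t ht) (by omega) (h2 t ht), h3 t ht⟩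
      have hst'R : st' t ht ∈ R (jf t ht) :=
        hRpre (jf t ht) (Or.inl ⟨a t ht, st t ht, ih' _ _ (h1 t ht), hsendC⟩)
      rcases prov t ht i q hq with hq1 | hq1 | ⟨hij, hq1⟩
      · rcases ih' i q hq1 with h | h
        · exact Or.inl h
        · exact Or.inr h
      · obtain ⟨w, hw, hδr⟩ := hGen t ht i hq1
        have hActi : Act i := hActGen t ht i q hq1
        refine Or.inr (hRpre i (Or.inr ⟨a t ht, jf t ht, st t ht, st' t ht,
          ih' _ _ (h1 t ht), Or.inr hst'R, hsendC, w, ih' i w hw,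
          memC i w t hActi (le_of_lt ht) hw,
          memC i q (t + 1) hActi (by omega) (hGenSub t ht i hq1), hδr⟩))
      · rw [hq1, hij]
        exact Or.inr hst'R
  have hst'R : ∀ t (ht : t < n), st' t ht ∈ R (jf t ht) := by
    intro t ht
    have hsendC : sendIn δ (C (jf t ht)) (a t ht) (st t ht) (st' t ht) :=
      ⟨memC _ _ t (hActj t ht) (le_of_lt ht) (h1 t ht),
       memC _ _ (t + 1) (hActj t ht) (by omega) (h2 t ht), h3 t ht⟩
    refine hRpre (jf t ht) (Or.inl ⟨a t ht, st t ht, ?_, hsendC⟩)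
    rcases claim2 t (le_of_lt ht) _ _ (h1 t ht) with h | h
    · exact Or.inl h
    · exact Or.inr h
  -- flow: an active component eventually has a transition into sv i
  have flow : ∀ k t, t + k = n → ∀ i q, q ∈ V t i → q ≠ sv i →
      ∃ t', ∃ h' : t' < n, (jf t' h' = i ∧ st' t' h' = sv i) ∨ sv i ∈ Gen t' h' i := by
    intro k
    induction k with
    | zero =>
      intro t htk i q hq hne
      have : t = n := by omega
      subst this
      rw [hVn] at hq
      exact absurd hq hne
    | succ k ih =>
      intro t htk i q hq hne
      have ht : t < n := by omega
      rcases tri t ht i q hq with hq1 | ⟨r', hrGen, hrV, _⟩ | ⟨hij, _⟩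
      · exact ih (t + 1) (by omega) i q hq1 hne
      · by_cases hr : r' = sv i
        · exact ⟨t, ht, Or.inr (hr ▸ hrGen)⟩
        · exact ih (t + 1) (by omega) i r' hrV hr
      · by_cases hs : st' t ht = sv i
        · exact ⟨t, ht, Or.inl ⟨hij.symm, hs⟩⟩
        · refine ih (t + 1) (by omega) i (st' t ht) ?_ hs
          rw [hij]
          exact h2 t ht
  have hsvR : ∀ i, Act i → sv i ∈ R i := by
    intro i hActi
    have hsvU : sv i ∈ V 0 i := by rw [hV0]; exact rfl
    have htrans : ∃ t', ∃ h' : t' < n,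
        (jf t' h' = i ∧ st' t' h' = sv i) ∨ sv i ∈ Gen t' h' i := by
      obtain ⟨t, ht, hcase⟩ := hActi
      rcases hcase with hji | ⟨g, hg⟩
      · by_cases hs : st' t ht = sv i
        · exact ⟨t, ht, Or.inl ⟨hji, hs⟩⟩
        · refine flow (n - (t + 1)) (t + 1) (by omega) i (st' t ht) ?_ hs
          have h2' := h2 t ht
          rw [hji] at h2'
          exact h2'
      · by_cases hgs : g = sv i
        · exact ⟨t, ht, Or.inr (hgs ▸ hg)⟩
        · exact flow (n - (t + 1)) (t + 1) (by omega) i g (hGenSub t ht i hg) hgs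
    obtain ⟨t, ht, hcase⟩ := htrans
    rcases hcase with ⟨hji, hs⟩ | hgen
    · rw [← hs, ← hji]
      exact hst'R t ht
    · obtain ⟨w, hw, hδr⟩ := hGen t ht i hgen
      have hsendC : sendIn δ (C (jf t ht)) (a t ht) (st t ht) (st' t ht) :=
        ⟨memC _ _ t (hActj t ht) (le_of_lt ht) (h1 t ht),
         memC _ _ (t + 1) (hActj t ht) (by omega) (h2 t ht), h3 t ht⟩
      have hstXR : st t ht ∈ (X ⊔ R) (jf t ht) := by
        rcases claim2 t (le_of_lt ht) _ _ (h1 t ht) with h | h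
        · exact Or.inl h
        · exact Or.inr h
      have hwXR : w ∈ (X ⊔ R) i := by
        rcases claim2 t (le_of_lt ht) i w hw with h | h
        · exact Or.inl h
        · exact Or.inr h
      exact hRpre i (Or.inr ⟨a t ht, jf t ht, st t ht, st' t ht, hstXR,
        Or.inr (hst'R t ht), hsendC, w, hwXR,
        memC i w t hActi (le_of_lt ht) hw,
        memC i (sv i) (t + 1) hActi (by omega) (hGenSub t ht i hgen), hδr⟩)
  have hCpost : C ≤ R := by
    rintro i q ⟨hActi, t, htn, hq⟩
    rcases claim2 t htn i q hq with h | h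
    · rw [Set.mem_singleton_iff] at h
      rw [h]
      exact hsvR i hActi
    · exact h
  refine ⟨C, ?_, le_antisymm (le_inf hCpost hCpre)
    (le_trans inf_le_left (postPlus_le_C δ C X))⟩
  intro hCbot
  have : sv (jf 0 hn) ∈ C (jf 0 hn) :=
    memC _ _ 0 (hActj 0 hn) (Nat.zero_le n) (by rw [hV0]; exact rfl)
  rw [hCbot] at this
  exact this

end Aux

/-- Lemma 6: For pairwise distinct states `s 0, …, s (m-1)`, there is a cycle
`({s 0}, …, {s (m-1)}) →_G⁺ ({s 0}, …, {s (m-1)})` in the graph `G` iff there is a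
non-trivial solution `C ≠ (∅, …, ∅)` to the equation
`C = post⁺_C({s 0}, …, {s (m-1)}) ∩ pre*_C({s 0}, …, {s (m-1)})` (componentwise). -/
theorem graph_cycle_iff_fixed_point {D Q : Type} [Fintype Q] (δ : Set (Q × Op D × Q))
    {m : ℕ} (s : Fin m → Q) (hs : Function.Injective s) :
    Relation.TransGen (GEdge δ) (fun i => ({s i} : Set Q)) (fun i => {s i}) ↔
    ∃ C : Fin m → Set Q, C ≠ (fun _ => (∅ : Set Q)) ∧
      C = postPlus δ C (fun i => {s i}) ⊓ preStar δ C (fun i => {s i}) := by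
  constructor
  · exact fun h => cycle_to_fixed_point δ s h
  · rintro ⟨C, hne, hC⟩
    exact fixed_point_to_cycle δ s C hne hC
end

section
/- Let R ⊆ Q be the set of all client states q such that q ∈ Set(c) for some configuration c reachable from an initial configuration of the broadcast network. There exists an initialized computation c_0 →* c →+ c with Set(c) ∩ F ≠ ∅ if and only if there exists an initialized computation c_0 →* c →+ c with Set(c) = R and R ∩ F ≠ ∅. -/
/-!
Clients that take no part in a step stay idle, so computations of two configurations can be run
side by side on disjoint sets of clients. Juxtaposing one witness for each of the finitely many
reachable states gives a reachable configuration whose states are exactly the reachable ones;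
placing it next to a cycle through a final state (it stays idle along the cycle) yields a cycle
whose configuration contains every reachable state and nothing else.
-/

namespace Fin

theorem range_append {α : Type*} {k m : ℕ} (c : Fin k → α) (d : Fin m → α) :
    Set.range (Fin.append c d) = Set.range c ∪ Set.range d := by
  ext q
  simp only [Set.mem_range, Set.mem_union]
  constructor
  · rintro ⟨j, rfl⟩
    refine Fin.addCases (fun j => ?_) (fun j => ?_) j
    · exact .inl ⟨j, (append_left c d j).symm⟩
    · exact .inr ⟨j, (append_right c d j).symm⟩
  · rintro (⟨j, rfl⟩ | ⟨j, rfl⟩)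
    · exact ⟨castAdd m j, append_left c d j⟩
    · exact ⟨natAdd k j, append_right c d j⟩

theorem append_mem {α : Type*} {k m : ℕ} {S : Set α} {c : Fin k → α} {d : Fin m → α}
    (hc : ∀ i, c i ∈ S) (hd : ∀ j, d j ∈ S) (t : Fin (k + m)) : Fin.append c d t ∈ S :=
  Fin.addCases (by simpa using hc) (by simpa using hd) t

end Fin

section
variable {D Q : Type} {δ : Set (Q × Op D × Q)} {k m : ℕ}

theorem Step.embedding {n : ℕ} (e : Fin k ↪ Fin n) {c c' : Fin k → Q} {C C' : Fin n → Q}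
    (hC : ∀ j, C (e j) = c j) (hC' : ∀ j, C' (e j) = c' j)
    (hidle : ∀ j ∉ Set.range e, C' j = C j) (h : Step δ c c') : Step δ C C' := by
  obtain ⟨a, i, R, hiR, hsend, hrecv, hrest⟩ := h
  refine ⟨a, e i, e '' R, ?_, ?_, ?_, ?_⟩
  · simpa using hiR
  · simpa [hC, hC'] using hsend
  · rintro _ ⟨j, hj, rfl⟩
    simpa [hC, hC'] using hrecv j hj
  · intro j hjR hji
    by_cases hj : j ∈ Set.range e
    · obtain ⟨j, rfl⟩ := hj
      rw [hC, hC']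
      exact hrest j (fun h => hjR ⟨j, h, rfl⟩) (fun h => hji (h ▸ rfl))
    · exact hidle j hj

theorem Step.append_left {c c' : Fin k → Q} (h : Step δ c c') (d : Fin m → Q) :
    Step δ (Fin.append c d) (Fin.append c' d) := by
  refine h.embedding (Fin.castAddEmb m) (Fin.append_left c d) (Fin.append_left c' d) ?_
  intro j hj
  induction j using Fin.addCases with
  | left j => exact absurd ⟨j, rfl⟩ hj
  | right j => simp only [Fin.append_right]

theorem Step.append_right (c : Fin k → Q) {d d' : Fin m → Q} (h : Step δ d d') :
    Step δ (Fin.append c d) (Fin.append c d') := by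
  refine h.embedding (Fin.natAddEmb k) (Fin.append_right c d) (Fin.append_right c d') ?_
  intro j hj
  induction j using Fin.addCases with
  | left j => simp only [Fin.append_left]
  | right j => exact absurd ⟨j, rfl⟩ hj

theorem reflTransGen_step_append {c c' : Fin k → Q} {d d' : Fin m → Q}
    (hc : Relation.ReflTransGen (Step δ) c c') (hd : Relation.ReflTransGen (Step δ) d d') :
    Relation.ReflTransGen (Step δ) (Fin.append c d) (Fin.append c' d') :=
  (hc.lift (Fin.append · d) fun _ _ h => h.append_left d).trans
    (hd.lift (Fin.append c' ·) fun _ _ h => h.append_right c')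

theorem transGen_step_append_left {c c' : Fin k → Q} (hc : Relation.TransGen (Step δ) c c')
    (d : Fin m → Q) : Relation.TransGen (Step δ) (Fin.append c d) (Fin.append c' d) :=
  hc.lift (Fin.append · d) fun _ _ h => h.append_left d

variable (δ) in
def reachableStates (I : Set Q) : Set Q :=
  {q | ∃ (k : ℕ) (c₀ c : Fin k → Q), (∀ t, c₀ t ∈ I) ∧
    Relation.ReflTransGen (Step δ) c₀ c ∧ q ∈ Set.range c}

theorem range_subset_reachableStates {I : Set Q} {c₀ c : Fin k → Q} (hc₀ : ∀ t, c₀ t ∈ I)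
    (hc : Relation.ReflTransGen (Step δ) c₀ c) : Set.range c ⊆ reachableStates δ I :=
  fun _ hq => ⟨k, c₀, c, hc₀, hc, hq⟩

theorem exists_reachable_subset_range {I S : Set Q} (hS : S.Finite)
    (hSR : S ⊆ reachableStates δ I) : ∃ (m : ℕ) (d₀ d : Fin m → Q), (∀ t, d₀ t ∈ I) ∧
      Relation.ReflTransGen (Step δ) d₀ d ∧ S ⊆ Set.range d := by
  induction S, hS using Set.Finite.induction_on with
  | empty => exact ⟨0, Fin.elim0, Fin.elim0, Fin.rec0, .refl, Set.empty_subset _⟩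
  | @insert q S _ _ ih =>
    obtain ⟨m, d₀, d, hd₀, hd, hSd⟩ := ih ((Set.subset_insert q S).trans hSR)
    obtain ⟨n, e₀, e, he₀, he, hqe⟩ := hSR (Set.mem_insert q S)
    refine ⟨m + n, Fin.append d₀ e₀, Fin.append d e, Fin.append_mem hd₀ he₀,
      reflTransGen_step_append hd he, ?_⟩
    rw [Fin.range_append]
    exact Set.insert_subset (Or.inr hqe) (hSd.trans Set.subset_union_left)

variable (δ) in
theorem exists_reachable_range_eq_reachableStates [Finite Q] (I : Set Q) :
    ∃ (m : ℕ) (d₀ d : Fin m → Q), (∀ t, d₀ t ∈ I) ∧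
      Relation.ReflTransGen (Step δ) d₀ d ∧ Set.range d = reachableStates δ I := by
  obtain ⟨m, d₀, d, hd₀, hd, hcover⟩ :=
    exists_reachable_subset_range (Set.toFinite (reachableStates δ I)) le_rfl
  exact ⟨m, d₀, d, hd₀, hd, (range_subset_reachableStates hd₀ hd).antisymm hcover⟩

end

/-- Let `R` be the set of all client states occurring in some configuration reachable from an
initial configuration. There is an initialized computation `c₀ →* c →+ c` with
`Set(c) ∩ F ≠ ∅` iff there is an initialized computation `c₀ →* c →+ c` with `Set(c) = R`
and `R ∩ F ≠ ∅`. -/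
theorem cycle_over_all_reachable_states {D Q : Type} [Fintype Q] (δ : Set (Q × Op D × Q))
    (I F : Set Q) (R : Set Q)
    (hR : R = {q | ∃ (k : ℕ) (c₀ c : Fin k → Q), (∀ t, c₀ t ∈ I) ∧
      Relation.ReflTransGen (Step δ) c₀ c ∧ q ∈ Set.range c}) :
    (∃ (k : ℕ) (c₀ c : Fin k → Q), (∀ t, c₀ t ∈ I) ∧
      Relation.ReflTransGen (Step δ) c₀ c ∧ Relation.TransGen (Step δ) c c ∧
      (Set.range c ∩ F).Nonempty) ↔
    (∃ (k : ℕ) (c₀ c : Fin k → Q), (∀ t, c₀ t ∈ I) ∧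
      Relation.ReflTransGen (Step δ) c₀ c ∧ Relation.TransGen (Step δ) c c ∧
      Set.range c = R ∧ (R ∩ F).Nonempty) := by
  change R = reachableStates δ I at hR
  subst hR
  constructor
  · rintro ⟨k, c₀, c, hc₀, hc, hcycle, q, hqc, hqF⟩
    obtain ⟨m, d₀, d, hd₀, hd, hdR⟩ := exists_reachable_range_eq_reachableStates δ I
    have hcR := range_subset_reachableStates hc₀ hc
    refine ⟨k + m, Fin.append c₀ d₀, Fin.append c d, Fin.append_mem hc₀ hd₀,
      reflTransGen_step_append hc hd, transGen_step_append_left hcycle d, ?_, q, hcR hqc, hqF⟩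
    rw [Fin.range_append, hdR, Set.union_eq_right.2 hcR]
  · rintro ⟨k, c₀, c, hc₀, hc, hcycle, hcR, hRF⟩
    exact ⟨k, c₀, c, hc₀, hc, hcycle, hcR ▸ hRF⟩
end

section
/- There is an infinite fair computation starting from configuration c_0, i.e., an infinite computation π from c_0 with Inf(π) ⊆ Fin(π), if and only if there is a configuration c with c_0 →* c and c ⇒_F c. -/
/-- A good (for `F`) finite computation `c ⇒_F c'`: a nonempty computation from `c` to `c'`
in which every client that participates in some transition also occupies a state of `F`
in some configuration of the computation. -/
def GoodCycle {D Q : Type} (δ : Set (Q × Op D × Q)) (F : Set Q) {k : ℕ}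
    (c c' : Fin k → Q) : Prop :=
  ∃ (ℓ : ℕ) (cfg : ℕ → Fin k → Q) (a : ℕ → D) (snd : ℕ → Fin k) (rcv : ℕ → Set (Fin k)),
    1 ≤ ℓ ∧ cfg 0 = c ∧ cfg ℓ = c' ∧
    (∀ j < ℓ, StepAt δ (a j) (cfg j) (cfg (j + 1)) (snd j) (rcv j)) ∧
    (∀ t : Fin k, (∃ j < ℓ, t = snd j ∨ t ∈ rcv j) → ∃ j ≤ ℓ, cfg j t ∈ F)

lemma reach_of_steps {D Q : Type} (δ : Set (Q × Op D × Q)) {k : ℕ}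
    (cfg : ℕ → Fin k → Q) (h : ∀ j, Step δ (cfg j) (cfg (j+1))) :
    ∀ m, Relation.ReflTransGen (Step δ) (cfg 0) (cfg m) := by
  intro m
  induction m with
  | zero => exact Relation.ReflTransGen.refl
  | succ n ih => exact ih.tail (h n)

lemma path_of_reach {D Q : Type} (δ : Set (Q × Op D × Q)) {k : ℕ}
    {x y : Fin k → Q} (h : Relation.ReflTransGen (Step δ) x y) :
    ∃ (m : ℕ) (p : ℕ → Fin k → Q), p 0 = x ∧ p m = y ∧
      ∀ j < m, Step δ (p j) (p (j+1)) := by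
  induction h with
  | refl => exact ⟨0, fun _ => x, rfl, rfl, fun j hj => absurd hj (Nat.not_lt_zero j)⟩
  | @tail b z hbz hstep ih =>
    obtain ⟨m, p, h0, hm, hs⟩ := ih
    refine ⟨m + 1, fun j => if j ≤ m then p j else z, by simp [h0], by simp, ?_⟩
    intro j hj
    rcases lt_or_eq_of_le (Nat.lt_succ_iff.mp hj) with hlt | heq
    · simpa only [if_pos hlt.le, if_pos (Nat.succ_le_of_lt hlt)] using hs j hlt
    · subst heq
      simpa only [if_pos (le_refl j), if_neg (Nat.not_succ_le_self j), hm] using hstep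

/-- splice a prefix of length `m` with an `ℓ`-periodic tail. -/
def splice {α : Type*} (m ℓ : ℕ) (p q : ℕ → α) : ℕ → α :=
  fun j => if j < m then p j else q ((j - m) % ℓ)

lemma splice_lt {α : Type*} {m ℓ j : ℕ} {p q : ℕ → α} (h : j < m) :
    splice m ℓ p q j = p j := if_pos h

lemma splice_ge {α : Type*} {m ℓ j : ℕ} {p q : ℕ → α} (h : m ≤ j) :
    splice m ℓ p q j = q ((j - m) % ℓ) := if_neg (by omega)

/-- Lemma 7: There is an infinite fair computation `π` from `c₀` (one with `Inf(π) ⊆ Fin(π)`)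
iff there is a configuration `c` with `c₀ →* c` and a good cycle `c ⇒_F c`. -/
theorem fair_splitting {D Q : Type} [Fintype Q] (δ : Set (Q × Op D × Q)) (F : Set Q)
    {k : ℕ} (c₀ : Fin k → Q) :
    (∃ (cfg : ℕ → Fin k → Q) (a : ℕ → D) (snd : ℕ → Fin k) (rcv : ℕ → Set (Fin k)),
      cfg 0 = c₀ ∧
      (∀ j, StepAt δ (a j) (cfg j) (cfg (j + 1)) (snd j) (rcv j)) ∧
      {t : Fin k | ∀ N, ∃ j ≥ N, t = snd j ∨ t ∈ rcv j} ⊆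
        {t : Fin k | ∀ N, ∃ j ≥ N, cfg j t ∈ F}) ↔
    (∃ c : Fin k → Q, Relation.ReflTransGen (Step δ) c₀ c ∧ GoodCycle δ F c c) := by
  classical
  constructor
  · -- forward direction
    rintro ⟨cfg, a, snd, rcv, h0, hstep, hfair⟩
    set T : Set (Fin k) := {t : Fin k | ∀ N, ∃ j ≥ N, t = snd j ∨ t ∈ rcv j} with hT
    -- a bound after which only clients of T participate
    have hNex : ∀ t : Fin k, ∃ Nt : ℕ, t ∉ T → ∀ j ≥ Nt, ¬(t = snd j ∨ t ∈ rcv j) := by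
      intro t
      by_cases ht : t ∈ T
      · exact ⟨0, fun h => absurd ht h⟩
      · have := ht
        rw [hT] at this
        simp only [Set.mem_setOf_eq, not_forall] at this
        push_neg at this
        obtain ⟨Nt, hNt⟩ := this
        exact ⟨Nt, fun _ j hj => by have := hNt j hj; tauto⟩
    choose Nf hNf using hNex
    set N : ℕ := Finset.univ.sup Nf with hNdef
    have hN : ∀ j ≥ N, ∀ t : Fin k, (t = snd j ∨ t ∈ rcv j) → t ∈ T := by
      intro j hj t hpart
      by_contra ht
      exact hNf t ht j (le_trans (Finset.le_sup (Finset.mem_univ t)) hj) hpart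
    -- checkpoints
    have hck : ∀ nn : ℕ, ∃ M : ℕ, nn < M ∧
        ∀ t ∈ T, ∃ j, nn ≤ j ∧ j ≤ M ∧ cfg j t ∈ F := by
      intro nn
      have hjf : ∀ t : Fin k, ∃ jt : ℕ, t ∈ T → nn ≤ jt ∧ cfg jt t ∈ F := by
        intro t
        by_cases ht : t ∈ T
        · obtain ⟨j, hj1, hj2⟩ := hfair ht (nn + 1)
          exact ⟨j, fun _ => ⟨by omega, hj2⟩⟩
        · exact ⟨0, fun h => absurd h ht⟩
      choose jf hjf using hjf
      refine ⟨max (nn + 1) (Finset.univ.sup jf), by omega, ?_⟩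
      intro t ht
      exact ⟨jf t, (hjf t ht).1,
        le_trans (Finset.le_sup (Finset.mem_univ t)) (le_max_right _ _), (hjf t ht).2⟩
    choose g hg1 hg2 using hck
    set n : ℕ → ℕ := fun m => Nat.rec N (fun _ ih => g ih) m with hn
    have hn0 : n 0 = N := rfl
    have hnsucc : ∀ m, n (m + 1) = g (n m) := fun m => rfl
    have hmono : StrictMono n := strictMono_nat_of_lt_succ (fun m => by
      rw [hnsucc]; exact hg1 (n m))
    -- pigeonhole
    obtain ⟨x, y, hxy, hfeq⟩ :=
      Finite.exists_ne_map_eq_of_infinite (fun m => cfg (n m))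
    have key : ∀ i j : ℕ, i < j → cfg (n i) = cfg (n j) →
        ∃ c : Fin k → Q, Relation.ReflTransGen (Step δ) c₀ c ∧ GoodCycle δ F c c := by
      intro i j hij heq
      have hnij : n i < n j := hmono hij
      refine ⟨cfg (n i), ?_, ?_⟩
      · have := reach_of_steps δ cfg (fun j => ⟨a j, snd j, rcv j, hstep j⟩) (n i)
        rwa [h0] at this
      · refine ⟨n j - n i, fun s => cfg (n i + s), fun s => a (n i + s),
          fun s => snd (n i + s), fun s => rcv (n i + s), by omega, by simp, ?_, ?_, ?_⟩
        · show cfg (n i + (n j - n i)) = cfg (n i)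
          rw [Nat.add_sub_cancel' hnij.le]
          exact heq.symm
        · intro s hs
          exact hstep (n i + s)
        · rintro t ⟨s, hs, hpart⟩
          simp only [] at hpart
          have hNni : N ≤ n i := by
            have := hmono.monotone (Nat.zero_le i)
            rwa [hn0] at this
          have ht : t ∈ T := hN (n i + s) (le_trans hNni (Nat.le_add_right _ _)) t hpart
          obtain ⟨j', hj1, hj2, hj3⟩ := hg2 (n i) t ht
          have hj2' : j' ≤ n j := by
            have h1 : g (n i) = n (i + 1) := (hnsucc i).symm
            have h2 : n (i + 1) ≤ n j := hmono.monotone (show i + 1 ≤ j by omega)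
            omega
          refine ⟨j' - n i, ?_, ?_⟩
          · show j' - n i ≤ n j - n i
            omega
          show cfg (n i + (j' - n i)) t ∈ F
          rw [Nat.add_sub_cancel' hj1]
          exact hj3
    rcases hxy.lt_or_gt with h | h
    · exact key x y h hfeq
    · exact key y x h hfeq.symm
  · -- backward direction
    rintro ⟨c, hreach, ℓ, cfgC, aC, sndC, rcvC, hℓ, h0C, hℓC, hstepC, hgoodC⟩
    obtain ⟨m, p, hp0, hpm, hps⟩ := path_of_reach δ hreach
    have hwrap : ∀ s, s < ℓ → cfgC ((s + 1) % ℓ) = cfgC (s + 1) := by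
      intro s hs
      by_cases h : s + 1 < ℓ
      · rw [Nat.mod_eq_of_lt h]
      · have h' : s + 1 = ℓ := by omega
        rw [h', Nat.mod_self, h0C, hℓC]
    have hps2 : ∀ j : ℕ, ∃ (aj : D) (ij : Fin k) (Rj : Set (Fin k)),
        j < m → StepAt δ aj (p j) (p (j+1)) ij Rj := by
      intro j
      by_cases h : j < m
      · obtain ⟨aj, ij, Rj, hx⟩ := hps j h
        exact ⟨aj, ij, Rj, fun _ => hx⟩
      · exact ⟨aC 0, sndC 0, rcvC 0, fun h' => absurd h' h⟩
    choose aP sndP rcvP hP using hps2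
    refine ⟨splice m ℓ p cfgC, splice m ℓ aP aC, splice m ℓ sndP sndC,
      splice m ℓ rcvP rcvC, ?_, ?_, ?_⟩
    · by_cases h : 0 < m
      · rw [splice_lt h, hp0]
      · have hm0 : m = 0 := by omega
        rw [splice_ge (by omega), Nat.zero_sub, Nat.zero_mod, h0C, ← hpm, hm0, hp0]
    · intro j
      by_cases hj : j < m
      · have hcj1 : splice m ℓ p cfgC (j + 1) = p (j + 1) := by
          by_cases h2 : j + 1 < m
          · exact splice_lt h2
          · have hjm : j + 1 = m := by omega
            rw [splice_ge (by omega), hjm, Nat.sub_self, Nat.zero_mod, h0C, hpm]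
        rw [splice_lt hj, hcj1, splice_lt hj, splice_lt hj, splice_lt hj]
        exact hP j hj
      · have hj' : m ≤ j := by omega
        set s := (j - m) % ℓ with hsdef
        have hsℓ : s < ℓ := Nat.mod_lt _ (by omega)
        have hcj1 : splice m ℓ p cfgC (j + 1) = cfgC (s + 1) := by
          rw [splice_ge (by omega)]
          have h1 : j + 1 - m = (j - m) + 1 := by omega
          have h2 : (j - m + 1) % ℓ = (s + 1) % ℓ := (Nat.mod_add_mod (j - m) ℓ 1).symm
          rw [h1, h2, hwrap s hsℓ]
        rw [splice_ge hj', hcj1, splice_ge hj', splice_ge hj', splice_ge hj']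
        exact hstepC s hsℓ
    · intro t ht
      simp only [Set.mem_setOf_eq] at ht ⊢
      obtain ⟨j, hjm, hpart⟩ := ht m
      set s := (j - m) % ℓ with hsdef
      have hsℓ : s < ℓ := Nat.mod_lt _ (by omega)
      rw [splice_ge hjm, splice_ge hjm] at hpart
      obtain ⟨j', hj'ℓ, hF⟩ := hgoodC t ⟨s, hsℓ, hpart⟩
      set s' := j' % ℓ with hs'def
      have hs'ℓ : s' < ℓ := Nat.mod_lt _ (by omega)
      have hcs' : cfgC s' = cfgC j' := by
        rcases lt_or_eq_of_le hj'ℓ with h | h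
        · rw [hs'def, Nat.mod_eq_of_lt h]
        · rw [hs'def, h, Nat.mod_self, h0C, hℓC]
      intro N
      refine ⟨m + s' + ℓ * N, ?_, ?_⟩
      · have : N ≤ ℓ * N := Nat.le_mul_of_pos_left N (by omega)
        omega
      · rw [splice_ge (by omega)]
        have h1 : m + s' + ℓ * N - m = s' + ℓ * N := by omega
        rw [h1, Nat.add_mul_mod_self_left, Nat.mod_eq_of_lt hs'ℓ, hcs']
        exact hF
end

section
/- Let c_0 ∈ I^k be an initial configuration of N and let c̃_0 denote the configuration obtained from c_0 by replacing each state q by its third-phase copy q̃. Then c_0 →* c ⇒_F c holds in N for some configuration c (over Q) if and only if c̃_0 →* c →+ c holds in the instrumented network N_F for some configuration c over Q. -/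
/-- The three phases of the instrumented client: the original states `Q`,
the copy `Q̂` (hat) and the copy `Q̃` (tilde). -/
inductive Ph (Q : Type) where
  | base : Q → Ph Q
  | hat : Q → Ph Q
  | tilde : Q → Ph Q
  deriving DecidableEq

/-- Lift an operation over `D` to one over `D ∪ {n}`, modelled as `Option D`
with `none` playing the role of the fresh symbol `n`. -/
def liftOp {D : Type} : Op D → Op (Option D)
  | Op.send a => Op.send (some a)
  | Op.recv a => Op.recv (some a)

/-- The transition relation `δ̄` of the instrumented client `P_F`. -/
def deltaBar {D Q : Type} (δ : Set (Q × Op D × Q)) (F : Set Q) :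
    Set (Ph Q × Op (Option D) × Ph Q) :=
  {x | (∃ q op q', (q, op, q') ∈ δ ∧
          (x = (Ph.base q, liftOp op, Ph.hat q') ∨
           x = (Ph.hat q, liftOp op, Ph.hat q') ∨
           x = (Ph.tilde q, liftOp op, Ph.tilde q'))) ∨
       (∃ q, q ∈ F ∧ x = (Ph.hat q, Op.send none, Ph.tilde q)) ∨
       (∃ q : Q, x = (Ph.tilde q, Op.send none, Ph.base q))}


namespace InstrAux

open Relation

variable {D Q : Type}

/-- Projection of instrumented states back to `Q`. -/
def proj : Ph Q → Q
  | Ph.base q => q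
  | Ph.hat q => q
  | Ph.tilde q => q

@[simp] lemma proj_base (q : Q) : proj (Ph.base q) = q := rfl
@[simp] lemma proj_hat (q : Q) : proj (Ph.hat q) = q := rfl
@[simp] lemma proj_tilde (q : Q) : proj (Ph.tilde q) = q := rfl

lemma chainRTG {X : Type} (r : X → X → Prop) (g : ℕ → X) (i : ℕ) :
    ∀ n, i ≤ n → (∀ m, i ≤ m → m < n → r (g m) (g (m + 1))) →
      ReflTransGen r (g i) (g n) := by
  intro n hn
  induction n, hn using Nat.le_induction with
  | base => intro _; exact .refl
  | succ n hin ih =>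
      intro h
      exact .tail (ih fun m him hmn => h m him (Nat.lt_succ_of_lt hmn))
        (h n hin (Nat.lt_succ_self n))

lemma rtg_chain {X : Type} {r : X → X → Prop} {x y : X} (h : ReflTransGen r x y) :
    ∃ (n : ℕ) (g : ℕ → X), g 0 = x ∧ g n = y ∧ ∀ m < n, r (g m) (g (m + 1)) := by
  induction h with
  | refl => exact ⟨0, fun _ => x, rfl, rfl, fun m hm => absurd hm (Nat.not_lt_zero m)⟩
  | @tail b c hxb hbc ih =>
      obtain ⟨n, g, h0, hn, hs⟩ := ih
      refine ⟨n + 1, fun m => if m ≤ n then g m else c, by simp [h0], by simp, ?_⟩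
      intro m hm
      rcases lt_or_eq_of_le (Nat.lt_succ_iff.mp hm) with hm' | hm'
      · simpa [Nat.le_of_lt hm', Nat.succ_le_of_lt hm'] using hs m hm'
      · subst hm'; simpa [hn] using hbc

lemma tg_chain {X : Type} {r : X → X → Prop} {x y : X} (h : TransGen r x y) :
    ∃ n, 1 ≤ n ∧ ∃ g : ℕ → X, g 0 = x ∧ g n = y ∧ ∀ m < n, r (g m) (g (m + 1)) := by
  induction h with
  | @single b hb =>
      refine ⟨1, le_refl 1, fun m => if m = 0 then x else b, by simp, by simp, ?_⟩
      intro m hm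
      interval_cases m
      simpa using hb
  | @tail b c hxb hbc ih =>
      obtain ⟨n, hn1, g, h0, hn, hs⟩ := ih
      refine ⟨n + 1, by omega, fun m => if m ≤ n then g m else c, by simp [h0], by simp, ?_⟩
      intro m hm
      rcases lt_or_eq_of_le (Nat.lt_succ_iff.mp hm) with hm' | hm'
      · simpa [Nat.le_of_lt hm', Nat.succ_le_of_lt hm'] using hs m hm'
      · subst hm'; simpa [hn] using hbc

/-- Flip several coordinates one at a time, each by a solo send step. -/
lemma stepAll {D' Q' : Type} (δ' : Set (Q' × Op D' × Q')) (b : D') {k : ℕ}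
    (d d' : Fin k → Q') (h : ∀ t, d' t = d t ∨ (d t, Op.send b, d' t) ∈ δ') :
    ReflTransGen (Step δ') d d' := by
  classical
  have key : ∀ s : Finset (Fin k),
      ReflTransGen (Step δ') d (fun t => if t ∈ s then d' t else d t) := by
    intro s
    induction s using Finset.induction with
    | empty => simpa using ReflTransGen.refl
    | @insert a s hnot ih =>
        rcases h a with heq | htr
        · have : (fun t => if t ∈ insert a s then d' t else d t)
              = fun t => if t ∈ s then d' t else d t := by
            funext t
            by_cases ht : t = a
            · subst ht; simp [hnot, heq]
            · simp [Finset.mem_insert, ht]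
          rw [this]; exact ih
        · refine ih.tail ⟨b, a, (∅ : Set (Fin k)), ?_, ?_, ?_, ?_⟩
          · simp
          · simpa [hnot] using htr
          · intro j hj; exact absurd hj (Set.notMem_empty j)
          · intro j _ hj
            simp [Finset.mem_insert, hj]
  have := key Finset.univ
  simpa using this

section dB

variable {δ : Set (Q × Op D × Q)} {F : Set Q}

lemma liftOp_ne_send_none (op : Op D) : liftOp op ≠ Op.send none := by
  cases op <;> simp [liftOp]

lemma dB_cases {p p' : Ph Q} {op : Op (Option D)}
    (h : (p, op, p') ∈ deltaBar δ F) :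
    (∃ q q' op₀, (q, op₀, q') ∈ δ ∧ op = liftOp op₀ ∧
       ((p = Ph.base q ∧ p' = Ph.hat q') ∨ (p = Ph.hat q ∧ p' = Ph.hat q') ∨
        (p = Ph.tilde q ∧ p' = Ph.tilde q'))) ∨
    (∃ q, q ∈ F ∧ p = Ph.hat q ∧ op = Op.send none ∧ p' = Ph.tilde q) ∨
    (∃ q, p = Ph.tilde q ∧ op = Op.send none ∧ p' = Ph.base q) := by
  rcases h with ⟨q, op₀, q', hδ, hx | hx | hx⟩ | ⟨q, hF, hx⟩ | ⟨q, hx⟩ <;>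
    simp only [Prod.mk.injEq] at hx
  · exact Or.inl ⟨q, q', op₀, hδ, hx.2.1, Or.inl ⟨hx.1, hx.2.2⟩⟩
  · exact Or.inl ⟨q, q', op₀, hδ, hx.2.1, Or.inr (Or.inl ⟨hx.1, hx.2.2⟩)⟩
  · exact Or.inl ⟨q, q', op₀, hδ, hx.2.1, Or.inr (Or.inr ⟨hx.1, hx.2.2⟩)⟩
  · exact Or.inr (Or.inl ⟨q, hF, hx.1, hx.2.1, hx.2.2⟩)
  · exact Or.inr (Or.inr ⟨q, hx.1, hx.2.1, hx.2.2⟩)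

lemma dB_send_some {p p' : Ph Q} {b : D}
    (h : (p, Op.send (some b), p') ∈ deltaBar δ F) :
    (proj p, Op.send b, proj p') ∈ δ := by
  rcases dB_cases h with ⟨q, q', op₀, hδ, hop, hc⟩ | ⟨q, _, _, hop, _⟩ | ⟨q, _, hop, _⟩
  · cases op₀ with
    | send b' =>
        simp only [liftOp, Op.send.injEq, Option.some.injEq] at hop
        subst hop
        rcases hc with ⟨h1, h2⟩ | ⟨h1, h2⟩ | ⟨h1, h2⟩ <;> subst h1 <;> subst h2 <;> simpa using hδ
    | recv b' => simp [liftOp] at hop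
  · simp at hop
  · simp at hop

lemma dB_recv {p p' : Ph Q} {x : Option D}
    (h : (p, Op.recv x, p') ∈ deltaBar δ F) :
    ∃ b : D, x = some b ∧ (proj p, Op.recv b, proj p') ∈ δ := by
  rcases dB_cases h with ⟨q, q', op₀, hδ, hop, hc⟩ | ⟨q, _, _, hop, _⟩ | ⟨q, _, hop, _⟩
  · cases op₀ with
    | send b' => simp [liftOp] at hop
    | recv b' =>
        simp only [liftOp, Op.recv.injEq] at hop
        subst hop
        refine ⟨b', rfl, ?_⟩
        rcases hc with ⟨h1, h2⟩ | ⟨h1, h2⟩ | ⟨h1, h2⟩ <;> subst h1 <;> subst h2 <;> simpa using hδ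
  · simp at hop
  · simp at hop

lemma dB_send_none {p p' : Ph Q}
    (h : (p, Op.send none, p') ∈ deltaBar δ F) : proj p' = proj p := by
  rcases dB_cases h with ⟨q, q', op₀, _, hop, _⟩ | ⟨q, _, h1, _, h2⟩ | ⟨q, h1, _, h2⟩
  · exact absurd hop.symm (liftOp_ne_send_none op₀)
  · subst h1; subst h2; rfl
  · subst h1; subst h2; rfl

lemma dB_from_base {q : Q} {p' : Ph Q} {op : Op (Option D)}
    (h : (Ph.base q, op, p') ∈ deltaBar δ F) : ∃ q', p' = Ph.hat q' := by
  rcases dB_cases h with ⟨q₀, q', op₀, _, _, hc⟩ | ⟨q₀, _, h1, _, _⟩ | ⟨q₀, h1, _, _⟩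
  · rcases hc with ⟨h1, h2⟩ | ⟨h1, _⟩ | ⟨h1, _⟩
    · exact ⟨q', h2⟩
    · simp at h1
    · simp at h1
  · simp at h1
  · simp at h1

lemma dB_from_hat {q : Q} {p' : Ph Q} {op : Op (Option D)}
    (h : (Ph.hat q, op, p') ∈ deltaBar δ F) :
    (∃ q', p' = Ph.hat q') ∨ (q ∈ F ∧ p' = Ph.tilde q) := by
  rcases dB_cases h with ⟨q₀, q', op₀, _, _, hc⟩ | ⟨q₀, hF, h1, _, h2⟩ | ⟨q₀, h1, _, _⟩
  · rcases hc with ⟨h1, _⟩ | ⟨h1, h2⟩ | ⟨h1, _⟩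
    · simp at h1
    · exact Or.inl ⟨q', h2⟩
    · simp at h1
  · simp only [Ph.hat.injEq] at h1; subst h1; exact Or.inr ⟨hF, h2⟩
  · simp at h1

lemma dB_to_tilde {q' : Q} {p : Ph Q} {op : Op (Option D)}
    (h : (p, op, Ph.tilde q') ∈ deltaBar δ F) :
    (∃ q, p = Ph.tilde q) ∨ (q' ∈ F ∧ p = Ph.hat q') := by
  rcases dB_cases h with ⟨q₀, q₁, op₀, _, _, hc⟩ | ⟨q₀, hF, h1, _, h2⟩ | ⟨q₀, h1, _, h2⟩
  · rcases hc with ⟨_, h2⟩ | ⟨_, h2⟩ | ⟨h1, h2⟩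
    · simp at h2
    · simp at h2
    · exact Or.inl ⟨q₀, h1⟩
  · simp only [Ph.tilde.injEq] at h2; subst h2; exact Or.inr ⟨hF, h1⟩
  · simp at h2

end dB


section Forward

variable {δ : Set (Q × Op D × Q)} {F : Set Q} {k : ℕ}

lemma dB1base {q q' : Q} {op : Op D} (h : (q, op, q') ∈ δ) :
    (Ph.base q, liftOp op, Ph.hat q') ∈ deltaBar δ F :=
  Or.inl ⟨q, op, q', h, Or.inl rfl⟩

lemma dB1hat {q q' : Q} {op : Op D} (h : (q, op, q') ∈ δ) :
    (Ph.hat q, liftOp op, Ph.hat q') ∈ deltaBar δ F :=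
  Or.inl ⟨q, op, q', h, Or.inr (Or.inl rfl)⟩

lemma dB1tilde {q q' : Q} {op : Op D} (h : (q, op, q') ∈ δ) :
    (Ph.tilde q, liftOp op, Ph.tilde q') ∈ deltaBar δ F :=
  Or.inl ⟨q, op, q', h, Or.inr (Or.inr rfl)⟩

lemma dB2 {q : Q} (h : q ∈ F) :
    (Ph.hat q, Op.send none, Ph.tilde q) ∈ deltaBar δ F :=
  Or.inr (Or.inl ⟨q, h, rfl⟩)

lemma dB3 (q : Q) : (Ph.tilde q, Op.send none, Ph.base q) ∈ deltaBar δ F :=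
  Or.inr (Or.inr ⟨q, rfl⟩)

lemma liftStepTilde {c c' : Fin k → Q} (h : Step δ c c') :
    Step (deltaBar δ F) (fun t => Ph.tilde (c t)) (fun t => Ph.tilde (c' t)) := by
  obtain ⟨a, i, R, hiR, hsend, hrecv, hidle⟩ := h
  refine ⟨some a, i, R, hiR, ?_, ?_, ?_⟩
  · exact dB1tilde (op := Op.send a) hsend
  · intro j hj
    exact dB1tilde (op := Op.recv a) (hrecv j hj)
  · intro j hj hji
    show Ph.tilde (c' j) = Ph.tilde (c j)
    rw [hidle j hj hji]

lemma forwardReach {c₀ c : Fin k → Q} (h : ReflTransGen (Step δ) c₀ c) :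
    ReflTransGen (Step (deltaBar δ F))
      (fun t => Ph.tilde (c₀ t)) (fun t => Ph.base (c t)) := by
  have h1 : ReflTransGen (Step (deltaBar δ F))
      (fun t => Ph.tilde (c₀ t)) (fun t => Ph.tilde (c t)) := by
    induction h with
    | refl => exact .refl
    | tail _ hbc ih => exact ih.tail (liftStepTilde hbc)
  refine h1.trans (stepAll _ (none : Option D) _ _ ?_)
  intro t
  exact Or.inr (dB3 (c t))

lemma forwardCycle {c : Fin k → Q} (hgc : GoodCycle δ F c c) :
    TransGen (Step (deltaBar δ F)) (fun t => Ph.base (c t)) (fun t => Ph.base (c t)) := by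
  classical
  obtain ⟨ℓ, cfg, a, snd, rcv, hℓ, h0, hend, hstep, hgood⟩ := hgc
  have hch : ∀ t : Fin k, ∃ j : ℕ,
      (∃ m < ℓ, t = snd m ∨ t ∈ rcv m) → j ≤ ℓ ∧ cfg j t ∈ F := by
    intro t
    by_cases hp : ∃ m < ℓ, t = snd m ∨ t ∈ rcv m
    · obtain ⟨j, hj1, hj2⟩ := hgood t hp
      exact ⟨j, fun _ => ⟨hj1, hj2⟩⟩
    · exact ⟨0, fun h => absurd h hp⟩
  choose τ hτ using hch
  set Part : Fin k → Prop := fun t => ∃ m < ℓ, t = snd m ∨ t ∈ rcv m with hPart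
  set d1 : ℕ → Fin k → Ph Q := fun j t =>
    if ∃ m < j, t = snd m ∨ t ∈ rcv m then Ph.hat (cfg j t) else Ph.base (cfg j t) with hd1
  set e : ℕ → Fin k → Ph Q := fun j t =>
    if Part t then (if τ t < j then Ph.tilde (cfg j t) else Ph.hat (cfg j t))
    else Ph.base (cfg j t) with he
  set e' : ℕ → Fin k → Ph Q := fun j t =>
    if Part t then (if τ t ≤ j then Ph.tilde (cfg j t) else Ph.hat (cfg j t))
    else Ph.base (cfg j t) with he'
  -- round 1 steps
  have hr1 : ∀ m, m < ℓ → Step (deltaBar δ F) (d1 m) (d1 (m + 1)) := by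
    intro j hj
    obtain ⟨hiR, hsend, hrecv, hidle⟩ := hstep j hj
    refine ⟨some (a j), snd j, rcv j, hiR, ?_, ?_, ?_⟩
    · have hP' : ∃ m < j + 1, snd j = snd m ∨ snd j ∈ rcv m :=
        ⟨j, Nat.lt_succ_self j, Or.inl rfl⟩
      by_cases hP : ∃ m < j, snd j = snd m ∨ snd j ∈ rcv m
      · simp only [hd1, if_pos hP, if_pos hP']
        exact dB1hat (op := Op.send (a j)) hsend
      · simp only [hd1, if_neg hP, if_pos hP']
        exact dB1base (op := Op.send (a j)) hsend
    · intro t ht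
      have hP' : ∃ m < j + 1, t = snd m ∨ t ∈ rcv m :=
        ⟨j, Nat.lt_succ_self j, Or.inr ht⟩
      by_cases hP : ∃ m < j, t = snd m ∨ t ∈ rcv m
      · simp only [hd1, if_pos hP, if_pos hP']
        exact dB1hat (op := Op.recv (a j)) (hrecv t ht)
      · simp only [hd1, if_neg hP, if_pos hP']
        exact dB1base (op := Op.recv (a j)) (hrecv t ht)
    · intro t ht hti
      have hiff : (∃ m < j + 1, t = snd m ∨ t ∈ rcv m) ↔
          (∃ m < j, t = snd m ∨ t ∈ rcv m) := by
        constructor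
        · rintro ⟨m, hm, hor⟩
          rcases Nat.lt_succ_iff_lt_or_eq.mp hm with h | h
          · exact ⟨m, h, hor⟩
          · subst h
            rcases hor with h | h
            · exact absurd h hti
            · exact absurd h ht
        · rintro ⟨m, hm, hor⟩
          exact ⟨m, Nat.lt_succ_of_lt hm, hor⟩
      simp only [hd1, hidle t ht hti, hiff]
  -- insertions
  have hins : ∀ j, j ≤ ℓ → ReflTransGen (Step (deltaBar δ F)) (e j) (e' j) := by
    intro j hj
    apply stepAll _ (none : Option D)
    intro t
    by_cases hP : Part t
    · by_cases h1 : τ t < j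
      · left; simp [he, he', hP, h1, le_of_lt h1]
      · by_cases h2 : τ t ≤ j
        · right
          have hFt : cfg (τ t) t ∈ F := (hτ t hP).2
          have hj' : τ t = j := le_antisymm h2 (not_lt.mp h1)
          simp only [he, he', if_pos hP, if_neg h1, if_pos h2]
          exact dB2 (hj' ▸ hFt)
        · left; simp [he, he', hP, h1, h2]
    · left; simp [he, he', hP]
  -- round 2 steps
  have hst2 : ∀ j, j < ℓ → Step (deltaBar δ F) (e' j) (e (j + 1)) := by
    intro j hj
    obtain ⟨hiR, hsend, hrecv, hidle⟩ := hstep j hj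
    refine ⟨some (a j), snd j, rcv j, hiR, ?_, ?_, ?_⟩
    · have hP : Part (snd j) := ⟨j, hj, Or.inl rfl⟩
      by_cases h1 : τ (snd j) ≤ j
      · have h2 : τ (snd j) < j + 1 := Nat.lt_succ_of_le h1
        simp only [he, he', if_pos hP, if_pos h1, if_pos h2]
        exact dB1tilde (op := Op.send (a j)) hsend
      · have h2 : ¬ τ (snd j) < j + 1 := by omega
        simp only [he, he', if_pos hP, if_neg h1, if_neg h2]
        exact dB1hat (op := Op.send (a j)) hsend
    · intro t ht
      have hP : Part t := ⟨j, hj, Or.inr ht⟩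
      by_cases h1 : τ t ≤ j
      · have h2 : τ t < j + 1 := Nat.lt_succ_of_le h1
        simp only [he, he', if_pos hP, if_pos h1, if_pos h2]
        exact dB1tilde (op := Op.recv (a j)) (hrecv t ht)
      · have h2 : ¬ τ t < j + 1 := by omega
        simp only [he, he', if_pos hP, if_neg h1, if_neg h2]
        exact dB1hat (op := Op.recv (a j)) (hrecv t ht)
    · intro t ht hti
      simp only [he, he', hidle t ht hti, Nat.lt_succ_iff]
  -- assemble round 2
  have hrun2 : ∀ j, j ≤ ℓ → ReflTransGen (Step (deltaBar δ F)) (e 0) (e' j) := by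
    intro j
    induction j with
    | zero => intro _; exact hins 0 (Nat.zero_le ℓ)
    | succ j ih =>
        intro hj
        have hj' : j < ℓ := Nat.lt_of_succ_le hj
        exact (((ih (Nat.le_of_lt hj')).tail (hst2 j hj')).trans (hins (j + 1) hj))
  have hfinal : ReflTransGen (Step (deltaBar δ F)) (e' ℓ) (fun t => Ph.base (c t)) := by
    apply stepAll _ (none : Option D)
    intro t
    by_cases hP : Part t
    · right
      have hτℓ : τ t ≤ ℓ := (hτ t hP).1
      simp only [he', if_pos hP, if_pos hτℓ, hend]
      exact dB3 (c t)
    · left; simp [he', hP, hend]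
  have hd10 : d1 0 = fun t => Ph.base (c t) := by
    funext t
    simp [hd1, h0]
  have hd1e : d1 ℓ = e 0 := by
    funext t
    by_cases hP : ∃ m < ℓ, t = snd m ∨ t ∈ rcv m
    · have hP' : Part t := hP
      simp [hd1, he, hP, hP', h0, hend]
    · have hP' : ¬ Part t := hP
      simp [hd1, he, hP, hP', h0, hend]
  have head : Step (deltaBar δ F) (d1 0) (d1 1) := hr1 0 hℓ
  have tail1 : ReflTransGen (Step (deltaBar δ F)) (d1 1) (d1 ℓ) :=
    chainRTG _ d1 1 ℓ hℓ (fun m _ h2 => hr1 m h2)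
  have rest : ReflTransGen (Step (deltaBar δ F)) (d1 1) (fun t => Ph.base (c t)) :=
    tail1.trans (hd1e ▸ ((hrun2 ℓ le_rfl).trans hfinal))
  have : TransGen (Step (deltaBar δ F)) (d1 0) (fun t => Ph.base (c t)) :=
    TransGen.head' head rest
  rwa [hd10] at this

end Forward


section Backward

variable {δ : Set (Q × Op D × Q)} {F : Set Q} {k : ℕ}

lemma projStep {d d' : Fin k → Ph Q} (h : Step (deltaBar δ F) d d') :
    Step δ (fun t => proj (d t)) (fun t => proj (d' t)) ∨
      (fun t => proj (d' t)) = fun t => proj (d t) := by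
  obtain ⟨x, i, R, hiR, hsend, hrecv, hidle⟩ := h
  cases x with
  | some b =>
      left
      refine ⟨b, i, R, hiR, ?_, ?_, ?_⟩
      · exact dB_send_some hsend
      · intro j hj
        obtain ⟨b', hb', hδ⟩ := dB_recv (hrecv j hj)
        obtain rfl : b = b' := Option.some.inj hb'
        exact hδ
      · intro j hj hji
        show proj (d' j) = proj (d j)
        rw [hidle j hj hji]
  | none =>
      right
      funext t
      show proj (d' t) = proj (d t)
      by_cases hti : t = i
      · subst hti
        exact dB_send_none hsend
      · by_cases htR : t ∈ R
        · obtain ⟨b', hb', _⟩ := dB_recv (hrecv t htR)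
          exact absurd hb' (by simp)
        · rw [hidle t htR hti]

lemma projRTG {d d' : Fin k → Ph Q}
    (h : ReflTransGen (Step (deltaBar δ F)) d d') :
    ReflTransGen (Step δ) (fun t => proj (d t)) (fun t => proj (d' t)) := by
  induction h with
  | refl => exact .refl
  | tail _ hbc ih =>
      rcases projStep hbc with h | h
      · exact ih.tail h
      · rwa [h]

lemma stepCases {D' Q' : Type} {δ' : Set (Q' × Op D' × Q')} {x : D'} {cc cc' : Fin k → Q'}
    {i : Fin k} {R : Set (Fin k)} (h : StepAt δ' x cc cc' i R) (t : Fin k) :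
    cc' t = cc t ∨ ∃ op, (cc t, op, cc' t) ∈ δ' := by
  obtain ⟨hiR, hsend, hrecv, hidle⟩ := h
  by_cases hti : t = i
  · subst hti; exact Or.inr ⟨_, hsend⟩
  · by_cases htR : t ∈ R
    · exact Or.inr ⟨_, hrecv t htR⟩
    · exact Or.inl (hidle t htR hti)

lemma destutter (i₀ : Fin k) (d₀ : D) :
    ∀ (n : ℕ) (g : ℕ → Fin k → Ph Q) (A : ℕ → Option D) (S : ℕ → Fin k)
      (R : ℕ → Set (Fin k)),
    (∀ m < n, StepAt (deltaBar δ F) (A m) (g m) (g (m + 1)) (S m) (R m)) →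
    ∃ (ℓ : ℕ) (cfg : ℕ → Fin k → Q) (a : ℕ → D) (snd : ℕ → Fin k) (rcv : ℕ → Set (Fin k)),
      cfg 0 = (fun t => proj (g 0 t)) ∧ cfg ℓ = (fun t => proj (g n t)) ∧
      (∀ j < ℓ, StepAt δ (a j) (cfg j) (cfg (j + 1)) (snd j) (rcv j)) ∧
      (∀ m ≤ n, ∃ j ≤ ℓ, cfg j = fun t => proj (g m t)) ∧
      (∀ j < ℓ, ∃ m < n, snd j = S m ∧ rcv j = R m) ∧
      ((∃ m < n, ∃ d, A m = some d) → 1 ≤ ℓ) := by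
  intro n
  induction n with
  | zero =>
      intro g A S R _
      refine ⟨0, fun _ t => proj (g 0 t), fun _ => d₀, fun _ => i₀, fun _ => ∅,
        rfl, rfl, ?_, ?_, ?_, ?_⟩
      · intro j hj; exact absurd hj (Nat.not_lt_zero j)
      · intro m hm
        obtain rfl : m = 0 := Nat.le_zero.mp hm
        exact ⟨0, le_rfl, rfl⟩
      · intro j hj; exact absurd hj (Nat.not_lt_zero j)
      · rintro ⟨m, hm, _⟩; exact absurd hm (Nat.not_lt_zero m)
  | succ n ih =>
      intro g A S R hs
      obtain ⟨ℓ, cfg, a, snd, rcv, h0, hn, hstep, hcov, horig, hpos⟩ :=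
        ih g A S R (fun m hm => hs m (Nat.lt_succ_of_lt hm))
      have hlast := hs n (Nat.lt_succ_self n)
      cases hA : A n with
      | none =>
          have hpr : (fun t => proj (g (n + 1) t)) = fun t => proj (g n t) := by
            funext t
            obtain ⟨hiR, hsend, hrecv, hidle⟩ := hlast
            rw [hA] at hsend hrecv
            show proj (g (n + 1) t) = proj (g n t)
            by_cases hti : t = S n
            · subst hti
              exact dB_send_none hsend
            · by_cases htR : t ∈ R n
              · obtain ⟨b', hb', _⟩ := dB_recv (hrecv t htR)
                exact absurd hb' (by simp)
              · rw [hidle t htR hti]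
          refine ⟨ℓ, cfg, a, snd, rcv, h0, by rw [hpr]; exact hn, hstep, ?_, ?_, ?_⟩
          · intro m hm
            by_cases hm' : m ≤ n
            · exact hcov m hm'
            · obtain rfl : m = n + 1 := by omega
              exact ⟨ℓ, le_rfl, by rw [hpr]; exact hn⟩
          · intro j hj
            obtain ⟨m, hm, h1, h2⟩ := horig j hj
            exact ⟨m, Nat.lt_succ_of_lt hm, h1, h2⟩
          · rintro ⟨m, hm, d, hd⟩
            apply hpos
            refine ⟨m, ?_, d, hd⟩
            have hmn : m ≠ n := by
              intro h; subst h; rw [hA] at hd; cases hd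
            omega
      | some d =>
          have hstep' : StepAt δ d (fun t => proj (g n t)) (fun t => proj (g (n + 1) t))
              (S n) (R n) := by
            obtain ⟨hiR, hsend, hrecv, hidle⟩ := hlast
            rw [hA] at hsend hrecv
            refine ⟨hiR, dB_send_some hsend, ?_, ?_⟩
            · intro j hj
              obtain ⟨b', hb', hδ⟩ := dB_recv (hrecv j hj)
              obtain rfl : d = b' := Option.some.inj hb'
              exact hδ
            · intro j hj hji
              show proj (g (n + 1) j) = proj (g n j)
              rw [hidle j hj hji]
          refine ⟨ℓ + 1, fun j => if j ≤ ℓ then cfg j else fun t => proj (g (n + 1) t),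
            fun j => if j < ℓ then a j else d, fun j => if j < ℓ then snd j else S n,
            fun j => if j < ℓ then rcv j else R n, ?_, ?_, ?_, ?_, ?_, ?_⟩
          · simpa using h0
          · simp
          · intro j hj
            rcases Nat.lt_succ_iff_lt_or_eq.mp hj with hj' | hj'
            · have e1 : j ≤ ℓ := le_of_lt hj'
              have e2 : j + 1 ≤ ℓ := Nat.succ_le_of_lt hj'
              simp only [if_pos e1, if_pos e2, if_pos hj']
              exact hstep j hj'
            · subst hj'
              simp only [if_pos le_rfl, if_neg (lt_irrefl _), if_neg (Nat.not_succ_le_self _)]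
              rw [hn]
              exact hstep'
          · intro m hm
            by_cases hm' : m ≤ n
            · obtain ⟨j, hj, hcfg⟩ := hcov m hm'
              refine ⟨j, by omega, ?_⟩
              simpa [if_pos hj] using hcfg
            · obtain rfl : m = n + 1 := by omega
              refine ⟨ℓ + 1, le_rfl, by simp⟩
          · intro j hj
            rcases Nat.lt_succ_iff_lt_or_eq.mp hj with hj' | hj'
            · obtain ⟨m, hm, h1, h2⟩ := horig j hj'
              exact ⟨m, Nat.lt_succ_of_lt hm, by simp [if_pos hj', h1],
                by simp [if_pos hj', h2]⟩
            · subst hj'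
              exact ⟨n, Nat.lt_succ_self n, by simp, by simp⟩
          · intro _; omega

lemma backwardCycle {c : Fin k → Q}
    (h : TransGen (Step (deltaBar δ F))
      (fun t => Ph.base (c t)) (fun t => Ph.base (c t))) :
    GoodCycle δ F c c := by
  classical
  obtain ⟨n, hn1, g, hg0, hgn, hgs⟩ := tg_chain h
  obtain ⟨x₀, i₀, R₀, h₀s⟩ := hgs 0 hn1
  have hch : ∀ m : ℕ, ∃ x : Option D × Fin k × Set (Fin k),
      m < n → StepAt (deltaBar δ F) x.1 (g m) (g (m + 1)) x.2.1 x.2.2 := by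
    intro m
    by_cases hm : m < n
    · obtain ⟨x, i, R, hx⟩ := hgs m hm
      exact ⟨(x, i, R), fun _ => hx⟩
    · exact ⟨(none, i₀, ∅), fun h => absurd h hm⟩
  choose dat hdat using hch
  -- the first step sends a proper message
  have hA0 : ∃ d, (dat 0).1 = some d := by
    obtain ⟨hiR, hsend, hrecv, hidle⟩ := hdat 0 hn1
    cases hA : (dat 0).1 with
    | some d => exact ⟨d, rfl⟩
    | none =>
        exfalso
        rw [hA, hg0] at hsend
        rcases dB_cases hsend with ⟨q, q', op₀, _, hop, _⟩ | ⟨q, _, h1, _, _⟩ | ⟨q, h1, _, _⟩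
        · exact liftOp_ne_send_none op₀ hop.symm
        · exact absurd h1 (by simp)
        · exact absurd h1 (by simp)
  obtain ⟨d₀, hd₀⟩ := hA0
  obtain ⟨ℓ, cfg, a, snd, rcv, h0, hend, hstep, hcov, horig, hpos⟩ :=
    destutter i₀ d₀ n g (fun m => (dat m).1) (fun m => (dat m).2.1)
      (fun m => (dat m).2.2) (fun m hm => hdat m hm)
  have hc0 : cfg 0 = c := by
    rw [h0, hg0]
    rfl
  have hcend : cfg ℓ = c := by
    rw [hend, hgn]
    rfl
  have hℓ1 : 1 ≤ ℓ := hpos ⟨0, hn1, d₀, hd₀⟩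
  -- phase analysis
  have hstepCases : ∀ m < n, ∀ t,
      g (m + 1) t = g m t ∨ ∃ op, (g m t, op, g (m + 1) t) ∈ deltaBar δ F :=
    fun m hm t => stepCases (hdat m hm) t
  have gbase0 : ∀ t, g 0 t = Ph.base (c t) := fun t => by rw [hg0]
  have gbasen : ∀ t, g n t = Ph.base (c t) := fun t => by rw [hgn]
  have htilde : ∀ t, ∀ m ≤ n, (∃ q, g m t = Ph.tilde q) →
      ∃ m' ≤ n, ∃ q ∈ F, g m' t = Ph.hat q := by
    intro t m
    induction m with
    | zero =>
        rintro _ ⟨q, hq⟩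
        rw [gbase0 t] at hq
        exact absurd hq (by simp)
    | succ m ih =>
        rintro hm1 ⟨q, hq⟩
        have hmn : m < n := Nat.lt_of_succ_le hm1
        rcases hstepCases m hmn t with heq | ⟨op, hop⟩
        · exact ih (le_of_lt hmn) ⟨q, heq.symm.trans hq⟩
        · rw [hq] at hop
          rcases dB_to_tilde hop with ⟨q₀, hp⟩ | ⟨hF, hp⟩
          · exact ih (le_of_lt hmn) ⟨q₀, hp⟩
          · exact ⟨m, le_of_lt hmn, q, hF, hp⟩
  have hhat : ∀ t, ∀ d m, m ≤ n → n - m = d → (∃ q, g m t = Ph.hat q) →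
      ∃ m' ≤ n, ∃ q ∈ F, g m' t = Ph.hat q := by
    intro t d
    induction d with
    | zero =>
        rintro m hm hd ⟨q, hq⟩
        obtain rfl : m = n := by omega
        rw [gbasen t] at hq
        exact absurd hq (by simp)
    | succ d ih =>
        rintro m hm hd ⟨q, hq⟩
        have hmn : m < n := by omega
        rcases hstepCases m hmn t with heq | ⟨op, hop⟩
        · exact ih (m + 1) (by omega) (by omega) ⟨q, heq.trans hq⟩
        · rw [hq] at hop
          rcases dB_from_hat hop with ⟨q', hp⟩ | ⟨hF, _⟩
          · exact ih (m + 1) (by omega) (by omega) ⟨q', hp⟩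
          · exact ⟨m, le_of_lt hmn, q, hF, hq⟩
  refine ⟨ℓ, cfg, a, snd, rcv, hℓ1, hc0, hcend, hstep, ?_⟩
  rintro t ⟨j, hj, hor⟩
  obtain ⟨m, hmn, hS, hR⟩ := horig j hj
  have htr : ∃ op, (g m t, op, g (m + 1) t) ∈ deltaBar δ F := by
    obtain ⟨hiR, hsend, hrecv, hidle⟩ := hdat m hmn
    rcases hor with h | h
    · have ht : t = (dat m).2.1 := h.trans hS
      rw [ht]
      exact ⟨_, hsend⟩
    · have htR : t ∈ (dat m).2.2 := hR ▸ h
      exact ⟨_, hrecv t htR⟩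
  obtain ⟨op, hop⟩ := htr
  have hF : ∃ m' ≤ n, ∃ q ∈ F, g m' t = Ph.hat q := by
    cases hgm : g m t with
    | base q =>
        rw [hgm] at hop
        obtain ⟨q', hq'⟩ := dB_from_base hop
        exact hhat t (n - (m + 1)) (m + 1) (Nat.succ_le_of_lt hmn) rfl ⟨q', hq'⟩
    | hat q => exact hhat t (n - m) m (le_of_lt hmn) rfl ⟨q, hgm⟩
    | tilde q => exact htilde t m (le_of_lt hmn) ⟨q, hgm⟩
  obtain ⟨m', hm', q, hqF, hq⟩ := hF
  obtain ⟨j', hj', hcfg⟩ := hcov m' hm'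
  refine ⟨j', hj', ?_⟩
  rw [hcfg]
  show proj (g m' t) ∈ F
  rw [hq]
  exact hqF

end Backward

end InstrAux

/-- Lemma 8: For an initial configuration `c₀` of `N` (with tilde-copy `c̃₀`), we have
`c₀ →* c ⇒_F c` in `N` for some configuration `c` over `Q` iff `c̃₀ →* c →+ c` in the
instrumented network `N_F` for some configuration `c` over `Q`. -/
theorem instrumentation_sound_complete {D Q : Type} (δ : Set (Q × Op D × Q)) (I F : Set Q)
    {k : ℕ} (c₀ : Fin k → Q) (h₀ : ∀ t, c₀ t ∈ I) :
    (∃ c : Fin k → Q, Relation.ReflTransGen (Step δ) c₀ c ∧ GoodCycle δ F c c) ↔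
    (∃ c : Fin k → Q,
      Relation.ReflTransGen (Step (deltaBar δ F))
        (fun t => Ph.tilde (c₀ t)) (fun t => Ph.base (c t)) ∧
      Relation.TransGen (Step (deltaBar δ F))
        (fun t => Ph.base (c t)) (fun t => Ph.base (c t))) := by
  constructor
  · rintro ⟨c, h1, h2⟩
    exact ⟨c, InstrAux.forwardReach h1, InstrAux.forwardCycle h2⟩
  · rintro ⟨c, h1, h2⟩
    refine ⟨c, ?_, InstrAux.backwardCycle h2⟩
    have := InstrAux.projRTG h1
    simpa [InstrAux.proj] using this
end

section
/- Let c be a configuration of the instrumented network N_F all of whose states lie in the original state set Q (the first phase). If c →+ c in N_F, then c ⇒_F c in N: every client participating in the N_F-cycle moves from Q into the copy Q̂, can return to Q only by passing through Q̃, and entering Q̃ requires visiting (the hat-copy of) a final state, so the corresponding computation in N is good for F. -/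
/-- Projection from instrumented states back to original states. -/
def proj {Q : Type} : Ph Q → Q
  | Ph.base q => q
  | Ph.hat q => q
  | Ph.tilde q => q

section Helpers

variable {D Q : Type} {δ : Set (Q × Op D × Q)} {F : Set Q}

lemma mem_lift_send {x y : Ph Q} {a : D}
    (h : (x, Op.send (some a), y) ∈ deltaBar δ F) :
    (proj x, Op.send a, proj y) ∈ δ ∧ ∃ q, y = Ph.hat q ∨ y = Ph.tilde q := by
  rcases h with ⟨q, op, q', hδ, h | h | h⟩ | ⟨q, _, h⟩ | ⟨q, h⟩ <;>
    first
      | (cases op <;> simp_all [liftOp, Prod.ext_iff, proj])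
      | simp_all [liftOp, Prod.ext_iff, proj]

lemma mem_lift_recv {x y : Ph Q} {a : D}
    (h : (x, Op.recv (some a), y) ∈ deltaBar δ F) :
    (proj x, Op.recv a, proj y) ∈ δ ∧ ∃ q, y = Ph.hat q ∨ y = Ph.tilde q := by
  rcases h with ⟨q, op, q', hδ, h | h | h⟩ | ⟨q, _, h⟩ | ⟨q, h⟩ <;>
    first
      | (cases op <;> simp_all [liftOp, Prod.ext_iff, proj])
      | simp_all [liftOp, Prod.ext_iff, proj]

lemma not_recv_none {x y : Ph Q} :
    (x, Op.recv (none : Option D), y) ∉ deltaBar δ F := by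
  rintro (⟨q, op, q', hδ, h | h | h⟩ | ⟨q, _, h⟩ | ⟨q, h⟩) <;>
    first
      | (cases op <;> simp_all [liftOp, Prod.ext_iff])
      | simp_all [liftOp, Prod.ext_iff]

lemma mem_send_none {x y : Ph Q}
    (h : (x, Op.send (none : Option D), y) ∈ deltaBar δ F) :
    proj y = proj x ∧ ∃ q, x = Ph.hat q ∨ x = Ph.tilde q := by
  rcases h with ⟨q, op, q', hδ, h | h | h⟩ | ⟨q, _, h⟩ | ⟨q, h⟩ <;>
    first
      | (cases op <;> simp_all [liftOp, Prod.ext_iff, proj])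
      | simp_all [liftOp, Prod.ext_iff, proj]

lemma mem_hat {q : Q} {op : Op (Option D)} {y : Ph Q}
    (h : (Ph.hat q, op, y) ∈ deltaBar δ F) :
    (∃ q', y = Ph.hat q') ∨ (q ∈ F ∧ y = Ph.tilde q) := by
  rcases h with ⟨q₀, op₀, q', hδ, h | h | h⟩ | ⟨q₀, hq₀, h⟩ | ⟨q₀, h⟩ <;>
    simp_all [Prod.ext_iff]

lemma mem_to_tilde {x : Ph Q} {op : Op (Option D)} {q : Q}
    (h : (x, op, Ph.tilde q) ∈ deltaBar δ F) :
    (∃ q₀, x = Ph.tilde q₀) ∨ (x = Ph.hat q ∧ q ∈ F) := by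
  rcases h with ⟨q₀, op₀, q', hδ, h | h | h⟩ | ⟨q₀, hq₀, h⟩ | ⟨q₀, h⟩ <;>
    simp_all [Prod.ext_iff]

variable {k : ℕ}

lemma stepNone {d d' : Fin k → Ph Q} {i : Fin k} {R : Set (Fin k)}
    (h : StepAt (deltaBar δ F) none d d' i R) :
    ∀ t, proj (d' t) = proj (d t) := by
  obtain ⟨hiR, hsend, hrecv, hidle⟩ := h
  intro t
  by_cases hti : t = i
  · subst hti; exact (mem_send_none hsend).1
  · by_cases htR : t ∈ R
    · exact absurd (hrecv t htR) not_recv_none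
    · rw [hidle t htR hti]

lemma stepSome {a : D} {d d' : Fin k → Ph Q} {i : Fin k} {R : Set (Fin k)}
    (h : StepAt (deltaBar δ F) (some a) d d' i R) :
    StepAt δ a (fun t => proj (d t)) (fun t => proj (d' t)) i R ∧
      ∀ t : Fin k, (t = i ∨ t ∈ R) → ∃ q, d' t = Ph.hat q ∨ d' t = Ph.tilde q := by
  obtain ⟨hiR, hsend, hrecv, hidle⟩ := h
  refine ⟨⟨hiR, (mem_lift_send hsend).1, fun j hj => (mem_lift_recv (hrecv j hj)).1,
      fun j hjR hji => by show proj (d' j) = proj (d j); rw [hidle j hjR hji]⟩, ?_⟩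
  rintro t (rfl | htR)
  · exact (mem_lift_send hsend).2
  · exact (mem_lift_recv (hrecv t htR)).2

lemma transGen_seq {α : Type*} {r : α → α → Prop} {x y : α} (h : Relation.TransGen r x y) :
    ∃ L, 1 ≤ L ∧ ∃ d : ℕ → α, d 0 = x ∧ d L = y ∧ ∀ j < L, r (d j) (d (j + 1)) := by
  induction h with
  | single h =>
    rename_i b
    refine ⟨1, le_refl _, fun n => if n = 0 then x else b, by simp, by simp, ?_⟩
    intro j hj
    have : j = 0 := by omega
    subst this; simpa using h
  | tail h₁ h₂ ih =>
    rename_i b c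
    obtain ⟨L, hL, d, h0, hE, hs⟩ := ih
    refine ⟨L + 1, by omega, fun n => if n ≤ L then d n else c, by simp [h0], by simp, ?_⟩
    intro j hj
    rcases lt_or_ge j L with hjL | hjL
    · simpa [Nat.le_of_lt hjL, Nat.succ_le_of_lt hjL] using hs j hjL
    · have : j = L := by omega
      subst this
      simpa [hE] using h₂

section MainLemmas

variable {D Q : Type} {δ : Set (Q × Op D × Q)} {F : Set Q} {k : ℕ}

lemma hatLemma (L : ℕ) (d : ℕ → Fin k → Ph Q)
    (hstep : ∀ j < L, Step (deltaBar δ F) (d j) (d (j + 1)))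
    (hend : ∀ t, ∃ q, d L t = Ph.base q) :
    ∀ n m, m ≤ L → L - m ≤ n → ∀ t q, d m t = Ph.hat q →
      ∃ m' ≤ L, ∃ q' ∈ F, d m' t = Ph.tilde q' := by
  intro n
  induction n with
  | zero =>
    intro m hm hn t q hq
    have hmL : m = L := by omega
    subst hmL
    obtain ⟨q₀, hq₀⟩ := hend t
    rw [hq₀] at hq; exact absurd hq (by simp)
  | succ n ih =>
    intro m hm hn t q hq
    rcases eq_or_lt_of_le hm with hmL | hmL
    · subst hmL
      obtain ⟨q₀, hq₀⟩ := hend t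
      rw [hq₀] at hq; exact absurd hq (by simp)
    · obtain ⟨a?, i, R, hiR, hsend, hrecv, hidle⟩ := hstep m hmL
      by_cases hti : t = i
      · subst hti
        rw [hq] at hsend
        rcases mem_hat hsend with ⟨q', hq'⟩ | ⟨hqF, hq'⟩
        · exact ih (m + 1) (by omega) (by omega) t q' hq'
        · exact ⟨m + 1, by omega, q, hqF, hq'⟩
      · by_cases htR : t ∈ R
        · have := hrecv t htR
          rw [hq] at this
          rcases mem_hat this with ⟨q', hq'⟩ | ⟨hqF, hq'⟩
          · exact ih (m + 1) (by omega) (by omega) t q' hq'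
          · exact ⟨m + 1, by omega, q, hqF, hq'⟩
        · have hidle' := hidle t htR hti
          exact ih (m + 1) (by omega) (by omega) t q (by rw [hidle', hq])

lemma tildeLemma (L : ℕ) (d : ℕ → Fin k → Ph Q)
    (hstep : ∀ j < L, Step (deltaBar δ F) (d j) (d (j + 1)))
    (hstart : ∀ t, ∃ q, d 0 t = Ph.base q) :
    ∀ m, m ≤ L → ∀ t q, d m t = Ph.tilde q → ∃ m' ≤ m, ∃ q' ∈ F, d m' t = Ph.tilde q' := by
  intro m
  induction m with
  | zero =>
    intro _ t q hq
    obtain ⟨q₀, hq₀⟩ := hstart t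
    rw [hq₀] at hq; exact absurd hq (by simp)
  | succ m ih =>
    intro hm t q hq
    obtain ⟨a?, i, R, hiR, hsend, hrecv, hidle⟩ := hstep m (by omega)
    by_cases hti : t = i
    · subst hti
      rw [hq] at hsend
      rcases mem_to_tilde hsend with ⟨q₀, hq₀⟩ | ⟨hhat, hqF⟩
      · obtain ⟨m', hm', hgood⟩ := ih (by omega) t q₀ hq₀
        exact ⟨m', by omega, hgood⟩
      · exact ⟨m + 1, le_refl _, q, hqF, hq⟩
    · by_cases htR : t ∈ R
      · have := hrecv t htR
        rw [hq] at this
        rcases mem_to_tilde this with ⟨q₀, hq₀⟩ | ⟨hhat, hqF⟩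
        · obtain ⟨m', hm', hgood⟩ := ih (by omega) t q₀ hq₀
          exact ⟨m', by omega, hgood⟩
        · exact ⟨m + 1, le_refl _, q, hqF, hq⟩
      · have hidle' := hidle t htR hti
        obtain ⟨m', hm', hgood⟩ := ih (by omega) t q (by rw [← hidle', hq])
        exact ⟨m', by omega, hgood⟩

lemma key (d₀ : D) (i₀ : Fin k) :
    ∀ (L : ℕ) (d : ℕ → Fin k → Ph Q),
    (∀ j < L, Step (deltaBar δ F) (d j) (d (j + 1))) →
    ∃ ℓ, ℓ ≤ L ∧ ∃ (cfg : ℕ → Fin k → Q) (a : ℕ → D) (snd : ℕ → Fin k)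
        (rcv : ℕ → Set (Fin k)),
      cfg 0 = (fun t => proj (d 0 t)) ∧ cfg ℓ = (fun t => proj (d L t)) ∧
      (∀ j < ℓ, StepAt δ (a j) (cfg j) (cfg (j + 1)) (snd j) (rcv j)) ∧
      (∀ m ≤ L, ∃ j ≤ ℓ, cfg j = fun t => proj (d m t)) ∧
      (∀ j < ℓ, ∃ m < L, ∀ t : Fin k, (t = snd j ∨ t ∈ rcv j) →
          ∃ q, d (m + 1) t = Ph.hat q ∨ d (m + 1) t = Ph.tilde q) ∧
      (ℓ = 0 → ∀ m < L, ∃ i R, StepAt (deltaBar δ F) none (d m) (d (m + 1)) i R) := by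
  intro L
  induction L with
  | zero =>
    intro d _
    refine ⟨0, le_refl _, (fun _ t => proj (d 0 t)), (fun _ => d₀), (fun _ => i₀),
      (fun _ => ∅), rfl, rfl, by omega, ?_, by omega, by omega⟩
    intro m hm
    have : m = 0 := by omega
    subst this
    exact ⟨0, le_refl _, rfl⟩
  | succ L ih =>
    intro d hstep
    obtain ⟨a0, i0, R0, hS0⟩ := hstep 0 (Nat.succ_pos L)
    have hrest : ∀ j < L, Step (deltaBar δ F) (d (j + 1)) (d (j + 1 + 1)) :=
      fun j hj => hstep (j + 1) (by omega)
    obtain ⟨ℓ, hℓL, cfg, a, snd, rcv, hc0, hcℓ, hsteps, hsurj, hpart, hnone⟩ :=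
      ih (fun n => d (n + 1)) hrest
    cases a0 with
    | none =>
      have hpe : (fun t => proj (d 1 t)) = fun t => proj (d 0 t) := funext (stepNone hS0)
      refine ⟨ℓ, by omega, cfg, a, snd, rcv, by rw [hc0]; exact hpe, hcℓ, hsteps, ?_, ?_, ?_⟩
      · intro m hm
        cases m with
        | zero =>
          obtain ⟨j, hj, hcj⟩ := hsurj 0 (by omega)
          exact ⟨j, hj, by rw [hcj]; exact hpe⟩
        | succ m => exact hsurj m (by omega)
      · intro j hj
        obtain ⟨m, hm, hp⟩ := hpart j hj
        exact ⟨m + 1, by omega, hp⟩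
      · intro h0 m hm
        cases m with
        | zero => exact ⟨i0, R0, hS0⟩
        | succ m => exact hnone h0 m (by omega)
    | some a0' =>
      obtain ⟨hS0', hHT⟩ := stepSome hS0
      refine ⟨ℓ + 1, by omega,
        (fun j => match j with | 0 => fun t => proj (d 0 t) | j + 1 => cfg j),
        (fun j => match j with | 0 => a0' | j + 1 => a j),
        (fun j => match j with | 0 => i0 | j + 1 => snd j),
        (fun j => match j with | 0 => R0 | j + 1 => rcv j),
        rfl, hcℓ, ?_, ?_, ?_, by omega⟩
      · intro j hj
        cases j with
        | zero =>
          show StepAt δ a0' (fun t => proj (d 0 t)) (cfg 0) i0 R0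
          rw [hc0]; exact hS0'
        | succ j => exact hsteps j (by omega)
      · intro m hm
        cases m with
        | zero => exact ⟨0, by omega, rfl⟩
        | succ m =>
          obtain ⟨j, hj, hcj⟩ := hsurj m (by omega)
          exact ⟨j + 1, by omega, hcj⟩
      · intro j hj
        cases j with
        | zero => exact ⟨0, by omega, hHT⟩
        | succ j =>
          obtain ⟨m, hm, hp⟩ := hpart j (by omega)
          exact ⟨m + 1, by omega, hp⟩

end MainLemmas

/-- If `c` is a configuration of the instrumented network `N_F` all of whose states lie in the
original state set `Q` (first phase) and `c →+ c` in `N_F`, then `c ⇒_F c` in `N`: every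
client participating in the cycle must pass from `Q` through `Q̂` and, via a final state,
through `Q̃` back to `Q`, so the corresponding computation in `N` is good for `F`. -/
theorem instrumented_cycle_is_good {D Q : Type} (δ : Set (Q × Op D × Q)) (F : Set Q)
    {k : ℕ} (c : Fin k → Q)
    (h : Relation.TransGen (Step (deltaBar δ F))
      (fun t => Ph.base (c t)) (fun t => Ph.base (c t))) :
    GoodCycle δ F c c := by
  obtain ⟨L, hL1, d, hd0, hdL, hstep⟩ := transGen_seq h
  have hbase0 : ∀ t, d 0 t = Ph.base (c t) := fun t => by rw [hd0]
  have hbaseL : ∀ t, d L t = Ph.base (c t) := fun t => by rw [hdL]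
  obtain ⟨a?, i, R, hiR, hsend, hrecv, hidle⟩ := hstep 0 hL1
  cases a? with
  | none =>
    rcases (mem_send_none hsend).2 with ⟨q, hq | hq⟩ <;> rw [hbase0 i] at hq <;>
      exact absurd hq (by simp)
  | some a0 =>
    obtain ⟨ℓ, hℓL, cfg, a, snd, rcv, hc0, hcℓ, hsteps, hsurj, hpart, hnone⟩ :=
      key a0 i L d hstep
    have hℓpos : 1 ≤ ℓ := by
      by_contra hcon
      obtain ⟨i', R', _, hsend', _, _⟩ := hnone (by omega) 0 hL1
      rcases (mem_send_none hsend').2 with ⟨q, hq | hq⟩ <;> rw [hbase0 i'] at hq <;>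
        exact absurd hq (by simp)
    refine ⟨ℓ, cfg, a, snd, rcv, hℓpos, ?_, ?_, hsteps, ?_⟩
    · rw [hc0]; funext t; rw [hbase0 t]; rfl
    · rw [hcℓ]; funext t; rw [hbaseL t]; rfl
    · rintro t ⟨j, hj, hpj⟩
      obtain ⟨m, hm, hp⟩ := hpart j hj
      obtain ⟨q, hq | hq⟩ := hp t hpj
      · obtain ⟨m', hm', q', hqF, htl⟩ :=
          hatLemma L d hstep (fun t => ⟨c t, hbaseL t⟩) L (m + 1) (by omega) (by omega) t q hq
        obtain ⟨j', hj', hcj'⟩ := hsurj m' hm'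
        refine ⟨j', hj', ?_⟩
        rw [hcj']
        show proj (d m' t) ∈ F
        rw [htl]; exact hqF
      · obtain ⟨m', hm', q', hqF, htl⟩ :=
          tildeLemma L d hstep (fun t => ⟨c t, hbase0 t⟩) (m + 1) (by omega) t q hq
        obtain ⟨j', hj', hcj'⟩ := hsurj m' (by omega)
        refine ⟨j', hj', ?_⟩
        rw [hcj']
        show proj (d m' t) ∈ F
        rw [htl]; exact hqF
end Helpers
end
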